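/- arXiv:1104.0068 — 3 statements merged into one kernel-verified Lean document; each statement's English description precedes it below -/
import Mathlib

section
/- Let P be the unital associative ℂ-algebra generated by e_1,…,e_d, f_1,…,f_d, K subject to the relations K² = 1, e_i e_j = −e_j e_i, f_i f_j = −f_j f_i, e_i f_j = −f_j e_i (for all i,j, so in particular e_i² = f_i² = 0), K e_i = −e_i K, K f_i = −f_i K. Then the set Ω = { (∏_{i=1}^d e_i^{m_i} f_i^{n_i}) K^ℓ | m_i, n_i, ℓ ∈ {0,1} } is a ℂ-basis of P; in particular dim P = 2^{2d+1}. -/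
/-- Generators of the algebra `P`: `e i`, `f i` (`1 ≤ i ≤ d`) and `K`. -/
inductive SFGen (d : ℕ) : Type
  | e : Fin d → SFGen d
  | f : Fin d → SFGen d
  | K : SFGen d

/-- The defining relations of `P`: `K² = 1`, the `e i`, `f j` pairwise anticommute,
and `K` anticommutes with every `e i` and `f i`. -/
inductive SFRel (d : ℕ) : FreeAlgebra ℂ (SFGen d) → FreeAlgebra ℂ (SFGen d) → Prop
  | Ksq : SFRel d (FreeAlgebra.ι ℂ (SFGen.K (d := d)) * FreeAlgebra.ι ℂ SFGen.K) 1
  | ee (i j : Fin d) : SFRel d (FreeAlgebra.ι ℂ (SFGen.e i) * FreeAlgebra.ι ℂ (SFGen.e j))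
      (-(FreeAlgebra.ι ℂ (SFGen.e j) * FreeAlgebra.ι ℂ (SFGen.e i)))
  | ff (i j : Fin d) : SFRel d (FreeAlgebra.ι ℂ (SFGen.f i) * FreeAlgebra.ι ℂ (SFGen.f j))
      (-(FreeAlgebra.ι ℂ (SFGen.f j) * FreeAlgebra.ι ℂ (SFGen.f i)))
  | ef (i j : Fin d) : SFRel d (FreeAlgebra.ι ℂ (SFGen.e i) * FreeAlgebra.ι ℂ (SFGen.f j))
      (-(FreeAlgebra.ι ℂ (SFGen.f j) * FreeAlgebra.ι ℂ (SFGen.e i)))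
  | Ke (i : Fin d) : SFRel d (FreeAlgebra.ι ℂ (SFGen.K (d := d)) * FreeAlgebra.ι ℂ (SFGen.e i))
      (-(FreeAlgebra.ι ℂ (SFGen.e i) * FreeAlgebra.ι ℂ SFGen.K))
  | Kf (i : Fin d) : SFRel d (FreeAlgebra.ι ℂ (SFGen.K (d := d)) * FreeAlgebra.ι ℂ (SFGen.f i))
      (-(FreeAlgebra.ι ℂ (SFGen.f i) * FreeAlgebra.ι ℂ SFGen.K))

/-- The algebra `P` generated by `e i`, `f i` (`1 ≤ i ≤ d`) and `K` with the above
relations. -/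
def SF (d : ℕ) : Type := RingQuot (SFRel d)

noncomputable instance (d : ℕ) : Ring (SF d) := inferInstanceAs (Ring (RingQuot (SFRel d)))
noncomputable instance (d : ℕ) : Algebra ℂ (SF d) :=
  inferInstanceAs (Algebra ℂ (RingQuot (SFRel d)))

/-- The generator `e i` of `P`. -/
noncomputable def eg (d : ℕ) (i : Fin d) : SF d :=
  RingQuot.mkAlgHom ℂ (SFRel d) (FreeAlgebra.ι ℂ (SFGen.e i))

/-- The generator `f i` of `P`. -/
noncomputable def fg (d : ℕ) (i : Fin d) : SF d :=
  RingQuot.mkAlgHom ℂ (SFRel d) (FreeAlgebra.ι ℂ (SFGen.f i))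

/-- The generator `K` of `P`. -/
noncomputable def Kg (d : ℕ) : SF d :=
  RingQuot.mkAlgHom ℂ (SFRel d) (FreeAlgebra.ι ℂ SFGen.K)

/-- The monomial `(∏ᵢ e iᵐⁱ f iⁿⁱ) Kˡ` of `P`, in the order
`e 1^{m₁} f 1^{n₁} ⋯ e d^{m_d} f d^{n_d} K^ℓ`. -/
noncomputable def SFmono (d : ℕ) (m n : Fin d → Bool) (ℓ : Bool) : SF d :=
  (List.ofFn (fun i : Fin d =>
      (if m i then eg d i else 1) * (if n i then fg d i else 1))).prod *
    (if ℓ then Kg d else 1)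

namespace SFproof

variable {d : ℕ}

/-- Index type for the monomial basis. -/
abbrev Idx (d : ℕ) := (Fin d → Bool) × (Fin d → Bool) × Bool

/-- The representation space. -/
abbrev W (d : ℕ) := Idx d → ℂ

/-- number of `true` bits of `m` strictly below `k`. -/
def cnt (k : ℕ) (m : Fin d → Bool) : ℕ :=
  (Finset.univ.filter fun j : Fin d => (j : ℕ) < k ∧ m j = true).card

/-- the sign `(-1)^(cnt k m)`. -/
noncomputable def sgn (k : ℕ) (m : Fin d → Bool) : ℂ := (-1) ^ cnt k m

lemma cnt_update_of_le {k : ℕ} {j : Fin d} (h : k ≤ (j : ℕ)) (m : Fin d → Bool) (b : Bool) :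
    cnt k (Function.update m j b) = cnt k m := by
  unfold cnt
  congr 1
  apply Finset.filter_congr
  intro x _
  by_cases hx : x = j
  · subst hx; simp; omega
  · rw [Function.update_of_ne hx]

lemma sgn_update_of_le {k : ℕ} {j : Fin d} (h : k ≤ (j : ℕ)) (m : Fin d → Bool) (b : Bool) :
    sgn k (Function.update m j b) = sgn k m := by
  unfold sgn; rw [cnt_update_of_le h]

lemma cnt_succ_update {k : ℕ} {j : Fin d} (h : (j : ℕ) < k) {m : Fin d → Bool}
    (hm : m j = true) : cnt k (Function.update m j false) + 1 = cnt k m := by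
  unfold cnt
  have hset : (Finset.univ.filter fun x : Fin d => (x : ℕ) < k ∧ Function.update m j false x = true)
      = (Finset.univ.filter fun x : Fin d => (x : ℕ) < k ∧ m x = true).erase j := by
    ext x
    simp only [Finset.mem_filter, Finset.mem_erase, Finset.mem_univ, true_and]
    by_cases hx : x = j
    · subst hx; simp [hm]
    · rw [Function.update_of_ne hx]; tauto
  rw [hset, Finset.card_erase_of_mem (by simp [h, hm])]
  have : 0 < (Finset.univ.filter fun x : Fin d => (x : ℕ) < k ∧ m x = true).card :=
    Finset.card_pos.2 ⟨j, by simp [h, hm]⟩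
  omega

lemma sgn_update_of_lt {k : ℕ} {j : Fin d} (h : (j : ℕ) < k) {m : Fin d → Bool}
    (hm : m j = true) : sgn k (Function.update m j false) = -sgn k m := by
  unfold sgn
  rw [← cnt_succ_update h hm, pow_succ]
  ring

lemma sgn_sq (k : ℕ) (m : Fin d → Bool) : sgn k m * sgn k m = 1 := by
  unfold sgn
  rw [← mul_pow]; norm_num

lemma cnt_eq_zero {k : ℕ} {m : Fin d → Bool} (h : ∀ j : Fin d, (j : ℕ) < k → m j = false) :
    cnt k m = 0 := by
  unfold cnt
  rw [Finset.card_eq_zero, Finset.filter_eq_empty_iff]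
  intro x _
  intro ⟨h1, h2⟩
  rw [h x h1] at h2; exact Bool.false_ne_true h2

lemma sgn_eq_one {k : ℕ} {m : Fin d → Bool} (h : ∀ j : Fin d, (j : ℕ) < k → m j = false) :
    sgn k m = 1 := by
  unfold sgn; rw [cnt_eq_zero h, pow_zero]

/-- The operator by which `e i` acts. -/
noncomputable def Eop (i : Fin d) : W d →ₗ[ℂ] W d where
  toFun x := fun p => if p.1 i = true then
      sgn i p.1 * sgn i p.2.1 * x (Function.update p.1 i false, p.2.1, p.2.2) else 0
  map_add' x y := by
    funext p; by_cases h : p.1 i = true <;> simp [h, mul_add]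
  map_smul' c x := by
    funext p; by_cases h : p.1 i = true <;> simp [h] <;> ring

/-- The operator by which `f i` acts. -/
noncomputable def Fop (i : Fin d) : W d →ₗ[ℂ] W d where
  toFun x := fun p => if p.2.1 i = true then
      sgn i p.1 * sgn i p.2.1 * (if p.1 i = true then -1 else 1) *
        x (p.1, Function.update p.2.1 i false, p.2.2) else 0
  map_add' x y := by
    funext p; by_cases h : p.2.1 i = true <;> simp [h, mul_add]
  map_smul' c x := by
    funext p; by_cases h : p.2.1 i = true <;> simp [h] <;> ring

/-- The operator by which `K` acts. -/
noncomputable def Kop : W d →ₗ[ℂ] W d where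
  toFun x := fun p => sgn d p.1 * sgn d p.2.1 * x (p.1, p.2.1, !p.2.2)
  map_add' x y := by funext p; simp [mul_add]
  map_smul' c x := by funext p; simp; ring

lemma Eop_apply (i : Fin d) (x : W d) (p : Idx d) :
    Eop i x p = if p.1 i = true then
      sgn i p.1 * sgn i p.2.1 * x (Function.update p.1 i false, p.2.1, p.2.2) else 0 := rfl

lemma Fop_apply (i : Fin d) (x : W d) (p : Idx d) :
    Fop i x p = if p.2.1 i = true then
      sgn i p.1 * sgn i p.2.1 * (if p.1 i = true then -1 else 1) *
        x (p.1, Function.update p.2.1 i false, p.2.2) else 0 := rfl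

lemma Kop_apply (x : W d) (p : Idx d) :
    Kop x p = sgn d p.1 * sgn d p.2.1 * x (p.1, p.2.1, !p.2.2) := rfl

/-- assignment of generators to operators. -/
noncomputable def gen (d : ℕ) : SFGen d → Module.End ℂ (W d)
  | SFGen.e i => Eop i
  | SFGen.f i => Fop i
  | SFGen.K => Kop

set_option maxHeartbeats 1000000 in
lemma gen_rel : ∀ ⦃x y : FreeAlgebra ℂ (SFGen d)⦄, SFRel d x y →
    FreeAlgebra.lift ℂ (gen d) x = FreeAlgebra.lift ℂ (gen d) y := by
  intro x y h
  cases h with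
  | Ksq =>
      simp only [map_mul, map_one, FreeAlgebra.lift_ι_apply, gen]
      apply LinearMap.ext; intro x
      funext p
      obtain ⟨m, n, ℓ⟩ := p
      show Kop (Kop x) (m, n, ℓ) = x (m, n, ℓ)
      rw [Kop_apply, Kop_apply]
      simp only [Bool.not_not]
      calc sgn d m * sgn d n * (sgn d m * sgn d n * x (m, n, ℓ))
          = (sgn d m * sgn d m) * ((sgn d n * sgn d n) * x (m, n, ℓ)) := by ring
        _ = x (m, n, ℓ) := by rw [sgn_sq, sgn_sq, one_mul, one_mul]
  | ee i j =>
      simp only [map_mul, map_neg, FreeAlgebra.lift_ι_apply, gen]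
      apply LinearMap.ext; intro x
      funext p
      obtain ⟨m, n, ℓ⟩ := p
      show Eop i (Eop j x) (m, n, ℓ) = (-(Eop j ∘ₗ Eop i)) x (m, n, ℓ)
      have hrhs : (-(Eop j ∘ₗ Eop i)) x (m, n, ℓ) = -(Eop j (Eop i x) (m, n, ℓ)) := rfl
      rw [hrhs]
      simp only [Eop_apply]
      by_cases hij : i = j
      · subst hij
        by_cases hmi : m i = true <;> simp [hmi, Function.update_self]
      · have hji : j ≠ i := fun h => hij h.symm
        have hvij : (i : ℕ) ≠ (j : ℕ) := fun h => hij (Fin.ext h)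
        by_cases hmi : m i = true <;> by_cases hmj : m j = true
        · simp only [hmi, hmj, Function.update_of_ne hij, Function.update_of_ne hji, if_true]
          rw [Function.update_comm hij]
          rcases lt_or_gt_of_ne hvij with hlt | hlt
          · rw [sgn_update_of_lt hlt hmi, sgn_update_of_le (le_of_lt hlt) m false]
            ring
          · rw [sgn_update_of_lt hlt hmj, sgn_update_of_le (le_of_lt hlt) m false]
            ring
        all_goals simp [hmi, hmj, Function.update_of_ne hij, Function.update_of_ne hji]
  | ff i j =>
      simp only [map_mul, map_neg, FreeAlgebra.lift_ι_apply, gen]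
      apply LinearMap.ext; intro x
      funext p
      obtain ⟨m, n, ℓ⟩ := p
      show Fop i (Fop j x) (m, n, ℓ) = (-(Fop j ∘ₗ Fop i)) x (m, n, ℓ)
      have hrhs : (-(Fop j ∘ₗ Fop i)) x (m, n, ℓ) = -(Fop j (Fop i x) (m, n, ℓ)) := rfl
      rw [hrhs]
      simp only [Fop_apply]
      by_cases hij : i = j
      · subst hij
        by_cases hni : n i = true <;> simp [hni, Function.update_self]
      · have hji : j ≠ i := fun h => hij h.symm
        have hvij : (i : ℕ) ≠ (j : ℕ) := fun h => hij (Fin.ext h)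
        by_cases hni : n i = true <;> by_cases hnj : n j = true
        · simp only [hni, hnj, Function.update_of_ne hij, Function.update_of_ne hji, if_true]
          rw [Function.update_comm hij]
          rcases lt_or_gt_of_ne hvij with hlt | hlt
          · rw [sgn_update_of_lt hlt hni, sgn_update_of_le (le_of_lt hlt) n false]
            ring
          · rw [sgn_update_of_lt hlt hnj, sgn_update_of_le (le_of_lt hlt) n false]
            ring
        all_goals simp [hni, hnj, Function.update_of_ne hij, Function.update_of_ne hji]
  | ef i j =>
      simp only [map_mul, map_neg, FreeAlgebra.lift_ι_apply, gen]
      apply LinearMap.ext; intro x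
      funext p
      obtain ⟨m, n, ℓ⟩ := p
      show Eop i (Fop j x) (m, n, ℓ) = (-(Fop j ∘ₗ Eop i)) x (m, n, ℓ)
      have hrhs : (-(Fop j ∘ₗ Eop i)) x (m, n, ℓ) = -(Fop j (Eop i x) (m, n, ℓ)) := rfl
      rw [hrhs]
      simp only [Eop_apply, Fop_apply]
      by_cases hij : i = j
      · subst hij
        by_cases hmi : m i = true <;> by_cases hni : n i = true
        · simp only [hmi, hni, Function.update_self, if_true,
            Bool.false_eq_true, if_false]
          rw [sgn_update_of_le (le_refl (i : ℕ)) m false,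
            sgn_update_of_le (le_refl (i : ℕ)) n false]
          ring
        all_goals simp [hmi, hni, Function.update_self]
      · have hji : j ≠ i := fun h => hij h.symm
        have hvij : (i : ℕ) ≠ (j : ℕ) := fun h => hij (Fin.ext h)
        by_cases hmi : m i = true <;> by_cases hnj : n j = true
        · simp only [hmi, hnj, Function.update_of_ne hij, Function.update_of_ne hji, if_true]
          rcases lt_or_gt_of_ne hvij with hlt | hlt
          · rw [sgn_update_of_lt hlt hmi, sgn_update_of_le (le_of_lt hlt) n false]
            ring
          · rw [sgn_update_of_lt hlt hnj, sgn_update_of_le (le_of_lt hlt) m false]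
            ring
        all_goals simp [hmi, hnj, Function.update_of_ne hij, Function.update_of_ne hji]
  | Ke i =>
      simp only [map_mul, map_neg, FreeAlgebra.lift_ι_apply, gen]
      apply LinearMap.ext; intro x
      funext p
      obtain ⟨m, n, ℓ⟩ := p
      show Kop (Eop i x) (m, n, ℓ) = (-(Eop i ∘ₗ Kop)) x (m, n, ℓ)
      have hrhs : (-(Eop i ∘ₗ Kop)) x (m, n, ℓ) = -(Eop i (Kop x) (m, n, ℓ)) := rfl
      rw [hrhs]
      simp only [Eop_apply, Kop_apply]
      by_cases hmi : m i = true
      · simp only [hmi, if_true]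
        rw [sgn_update_of_lt i.isLt hmi]
        ring
      · simp [hmi]
  | Kf i =>
      simp only [map_mul, map_neg, FreeAlgebra.lift_ι_apply, gen]
      apply LinearMap.ext; intro x
      funext p
      obtain ⟨m, n, ℓ⟩ := p
      show Kop (Fop i x) (m, n, ℓ) = (-(Fop i ∘ₗ Kop)) x (m, n, ℓ)
      have hrhs : (-(Fop i ∘ₗ Kop)) x (m, n, ℓ) = -(Fop i (Kop x) (m, n, ℓ)) := rfl
      rw [hrhs]
      simp only [Fop_apply, Kop_apply]
      by_cases hni : n i = true
      · simp only [hni, if_true]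
        rw [sgn_update_of_lt i.isLt hni]
        ring
      · simp [hni]

/-- The representation `φ : SF d →ₐ End (W d)`. -/
noncomputable def phi (d : ℕ) : SF d →ₐ[ℂ] Module.End ℂ (W d) :=
  RingQuot.liftAlgHom ℂ ⟨FreeAlgebra.lift ℂ (gen d), gen_rel⟩

@[simp] lemma phi_eg (i : Fin d) : phi d (eg d i) = Eop i := by
  rw [phi, eg]
  exact (RingQuot.liftAlgHom_mkAlgHom_apply ℂ (FreeAlgebra.lift ℂ (gen d)) gen_rel
    (FreeAlgebra.ι ℂ (SFGen.e i))).trans (by rw [FreeAlgebra.lift_ι_apply]; rfl)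

@[simp] lemma phi_fg (i : Fin d) : phi d (fg d i) = Fop i := by
  rw [phi, fg]
  exact (RingQuot.liftAlgHom_mkAlgHom_apply ℂ (FreeAlgebra.lift ℂ (gen d)) gen_rel
    (FreeAlgebra.ι ℂ (SFGen.f i))).trans (by rw [FreeAlgebra.lift_ι_apply]; rfl)

@[simp] lemma phi_Kg : phi d (Kg d) = Kop := by
  rw [phi, Kg]
  exact (RingQuot.liftAlgHom_mkAlgHom_apply ℂ (FreeAlgebra.lift ℂ (gen d)) gen_rel
    (FreeAlgebra.ι ℂ (SFGen.K (d := d)))).trans (by rw [FreeAlgebra.lift_ι_apply]; rfl)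

/-- Delta function at `p`. -/
noncomputable def dl (p : Idx d) : W d := fun q => if q = p then 1 else 0

lemma dl_apply (p q : Idx d) : dl p q = if q = p then 1 else 0 := rfl

lemma Eop_dl (i : Fin d) (m n : Fin d → Bool) (ℓ : Bool) (hm : m i = false)
    (h1 : cnt i m = 0) (h2 : cnt i n = 0) :
    Eop i (dl (m, n, ℓ)) = dl (Function.update m i true, n, ℓ) := by
  have hup : Function.update (Function.update m i true) i false = m := by
    rw [Function.update_idem]
    rw [Function.update_eq_self_iff]
    exact hm.symm
  funext q
  obtain ⟨q1, q2, q3⟩ := q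
  rw [Eop_apply]
  simp only [dl_apply]
  by_cases hq : ((q1, q2, q3) : Idx d) = (Function.update m i true, n, ℓ)
  · rw [if_pos hq]
    simp only [Prod.mk.injEq] at hq
    obtain ⟨e1, e2, e3⟩ := hq
    subst e1 e2 e3
    rw [if_pos (Function.update_self i true m)]
    rw [hup, sgn_update_of_le (le_refl (i : ℕ)) m true]
    rw [if_pos rfl]
    simp [sgn, h1, h2]
  · rw [if_neg hq]
    by_cases hq1 : q1 i = true
    · rw [if_pos hq1]
      have hz : ¬ (((Function.update q1 i false, q2, q3) : Idx d) = (m, n, ℓ)) := by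
        intro he
        simp only [Prod.mk.injEq] at he
        obtain ⟨e1, e2, e3⟩ := he
        apply hq
        have hq1' : q1 = Function.update m i true := by
          rw [← e1, Function.update_idem]
          symm
          rw [Function.update_eq_self_iff]
          exact hq1.symm
        rw [hq1', e2, e3]
      rw [if_neg hz, mul_zero]
    · rw [if_neg hq1]

lemma Fop_dl (i : Fin d) (m n : Fin d → Bool) (ℓ : Bool) (hn : n i = false) (hm : m i = false)
    (h1 : cnt i m = 0) (h2 : cnt i n = 0) :
    Fop i (dl (m, n, ℓ)) = dl (m, Function.update n i true, ℓ) := by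
  have hup : Function.update (Function.update n i true) i false = n := by
    rw [Function.update_idem]
    rw [Function.update_eq_self_iff]
    exact hn.symm
  funext q
  obtain ⟨q1, q2, q3⟩ := q
  rw [Fop_apply]
  simp only [dl_apply]
  by_cases hq : ((q1, q2, q3) : Idx d) = (m, Function.update n i true, ℓ)
  · rw [if_pos hq]
    simp only [Prod.mk.injEq] at hq
    obtain ⟨e1, e2, e3⟩ := hq
    subst e1 e2 e3
    rw [if_pos (Function.update_self i true n)]
    rw [hup, sgn_update_of_le (le_refl (i : ℕ)) n true]
    rw [if_pos rfl]
    simp [hm, sgn, h1, h2]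
  · rw [if_neg hq]
    by_cases hq2 : q2 i = true
    · rw [if_pos hq2]
      have hz : ¬ (((q1, Function.update q2 i false, q3) : Idx d) = (m, n, ℓ)) := by
        intro he
        simp only [Prod.mk.injEq] at he
        obtain ⟨e1, e2, e3⟩ := he
        apply hq
        have hq2' : q2 = Function.update n i true := by
          rw [← e2, Function.update_idem]
          symm
          rw [Function.update_eq_self_iff]
          exact hq2.symm
        rw [hq2', e1, e3]
      rw [if_neg hz, mul_zero]
    · rw [if_neg hq2]

lemma Kop_dl (m n : Fin d → Bool) (ℓ : Bool) (h1 : cnt d m = 0) (h2 : cnt d n = 0) :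
    Kop (dl (m, n, ℓ)) = dl (m, n, !ℓ) := by
  funext q
  obtain ⟨q1, q2, q3⟩ := q
  rw [Kop_apply]
  simp only [dl_apply]
  by_cases hq : ((q1, q2, q3) : Idx d) = (m, n, !ℓ)
  · rw [if_pos hq]
    simp only [Prod.mk.injEq] at hq
    obtain ⟨e1, e2, e3⟩ := hq
    subst e1 e2 e3
    rw [Bool.not_not, if_pos rfl]
    simp [sgn, h1, h2]
  · rw [if_neg hq]
    have hz : ¬ (((q1, q2, !q3) : Idx d) = (m, n, ℓ)) := by
      intro he
      simp only [Prod.mk.injEq] at he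
      obtain ⟨e1, e2, e3⟩ := he
      apply hq
      rw [e1, e2, ← e3, Bool.not_not]
    rw [if_neg hz, mul_zero]

/-- The factor at position `i` of a monomial. -/
noncomputable def fct (m n : Fin d → Bool) (i : Fin d) : SF d :=
  (if m i then eg d i else 1) * (if n i then fg d i else 1)

lemma SFmono_eq (m n : Fin d → Bool) (ℓ : Bool) :
    SFmono d m n ℓ = (List.ofFn (fct m n)).prod * (if ℓ then Kg d else 1) := rfl

lemma phi_fct_dl (k : ℕ) (hkd : k < d) (m n m₀ n₀ : Fin d → Bool) (ℓ : Bool)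
    (hm₀ : m₀ ⟨k, hkd⟩ = false) (hn₀ : n₀ ⟨k, hkd⟩ = false)
    (hcm : cnt k m₀ = 0) (hcn : cnt k n₀ = 0) :
    phi d (fct m n ⟨k, hkd⟩) (dl (m₀, n₀, ℓ)) =
      dl (Function.update m₀ ⟨k, hkd⟩ (m ⟨k, hkd⟩),
          Function.update n₀ ⟨k, hkd⟩ (n ⟨k, hkd⟩), ℓ) := by
  have hcn' : cnt k (Function.update n₀ ⟨k, hkd⟩ true) = 0 := by
    rw [cnt_update_of_le (le_refl k)]; exact hcn
  have hE := Eop_dl (d := d) ⟨k, hkd⟩ m₀ n₀ ℓ hm₀ hcm hcn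
  have hE' := Eop_dl (d := d) ⟨k, hkd⟩ m₀ (Function.update n₀ ⟨k, hkd⟩ true) ℓ hm₀ hcm hcn'
  have hF := Fop_dl (d := d) ⟨k, hkd⟩ m₀ n₀ ℓ hn₀ hm₀ hcm hcn
  have hupm : Function.update m₀ ⟨k, hkd⟩ false = m₀ := Function.update_eq_self_iff.2 hm₀.symm
  have hupn : Function.update n₀ ⟨k, hkd⟩ false = n₀ := Function.update_eq_self_iff.2 hn₀.symm
  rw [fct, map_mul, Module.End.mul_apply]
  simp only [apply_ite (phi d), map_one, phi_eg, phi_fg]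
  cases hm : m ⟨k, hkd⟩ <;> cases hn : n ⟨k, hkd⟩ <;>
    simp only [Bool.false_eq_true, if_false, if_true, eq_self_iff_true, Module.End.one_apply]
  · rw [hupm, hupn]
  · rw [hF, hupm]
  · rw [hE, hupn]
  · rw [hF, hE']

lemma phi_take_dl (k : ℕ) (hk : k ≤ d) (m n : Fin d → Bool) (ℓ : Bool) :
    ∀ (m₀ n₀ : Fin d → Bool),
    (∀ j : Fin d, (j : ℕ) < k → m₀ j = false) → (∀ j : Fin d, (j : ℕ) < k → n₀ j = false) →
    phi d (((List.ofFn (fct m n)).take k).prod) (dl (m₀, n₀, ℓ)) =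
      dl ((fun j => if (j : ℕ) < k then m j else m₀ j),
          (fun j => if (j : ℕ) < k then n j else n₀ j), ℓ) := by
  induction k with
  | zero =>
      intro m₀ n₀ _ _
      rw [List.take_zero, List.prod_nil, map_one, Module.End.one_apply]
      have h1 : (fun j : Fin d => if (j : ℕ) < 0 then m j else m₀ j) = m₀ := by
        funext j; rw [if_neg (Nat.not_lt_zero _)]
      have h2 : (fun j : Fin d => if (j : ℕ) < 0 then n j else n₀ j) = n₀ := by
        funext j; rw [if_neg (Nat.not_lt_zero _)]
      rw [h1, h2]
  | succ k ih =>
      intro m₀ n₀ hm₀ hn₀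
      have hkd : k < d := lt_of_lt_of_le (Nat.lt_succ_self k) hk
      have hsplit : (List.ofFn (fct m n)).take (k + 1)
          = (List.ofFn (fct m n)).take k ++ [fct m n ⟨k, hkd⟩] := by
        rw [List.take_succ]
        congr 1
        rw [List.getElem?_eq_getElem (by simpa using hkd)]
        simp
      rw [hsplit, List.prod_append, List.prod_cons, List.prod_nil, mul_one, map_mul,
        Module.End.mul_apply]
      rw [phi_fct_dl k hkd m n m₀ n₀ ℓ (hm₀ _ (Nat.lt_succ_self k)) (hn₀ _ (Nat.lt_succ_self k))
        (cnt_eq_zero fun j hj => hm₀ j (Nat.lt_succ_of_lt hj))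
        (cnt_eq_zero fun j hj => hn₀ j (Nat.lt_succ_of_lt hj))]
      rw [ih (le_of_lt hk) _ _
        (fun j hj => by
          rw [Function.update_of_ne (by intro he; rw [he] at hj; exact absurd hj (lt_irrefl k))]
          exact hm₀ j (Nat.lt_succ_of_lt hj))
        (fun j hj => by
          rw [Function.update_of_ne (by intro he; rw [he] at hj; exact absurd hj (lt_irrefl k))]
          exact hn₀ j (Nat.lt_succ_of_lt hj))]
      have h1 : (fun j : Fin d => if (j : ℕ) < k then m j else Function.update m₀ ⟨k, hkd⟩ (m ⟨k, hkd⟩) j)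
          = (fun j : Fin d => if (j : ℕ) < k + 1 then m j else m₀ j) := by
        funext j
        rcases lt_trichotomy (j : ℕ) k with hj | hj | hj
        · rw [if_pos hj, if_pos (Nat.lt_succ_of_lt hj)]
        · have hjk : j = ⟨k, hkd⟩ := Fin.ext hj
          subst hjk
          rw [if_neg (lt_irrefl _), if_pos (Nat.lt_succ_self _), Function.update_self]
        · rw [if_neg (by omega), if_neg (by omega),
            Function.update_of_ne (by intro he; rw [he] at hj; exact absurd hj (lt_irrefl k))]
      have h2 : (fun j : Fin d => if (j : ℕ) < k then n j else Function.update n₀ ⟨k, hkd⟩ (n ⟨k, hkd⟩) j)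
          = (fun j : Fin d => if (j : ℕ) < k + 1 then n j else n₀ j) := by
        funext j
        rcases lt_trichotomy (j : ℕ) k with hj | hj | hj
        · rw [if_pos hj, if_pos (Nat.lt_succ_of_lt hj)]
        · have hjk : j = ⟨k, hkd⟩ := Fin.ext hj
          subst hjk
          rw [if_neg (lt_irrefl _), if_pos (Nat.lt_succ_self _), Function.update_self]
        · rw [if_neg (by omega), if_neg (by omega),
            Function.update_of_ne (by intro he; rw [he] at hj; exact absurd hj (lt_irrefl k))]
      rw [h1, h2]

/-- base point -/
noncomputable def p0 (d : ℕ) : Idx d := ((fun _ => false), (fun _ => false), false)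

/-- evaluation of the representation at the delta of the base point. -/
noncomputable def psi (d : ℕ) : SF d →ₗ[ℂ] W d where
  toFun x := phi d x (dl (p0 d))
  map_add' x y := by
    show phi d (x + y) (dl (p0 d)) = phi d x (dl (p0 d)) + phi d y (dl (p0 d))
    rw [map_add]; rfl
  map_smul' c x := by
    show phi d (c • x) (dl (p0 d)) = c • phi d x (dl (p0 d))
    rw [map_smul]; rfl

lemma psi_mono (m n : Fin d → Bool) (ℓ : Bool) :
    psi d (SFmono d m n ℓ) = dl (m, n, ℓ) := by
  have hz : ∀ j : Fin d, (j : ℕ) < d → (fun _ : Fin d => false) j = false := fun _ _ => rfl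
  have hK : phi d (if ℓ then Kg d else 1) (dl (p0 d))
      = dl ((fun _ => false), (fun _ => false), ℓ) := by
    cases ℓ
    · rw [if_neg (by simp), map_one, Module.End.one_apply]; rfl
    · rw [if_pos rfl, phi_Kg]
      have := Kop_dl (d := d) (fun _ => false) (fun _ => false) false
        (cnt_eq_zero fun j _ => rfl) (cnt_eq_zero fun j _ => rfl)
      exact this
  have htake : (List.ofFn (fct m n)).take d = List.ofFn (fct m n) := by
    apply List.take_of_length_le
    simp
  rw [show psi d (SFmono d m n ℓ) = phi d (SFmono d m n ℓ) (dl (p0 d)) from rfl,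
    SFmono_eq, map_mul, Module.End.mul_apply, hK, ← htake,
    phi_take_dl d (le_refl d) m n ℓ _ _ hz hz]
  congr 1
  have h1 : (fun j : Fin d => if (j : ℕ) < d then m j else false) = m := by
    funext j; rw [if_pos j.isLt]
  have h2 : (fun j : Fin d => if (j : ℕ) < d then n j else false) = n := by
    funext j; rw [if_pos j.isLt]
  rw [h1, h2]

lemma dl_linearIndependent :
    LinearIndependent ℂ (fun p : Idx d => dl p) := by
  have : (fun p : Idx d => dl p) = fun p : Idx d => Pi.single p (1 : ℂ) := by
    funext p q
    rw [dl_apply, Pi.single_apply]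
  have h2 : (fun p : Idx d => Pi.single p (1 : ℂ)) = ⇑(Pi.basisFun ℂ (Idx d)) := by
    funext p
    simp [Pi.basisFun_apply]
  rw [this, h2]
  exact (Pi.basisFun ℂ (Idx d)).linearIndependent

lemma mono_linearIndependent :
    LinearIndependent ℂ (fun p : Idx d => SFmono d p.1 p.2.1 p.2.2) := by
  apply LinearIndependent.of_comp (psi d)
  have : ((psi d) ∘ fun p : Idx d => SFmono d p.1 p.2.1 p.2.2) = fun p : Idx d => dl p := by
    funext p
    obtain ⟨m, n, ℓ⟩ := p
    exact psi_mono m n ℓ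
  rw [this]
  exact dl_linearIndependent

/-! ### Relations in `SF d` -/

lemma rel_ee (i j : Fin d) : eg d i * eg d j = -(eg d j * eg d i) := by
  have := RingQuot.mkAlgHom_rel ℂ (SFRel.ee i j)
  rw [map_mul, map_neg, map_mul] at this
  exact this

lemma rel_ff (i j : Fin d) : fg d i * fg d j = -(fg d j * fg d i) := by
  have := RingQuot.mkAlgHom_rel ℂ (SFRel.ff i j)
  rw [map_mul, map_neg, map_mul] at this
  exact this

lemma rel_ef (i j : Fin d) : eg d i * fg d j = -(fg d j * eg d i) := by
  have := RingQuot.mkAlgHom_rel ℂ (SFRel.ef i j)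
  rw [map_mul, map_neg, map_mul] at this
  exact this

lemma rel_fe (i j : Fin d) : fg d i * eg d j = -(eg d j * fg d i) := by
  rw [rel_ef j i, neg_neg]

lemma rel_Ke (i : Fin d) : Kg d * eg d i = -(eg d i * Kg d) := by
  have := RingQuot.mkAlgHom_rel ℂ (SFRel.Ke i)
  rw [map_mul, map_neg, map_mul] at this
  exact this

lemma rel_Kf (i : Fin d) : Kg d * fg d i = -(fg d i * Kg d) := by
  have := RingQuot.mkAlgHom_rel ℂ (SFRel.Kf i)
  rw [map_mul, map_neg, map_mul] at this
  exact this

lemma rel_Ksq : Kg d * Kg d = 1 := by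
  have := RingQuot.mkAlgHom_rel ℂ (SFRel.Ksq (d := d))
  rw [map_mul, map_one] at this
  exact this

lemma eg_sq (i : Fin d) : eg d i * eg d i = 0 := by
  have h := rel_ee i i
  have h2 : (2 : ℂ) • (eg d i * eg d i) = 0 := by
    rw [two_smul]
    exact add_eq_zero_iff_eq_neg.2 h
  have := smul_eq_zero.1 h2
  rcases this with h3 | h3
  · norm_num at h3
  · exact h3

lemma fg_sq (i : Fin d) : fg d i * fg d i = 0 := by
  have h := rel_ff i i
  have h2 : (2 : ℂ) • (fg d i * fg d i) = 0 := by
    rw [two_smul]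
    exact add_eq_zero_iff_eq_neg.2 h
  have := smul_eq_zero.1 h2
  rcases this with h3 | h3
  · norm_num at h3
  · exact h3

/-- anything that anticommutes with all the `e j` and `f j` commutes with each factor
up to scalar. -/
lemma comm_fct {a : SF d} (he : ∀ j, a * eg d j = -(eg d j * a))
    (hf : ∀ j, a * fg d j = -(fg d j * a)) (m n : Fin d → Bool) (j : Fin d) :
    ∃ c : ℂ, a * fct m n j = c • (fct m n j * a) := by
  rw [fct]
  cases hm : m j <;> cases hn : n j
  · exact ⟨1, by simp⟩
  · refine ⟨-1, ?_⟩
    simp only [Bool.false_eq_true, if_false, if_true, one_mul, mul_one]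
    rw [hf j, neg_one_smul]
  · refine ⟨-1, ?_⟩
    simp only [Bool.false_eq_true, if_false, if_true, one_mul, mul_one]
    rw [he j, neg_one_smul]
  · refine ⟨1, ?_⟩
    simp only [if_true, one_smul]
    rw [← mul_assoc, he j, neg_mul, mul_assoc, hf j, mul_neg, neg_neg, mul_assoc]

lemma comm_list {a : SF d} (L : List (SF d))
    (h : ∀ t ∈ L, ∃ c : ℂ, a * t = c • (t * a)) :
    ∃ c : ℂ, a * L.prod = c • (L.prod * a) := by
  induction L with
  | nil => exact ⟨1, by simp⟩
  | cons t L ih =>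
      obtain ⟨c1, h1⟩ := h t List.mem_cons_self
      obtain ⟨c2, h2⟩ := ih (fun s hs => h s (List.mem_cons_of_mem t hs))
      refine ⟨c1 * c2, ?_⟩
      rw [List.prod_cons, ← mul_assoc, h1, smul_mul_assoc, mul_assoc, h2, mul_smul_comm,
        ← mul_assoc, ← smul_smul, smul_comm]

/-- The tail product of a monomial from position `k` on. -/
noncomputable def Rp (m n : Fin d → Bool) (k : ℕ) : SF d :=
  ((List.ofFn (fct m n)).drop k).prod

lemma Rp_zero (m n : Fin d → Bool) : Rp m n 0 = (List.ofFn (fct m n)).prod := rfl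

lemma Rp_last (m n : Fin d → Bool) : Rp m n d = 1 := by
  rw [Rp, List.drop_of_length_le (by simp), List.prod_nil]

lemma Rp_succ (m n : Fin d → Bool) (k : ℕ) (hk : k < d) :
    Rp m n k = fct m n ⟨k, hk⟩ * Rp m n (k + 1) := by
  rw [Rp, Rp, List.drop_eq_getElem_cons (by simpa using hk), List.prod_cons]
  congr 1
  simp

lemma Rp_congr (m n m' n' : Fin d → Bool) (k : ℕ)
    (h : ∀ j : Fin d, k ≤ (j : ℕ) → fct m n j = fct m' n' j) :
    Rp m n k = Rp m' n' k := by
  rw [Rp, Rp]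
  congr 1
  apply List.ext_getElem (by simp)
  intro t h1 h2
  simp only [List.getElem_drop, List.getElem_ofFn]
  apply h
  simp

lemma fct_update_m (m n : Fin d → Bool) (i j : Fin d) (b : Bool) (h : j ≠ i) :
    fct (Function.update m i b) n j = fct m n j := by
  rw [fct, fct, Function.update_of_ne h]

lemma fct_update_n (m n : Fin d → Bool) (i j : Fin d) (b : Bool) (h : j ≠ i) :
    fct m (Function.update n i b) j = fct m n j := by
  rw [fct, fct, Function.update_of_ne h]

lemma insE (i : Fin d) : ∀ (t k : ℕ), k + t = (i : ℕ) → ∀ (m n : Fin d → Bool),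
    (m i = true → eg d i * Rp m n k = 0) ∧
    (m i = false → ∃ c : ℂ, eg d i * Rp m n k = c • Rp (Function.update m i true) n k) := by
  intro t
  induction t with
  | zero =>
      intro k hk m n
      have hkd : k < d := by omega
      have hik : i = ⟨k, hkd⟩ := Fin.ext (by simp only [Fin.val_mk]; omega)
      subst hik
      rw [Rp_succ m n k hkd, fct]
      constructor
      · intro hm
        rw [hm, if_pos rfl, ← mul_assoc, ← mul_assoc, eg_sq, zero_mul, zero_mul]
      · intro hm
        refine ⟨1, ?_⟩
        rw [one_smul, Rp_succ _ n k hkd, fct, Function.update_self, hm]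
        simp only [Bool.false_eq_true, if_false, if_true, one_mul]
        rw [← mul_assoc]
        congr 1
        exact (Rp_congr _ _ _ _ _ (fun j hj => (fct_update_m m n _ j true
          (by intro he; subst he; simp only [Fin.val_mk] at hj; omega)).symm))
  | succ t ih =>
      intro k hk m n
      have hkd : k < d := by omega
      have hki : (⟨k, hkd⟩ : Fin d) ≠ i := by
        intro he
        have h2 := congrArg Fin.val he
        simp only [Fin.val_mk] at h2
        omega
      obtain ⟨c0, hc0⟩ := comm_fct (rel_ee i) (rel_ef i) m n ⟨k, hkd⟩
      have key : ∀ X : SF d, eg d i * (fct m n ⟨k, hkd⟩ * X)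
          = c0 • (fct m n ⟨k, hkd⟩ * (eg d i * X)) := by
        intro X
        rw [← mul_assoc, hc0, smul_mul_assoc, mul_assoc]
      obtain ⟨hz, hs⟩ := ih (k + 1) (by omega) m n
      constructor
      · intro hm
        rw [Rp_succ m n k hkd, key, hz hm, mul_zero, smul_zero]
      · intro hm
        obtain ⟨c, hc⟩ := hs hm
        refine ⟨c0 * c, ?_⟩
        rw [Rp_succ m n k hkd, key, hc, mul_smul_comm, smul_smul]
        rw [Rp_succ _ n k hkd, fct_update_m m n i ⟨k, hkd⟩ true hki]

lemma insF (i : Fin d) : ∀ (t k : ℕ), k + t = (i : ℕ) → ∀ (m n : Fin d → Bool),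
    (n i = true → fg d i * Rp m n k = 0) ∧
    (n i = false → ∃ c : ℂ, fg d i * Rp m n k = c • Rp m (Function.update n i true) k) := by
  intro t
  induction t with
  | zero =>
      intro k hk m n
      have hkd : k < d := by omega
      have hik : i = ⟨k, hkd⟩ := Fin.ext (by simp only [Fin.val_mk]; omega)
      subst hik
      rw [Rp_succ m n k hkd, fct]
      -- move fg through the e-part
      have hep : ∃ c : ℂ, fg d ⟨k, hkd⟩ * (if m ⟨k, hkd⟩ = true then eg d ⟨k, hkd⟩ else 1)
          = c • ((if m ⟨k, hkd⟩ = true then eg d ⟨k, hkd⟩ else 1) * fg d ⟨k, hkd⟩) := by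
        cases hm : m ⟨k, hkd⟩
        · exact ⟨1, by simp⟩
        · refine ⟨-1, ?_⟩
          simp only [if_true]
          rw [rel_fe, neg_one_smul]
      obtain ⟨c0, hc0⟩ := hep
      constructor
      · intro hn
        rw [hn, if_pos rfl]
        rw [← mul_assoc, ← mul_assoc, hc0, smul_mul_assoc, smul_mul_assoc,
          mul_assoc _ _ (fg d _), fg_sq]
        simp
      · intro hn
        refine ⟨c0, ?_⟩
        rw [hn]
        simp only [Bool.false_eq_true, if_false, mul_one]
        rw [Rp_succ m _ k hkd, fct, Function.update_self]
        simp only [if_true]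
        rw [← mul_assoc, hc0, smul_mul_assoc, mul_assoc, mul_assoc]
        congr 3
        exact (Rp_congr _ _ _ _ _ (fun j hj => (fct_update_n m n _ j true
          (by intro he; subst he; simp only [Fin.val_mk] at hj; omega)).symm))
  | succ t ih =>
      intro k hk m n
      have hkd : k < d := by omega
      have hki : (⟨k, hkd⟩ : Fin d) ≠ i := by
        intro he
        have h2 := congrArg Fin.val he
        simp only [Fin.val_mk] at h2
        omega
      obtain ⟨c0, hc0⟩ := comm_fct (rel_fe i) (rel_ff i) m n ⟨k, hkd⟩
      have key : ∀ X : SF d, fg d i * (fct m n ⟨k, hkd⟩ * X)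
          = c0 • (fct m n ⟨k, hkd⟩ * (fg d i * X)) := by
        intro X
        rw [← mul_assoc, hc0, smul_mul_assoc, mul_assoc]
      obtain ⟨hz, hs⟩ := ih (k + 1) (by omega) m n
      constructor
      · intro hn
        rw [Rp_succ m n k hkd, key, hz hn, mul_zero, smul_zero]
      · intro hn
        obtain ⟨c, hc⟩ := hs hn
        refine ⟨c0 * c, ?_⟩
        rw [Rp_succ m n k hkd, key, hc, mul_smul_comm, smul_smul]
        rw [Rp_succ m _ k hkd, fct_update_n m n i ⟨k, hkd⟩ true hki]

lemma insK (m n : Fin d → Bool) :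
    ∃ c : ℂ, Kg d * Rp m n 0 = c • (Rp m n 0 * Kg d) := by
  apply comm_list
  intro s hs
  rw [List.drop_zero, List.mem_ofFn] at hs
  obtain ⟨j, rfl⟩ := hs
  exact comm_fct (rel_Ke) (rel_Kf) m n j

/-- The span of the monomials. -/
noncomputable def Sspan (d : ℕ) : Submodule ℂ (SF d) :=
  Submodule.span ℂ (Set.range fun p : Idx d => SFmono d p.1 p.2.1 p.2.2)

lemma mono_mem (m n : Fin d → Bool) (ℓ : Bool) : SFmono d m n ℓ ∈ Sspan d :=
  Submodule.subset_span ⟨(m, n, ℓ), rfl⟩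

lemma SFmono_Rp (m n : Fin d → Bool) (ℓ : Bool) :
    SFmono d m n ℓ = Rp m n 0 * (if ℓ then Kg d else 1) := by
  rw [SFmono_eq, Rp_zero]

lemma eg_mul_mono (i : Fin d) (m n : Fin d → Bool) (ℓ : Bool) :
    eg d i * SFmono d m n ℓ ∈ Sspan d := by
  rw [SFmono_Rp, ← mul_assoc]
  cases hm : m i
  · obtain ⟨c, hc⟩ := (insE i (i : ℕ) 0 (by omega) m n).2 hm
    rw [hc, smul_mul_assoc, ← SFmono_Rp]
    exact Submodule.smul_mem _ _ (mono_mem _ _ _)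
  · rw [(insE i (i : ℕ) 0 (by omega) m n).1 hm, zero_mul]
    exact Submodule.zero_mem _

lemma fg_mul_mono (i : Fin d) (m n : Fin d → Bool) (ℓ : Bool) :
    fg d i * SFmono d m n ℓ ∈ Sspan d := by
  rw [SFmono_Rp, ← mul_assoc]
  cases hn : n i
  · obtain ⟨c, hc⟩ := (insF i (i : ℕ) 0 (by omega) m n).2 hn
    rw [hc, smul_mul_assoc, ← SFmono_Rp]
    exact Submodule.smul_mem _ _ (mono_mem _ _ _)
  · rw [(insF i (i : ℕ) 0 (by omega) m n).1 hn, zero_mul]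
    exact Submodule.zero_mem _

lemma Kg_mul_mono (m n : Fin d → Bool) (ℓ : Bool) :
    Kg d * SFmono d m n ℓ ∈ Sspan d := by
  obtain ⟨c, hc⟩ := insK m n
  have key : Kg d * SFmono d m n ℓ = c • SFmono d m n (!ℓ) := by
    rw [SFmono_Rp, ← mul_assoc, hc, smul_mul_assoc, mul_assoc, SFmono_Rp]
    cases ℓ
    · simp only [Bool.not_false, if_true, Bool.false_eq_true, if_false, mul_one]
    · simp only [Bool.not_true, if_true, Bool.false_eq_true, if_false, rel_Ksq, mul_one]
  rw [key]
  exact Submodule.smul_mem _ _ (mono_mem _ _ _)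

lemma gen_mul_mem (a : SF d)
    (ha : ∀ (m n : Fin d → Bool) (ℓ : Bool), a * SFmono d m n ℓ ∈ Sspan d) :
    ∀ s ∈ Sspan d, a * s ∈ Sspan d := by
  intro s hs
  induction hs using Submodule.span_induction with
  | mem x h =>
      obtain ⟨⟨m, n, ℓ⟩, rfl⟩ := h
      exact ha m n ℓ
  | zero => rw [mul_zero]; exact Submodule.zero_mem _
  | add x y hx hy ihx ihy => rw [mul_add]; exact Submodule.add_mem _ ihx ihy
  | smul c x hx ihx => rw [mul_smul_comm]; exact Submodule.smul_mem _ _ ihx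

lemma mul_mem_span (x : SF d) : ∀ s ∈ Sspan d, x * s ∈ Sspan d := by
  obtain ⟨y, rfl⟩ := RingQuot.mkAlgHom_surjective ℂ (SFRel d) x
  induction y using FreeAlgebra.induction with
  | grade0 r =>
      intro s hs
      convert Submodule.smul_mem (Sspan d) r hs using 1
      rw [AlgHom.commutes]
      exact (Algebra.smul_def r s).symm
  | grade1 g =>
      cases g with
      | e i => exact gen_mul_mem _ (eg_mul_mono i)
      | f i => exact gen_mul_mem _ (fg_mul_mono i)
      | K => exact gen_mul_mem _ (Kg_mul_mono)
  | mul a b iha ihb =>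
      intro s hs
      rw [map_mul]
      have h := iha _ (ihb s hs)
      exact (congrArg (· ∈ Sspan d) (mul_assoc _ _ s)).mpr h
  | add a b iha ihb =>
      intro s hs
      rw [map_add]
      have h := Submodule.add_mem _ (iha s hs) (ihb s hs)
      exact (congrArg (· ∈ Sspan d) (add_mul _ _ s)).mpr h

lemma SFmono_bot : SFmono d (fun _ => false) (fun _ => false) false = 1 := by
  rw [SFmono_eq]
  have h1 : fct (d := d) (fun _ => false) (fun _ => false) = fun _ => 1 := by
    funext i; simp [fct]
  rw [h1, List.ofFn_const, List.prod_replicate, one_pow, if_neg (by simp), mul_one]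

lemma span_top : ⊤ ≤ Sspan d := by
  intro x _
  have := mul_mem_span x (SFmono d (fun _ => false) (fun _ => false) false)
    (mono_mem _ _ _)
  rwa [SFmono_bot, mul_one] at this

end SFproof

/-- The set `Ω = {(∏ᵢ e iᵐⁱ f iⁿⁱ) Kˡ | mᵢ, nᵢ, ℓ ∈ {0,1}}` is a `ℂ`-basis of
`P`; in particular `dim P = 2^(2d+1)`. -/
theorem sf_monomials_basis (d : ℕ) :
    ∃ b : Module.Basis ((Fin d → Bool) × (Fin d → Bool) × Bool) ℂ (SF d),
      (∀ p, b p = SFmono d p.1 p.2.1 p.2.2) ∧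
      Module.finrank ℂ (SF d) = 2 ^ (2 * d + 1) := by
  let b : Module.Basis (SFproof.Idx d) ℂ (SF d) :=
    Module.Basis.mk SFproof.mono_linearIndependent SFproof.span_top
  refine ⟨b, fun p => Module.Basis.mk_apply _ _ _, ?_⟩
  rw [Module.finrank_eq_card_basis b]
  rw [Fintype.card_prod, Fintype.card_prod, Fintype.card_fun, Fintype.card_bool,
    Fintype.card_fin]
  rw [pow_succ, two_mul, pow_add]
  ring
end

section
/- Let P be the 2^{2d+1}-dimensional ℂ-algebra with basis Ω = {(∏ e_i^{m_i} f_i^{n_i}) K^ℓ} as above. Define the linear function φ : P → ℂ on basis elements by φ((∏ e_i^{m_i} f_i^{n_i}) K^ℓ) = 1 if all m_i = n_i = 1 and ℓ = 1, and 0 otherwise. Then φ is a symmetric linear function (φ(ab) = φ(ba) for all a,b ∈ P) and the bilinear form (a,b) ↦ φ(ab) on P is non-degenerate; i.e. P is a symmetric algebra with symmetrizing form φ. -/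
-- Auxiliary development


section Rels

variable {d : ℕ}

private lemma mkrel {x y : FreeAlgebra ℂ (SFGen d)} (h : SFRel d x y) :
    RingQuot.mkAlgHom ℂ (SFRel d) x = RingQuot.mkAlgHom ℂ (SFRel d) y :=
  RingQuot.mkAlgHom_rel ℂ h

lemma KK : Kg d * Kg d = 1 := by
  have := mkrel (SFRel.Ksq (d := d))
  simp only [Kg, map_mul, map_one] at this ⊢; exact this

lemma ee (i j : Fin d) : eg d i * eg d j = -(eg d j * eg d i) := by
  have := mkrel (SFRel.ee i j)
  simp only [eg, map_mul, map_neg] at this ⊢; exact this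

lemma ff (i j : Fin d) : fg d i * fg d j = -(fg d j * fg d i) := by
  have := mkrel (SFRel.ff i j)
  simp only [fg, map_mul, map_neg] at this ⊢; exact this

lemma ef (i j : Fin d) : eg d i * fg d j = -(fg d j * eg d i) := by
  have := mkrel (SFRel.ef i j)
  simp only [eg, fg, map_mul, map_neg] at this ⊢; exact this

lemma fe (j i : Fin d) : fg d j * eg d i = -(eg d i * fg d j) := by
  rw [ef i j, neg_neg]

lemma Ke (i : Fin d) : Kg d * eg d i = -(eg d i * Kg d) := by
  have := mkrel (SFRel.Ke i)
  simp only [eg, Kg, map_mul, map_neg] at this ⊢; exact this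

lemma Kf (i : Fin d) : Kg d * fg d i = -(fg d i * Kg d) := by
  have := mkrel (SFRel.Kf i)
  simp only [fg, Kg, map_mul, map_neg] at this ⊢; exact this

lemma eK (i : Fin d) : eg d i * Kg d = -(Kg d * eg d i) := by rw [Ke i, neg_neg]
lemma fK (i : Fin d) : fg d i * Kg d = -(Kg d * fg d i) := by rw [Kf i, neg_neg]

private lemma self_neg_zero {x : SF d} (h : x = -x) : x = 0 := by
  have h2 : (2 : ℂ) • x = 0 := by
    rw [two_smul]; nth_rewrite 2 [h]; exact add_neg_cancel x
  rcases smul_eq_zero.mp h2 with h' | h'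
  · norm_num at h'
  · exact h'

lemma ee_self (i : Fin d) : eg d i * eg d i = 0 := self_neg_zero (ee i i)
lemma ff_self (i : Fin d) : fg d i * fg d i = 0 := self_neg_zero (ff i i)

end Rels

section Blocks

variable {d : ℕ}

/-- The `i`-th block `e i ^ (m i) * f i ^ (n i)` of a monomial. -/
noncomputable def blk (m n : Fin d → Bool) (i : Fin d) : SF d :=
  (if m i then eg d i else 1) * (if n i then fg d i else 1)

/-- The `K`-part of a monomial. -/
noncomputable def kp (d : ℕ) (ℓ : Bool) : SF d := if ℓ then Kg d else 1

/-- The sign with which a generator anticommutes past the `i`-th block. -/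
def sgn (m n : Fin d → Bool) (i : Fin d) : ℂ :=
  (if m i then -1 else 1) * (if n i then -1 else 1)

lemma sgn_ne_zero (m n : Fin d → Bool) (i : Fin d) : sgn m n i ≠ 0 := by
  unfold sgn; rcases m i <;> rcases n i <;> norm_num

lemma SFmono_eq (m n : Fin d → Bool) (ℓ : Bool) :
    SFmono d m n ℓ = ((List.finRange d).map (blk m n)).prod * kp d ℓ := by
  rw [SFmono, ← List.ofFn_eq_map]; rfl

lemma kp_mul_K (ℓ : Bool) : kp d ℓ * Kg d = kp d (!ℓ) := by
  cases ℓ <;> simp [kp, KK]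

lemma K_mul_kp (ℓ : Bool) : Kg d * kp d ℓ = kp d (!ℓ) := by
  cases ℓ <;> simp [kp, KK]

lemma kp_mul_e (ℓ : Bool) (i : Fin d) :
    kp d ℓ * eg d i = (if ℓ then (-1 : ℂ) else 1) • (eg d i * kp d ℓ) := by
  cases ℓ <;> simp [kp, Ke]

lemma kp_mul_f (ℓ : Bool) (i : Fin d) :
    kp d ℓ * fg d i = (if ℓ then (-1 : ℂ) else 1) • (fg d i * kp d ℓ) := by
  cases ℓ <;> simp [kp, Kf]

private lemma anti_mul {d : ℕ} {x y z : SF d} (hxz : x * z = -(z * x))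
    (hyz : y * z = -(z * y)) : (x * y) * z = z * (x * y) := by
  rw [mul_assoc, hyz, mul_neg, ← mul_assoc, hxz, neg_mul, neg_neg, mul_assoc]

private lemma flip_comm {d : ℕ} {x y : SF d} {s : ℂ} (hs : s * s = 1)
    (h : x * y = s • (y * x)) : y * x = s • (x * y) := by
  have : s • (x * y) = y * x := by rw [h, smul_smul, hs, one_smul]
  exact this.symm

lemma sgn_mul_self (m n : Fin d → Bool) (j : Fin d) : sgn m n j * sgn m n j = 1 := by
  unfold sgn; rcases m j <;> rcases n j <;> norm_num

/-- Commuting `e i` past block `j` (for `j ≠ i`). -/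
lemma blk_comm_e {m n : Fin d → Bool} {i j : Fin d} :
    blk m n j * eg d i = sgn m n j • (eg d i * blk m n j) := by
  unfold blk sgn
  rcases hm : m j <;> rcases hn : n j <;>
    simp only [Bool.false_eq_true, if_true, if_false, one_mul, mul_one, neg_one_mul,
      neg_neg, one_smul, neg_one_smul, neg_mul, mul_neg]
  · rw [fe j i]
  · rw [ee j i]
  · exact anti_mul (ee j i) (fe j i)

/-- Commuting `f i` past block `j` (for `j ≠ i`). -/
lemma blk_comm_f {m n : Fin d → Bool} {i j : Fin d} :
    blk m n j * fg d i = sgn m n j • (fg d i * blk m n j) := by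
  unfold blk sgn
  rcases hm : m j <;> rcases hn : n j <;>
    simp only [Bool.false_eq_true, if_true, if_false, one_mul, mul_one, neg_one_mul,
      neg_neg, one_smul, neg_one_smul, neg_mul, mul_neg]
  · rw [ff j i]
  · rw [ef j i]
  · exact anti_mul (ef j i) (ff j i)

/-- Commuting `K` past block `j`. -/
lemma blk_comm_K {m n : Fin d → Bool} {j : Fin d} :
    blk m n j * Kg d = sgn m n j • (Kg d * blk m n j) := by
  unfold blk sgn
  rcases hm : m j <;> rcases hn : n j <;>
    simp only [Bool.false_eq_true, if_true, if_false, one_mul, mul_one, neg_one_mul,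
      neg_neg, one_smul, neg_one_smul, neg_mul, mul_neg]
  · rw [fK j]
  · rw [eK j]
  · exact anti_mul (eK j) (fK j)

/-- Pass `x` from the right of a product of blocks to its left. -/
lemma passR (x : SF d) (F : Fin d → SF d) (s : Fin d → ℂ) :
    ∀ L : List (Fin d), (∀ j ∈ L, F j * x = s j • (x * F j)) →
      (L.map F).prod * x = (L.map s).prod • (x * (L.map F).prod) := by
  intro L
  induction L with
  | nil => simp
  | cons a L ih =>
    intro h
    simp only [List.map_cons, List.prod_cons]
    rw [mul_assoc, ih (fun j hj => h j (List.mem_cons_of_mem a hj)),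
      mul_smul_comm, ← mul_assoc, h a (List.mem_cons_self), smul_mul_assoc,
      smul_smul, mul_comm ((List.map s L).prod), mul_assoc]

/-- Pass `x` from the left of a product of blocks to its right. -/
lemma passL (x : SF d) (F : Fin d → SF d) (s : Fin d → ℂ) :
    ∀ L : List (Fin d), (∀ j ∈ L, x * F j = s j • (F j * x)) →
      x * (L.map F).prod = (L.map s).prod • ((L.map F).prod * x) := by
  intro L
  induction L with
  | nil => simp
  | cons a L ih =>
    intro h
    simp only [List.map_cons, List.prod_cons]
    rw [← mul_assoc, h a (List.mem_cons_self), smul_mul_assoc, mul_assoc,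
      ih (fun j hj => h j (List.mem_cons_of_mem a hj)), mul_smul_comm, ← mul_assoc,
      smul_smul, mul_comm (s a)]

end Blocks

section Split

variable {d : ℕ}

lemma split_at (g : Fin d → SF d) (i : Fin d) :
    ((List.finRange d).map g).prod =
      (((List.finRange d).take i).map g).prod * g i *
        (((List.finRange d).drop (i + 1)).map g).prod := by
  have hlen : (List.finRange d).length = d := List.length_finRange
  have hi : (i : ℕ) < (List.finRange d).length := by rw [hlen]; exact i.isLt
  conv_lhs => rw [← List.take_append_drop (i : ℕ) (List.finRange d)]
  rw [List.drop_eq_getElem_cons hi]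
  have hget : (List.finRange d)[(i : ℕ)] = i := by simp
  rw [hget, List.map_append, List.map_cons, List.prod_append, List.prod_cons, mul_assoc]

lemma mem_take_finRange {k : ℕ} {j : Fin d} (h : j ∈ (List.finRange d).take k) :
    (j : ℕ) < k := by
  rw [List.mem_iff_getElem] at h
  obtain ⟨p, hp, hval⟩ := h
  have hlen : p < k ∧ p < d := by
    simpa [List.length_take, List.length_finRange] using hp
  have hval' : (List.finRange d)[p]'(by simp [List.length_finRange]; exact hlen.2) = j := by
    rw [← hval, List.getElem_take]
  have : j = (⟨p, hlen.2⟩ : Fin d) := by rw [← hval']; simp [List.getElem_finRange]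
  rw [this]; exact hlen.1

lemma mem_drop_finRange {k : ℕ} {j : Fin d} (h : j ∈ (List.finRange d).drop k) :
    k ≤ (j : ℕ) := by
  rw [List.mem_iff_getElem] at h
  obtain ⟨p, hp, hval⟩ := h
  have hlen : k + p < d := by
    simp [List.length_drop, List.length_finRange] at hp; omega
  have hval' : (List.finRange d)[k + p]'(by simp [List.length_finRange]; exact hlen) = j := by
    rw [← hval, List.getElem_drop]
  have : j = (⟨k + p, hlen⟩ : Fin d) := by rw [← hval']; simp [List.getElem_finRange]
  rw [this]; simp

/-- blocks are unchanged off the updated coordinate -/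
lemma blk_update_m {m n : Fin d → Bool} {i j : Fin d} (h : j ≠ i) (c : Bool) :
    blk (Function.update m i c) n j = blk m n j := by
  simp [blk, Function.update_of_ne h]

lemma blk_update_n {m n : Fin d → Bool} {i j : Fin d} (h : j ≠ i) (c : Bool) :
    blk m (Function.update n i c) j = blk m n j := by
  simp [blk, Function.update_of_ne h]

lemma sgn_update_m {m n : Fin d → Bool} {i j : Fin d} (h : j ≠ i) (c : Bool) :
    sgn (Function.update m i c) n j = sgn m n j := by
  simp [sgn, Function.update_of_ne h]

lemma sgn_update_n {m n : Fin d → Bool} {i j : Fin d} (h : j ≠ i) (c : Bool) :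
    sgn m (Function.update n i c) j = sgn m n j := by
  simp [sgn, Function.update_of_ne h]

lemma take_map_congr {α : Type*} (g g' : Fin d → α) (k : ℕ)
    (h : ∀ j : Fin d, (j : ℕ) < k → g j = g' j) :
    ((List.finRange d).take k).map g = ((List.finRange d).take k).map g' :=
  List.map_congr_left fun j hj => h j (mem_take_finRange hj)

lemma drop_map_congr {α : Type*} (g g' : Fin d → α) (k : ℕ)
    (h : ∀ j : Fin d, k ≤ (j : ℕ) → g j = g' j) :
    ((List.finRange d).drop k).map g = ((List.finRange d).drop k).map g' :=
  List.map_congr_left fun j hj => h j (mem_drop_finRange hj)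

end Split

section Absorb

variable {d : ℕ} {m n : Fin d → Bool} {i : Fin d}

lemma blk_mul_e (h : m i = false) :
    blk m n i * eg d i = (if n i then (-1 : ℂ) else 1) • blk (Function.update m i true) n i := by
  unfold blk
  rw [h, Function.update_self, if_pos rfl]
  rcases hn : n i <;>
    simp only [Bool.false_eq_true, if_true, if_false, one_mul, mul_one, one_smul, neg_one_smul]
  exact fe i i

lemma blk_mul_e_zero (h : m i = true) : blk m n i * eg d i = 0 := by
  unfold blk
  rw [h, if_pos rfl]
  rcases hn : n i <;>
    simp only [Bool.false_eq_true, if_true, if_false, one_mul, mul_one]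
  · simp [ee_self]
  · rw [mul_assoc, fe i i, mul_neg, ← mul_assoc, ee_self]; simp

lemma blk_mul_f (h : n i = false) :
    blk m n i * fg d i = blk m (Function.update n i true) i := by
  unfold blk
  rw [h, Function.update_self]
  simp

lemma blk_mul_f_zero (h : n i = true) : blk m n i * fg d i = 0 := by
  unfold blk
  rw [h, if_pos rfl]
  rw [mul_assoc, ff_self]; simp

lemma e_mul_blk (h : m i = false) :
    eg d i * blk m n i = blk (Function.update m i true) n i := by
  unfold blk
  rw [h, Function.update_self, if_pos rfl]
  simp [mul_assoc]

lemma e_mul_blk_zero (h : m i = true) : eg d i * blk m n i = 0 := by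
  unfold blk
  rw [h, if_pos rfl, ← mul_assoc, ee_self]; simp

lemma f_mul_blk (h : n i = false) :
    fg d i * blk m n i = (if m i then (-1 : ℂ) else 1) • blk m (Function.update n i true) i := by
  unfold blk
  rw [h, Function.update_self, if_pos rfl]
  rcases hm : m i <;>
    simp only [Bool.false_eq_true, if_true, if_false, one_mul, mul_one, one_smul, neg_one_smul]
  exact fe i i

lemma f_mul_blk_zero (h : n i = true) : fg d i * blk m n i = 0 := by
  unfold blk
  rw [h, if_pos rfl]
  rcases hm : m i <;>
    simp only [Bool.false_eq_true, if_true, if_false, one_mul, mul_one]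
  · simp [ff_self]
  · rw [← mul_assoc, fe i i, neg_mul, mul_assoc, ff_self]; simp

end Absorb

section MulMono

variable {d : ℕ} {m n : Fin d → Bool} {ℓ : Bool} {i : Fin d}

lemma K_comm_blk {j : Fin d} : Kg d * blk m n j = sgn m n j • (blk m n j * Kg d) :=
  flip_comm (sgn_mul_self m n j) blk_comm_K

lemma e_comm_blk {j : Fin d} : eg d i * blk m n j = sgn m n j • (blk m n j * eg d i) :=
  flip_comm (sgn_mul_self m n j) blk_comm_e

lemma f_comm_blk {j : Fin d} : fg d i * blk m n j = sgn m n j • (blk m n j * fg d i) :=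
  flip_comm (sgn_mul_self m n j) blk_comm_f

lemma mono_mul_K : SFmono d m n ℓ * Kg d = SFmono d m n (!ℓ) := by
  rw [SFmono_eq, SFmono_eq, mul_assoc, kp_mul_K]

lemma K_mul_mono :
    Kg d * SFmono d m n ℓ =
      (((List.finRange d).map (sgn m n)).prod) • SFmono d m n (!ℓ) := by
  rw [SFmono_eq, SFmono_eq, ← mul_assoc,
    passL (Kg d) (blk m n) (sgn m n) (List.finRange d) (fun j _ => K_comm_blk),
    smul_mul_assoc, mul_assoc, K_mul_kp]

lemma mono_mul_e (h : m i = false) :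
    SFmono d m n ℓ * eg d i =
      ((if ℓ then (-1 : ℂ) else 1) * (if n i then (-1 : ℂ) else 1) *
        (((List.finRange d).drop ((i : ℕ) + 1)).map (sgn m n)).prod) •
        SFmono d (Function.update m i true) n ℓ := by
  have hT : ((List.finRange d).take (i : ℕ)).map (blk (Function.update m i true) n) =
      ((List.finRange d).take (i : ℕ)).map (blk m n) :=
    take_map_congr _ _ _ fun j hj =>
      blk_update_m (fun hij => by rw [hij] at hj; omega) true
  have hDm : ((List.finRange d).drop ((i : ℕ) + 1)).map (blk (Function.update m i true) n) =
      ((List.finRange d).drop ((i : ℕ) + 1)).map (blk m n) :=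
    drop_map_congr _ _ _ fun j hj =>
      blk_update_m (fun hij => by rw [hij] at hj; omega) true
  rw [SFmono_eq m n ℓ, SFmono_eq (Function.update m i true) n ℓ,
    split_at (blk m n) i, split_at (blk (Function.update m i true) n) i, hT, hDm]
  set TP := (((List.finRange d).take (i : ℕ)).map (blk m n)).prod with hTPdef
  set DP := (((List.finRange d).drop ((i : ℕ) + 1)).map (blk m n)).prod with hDPdef
  have hD : DP * eg d i =
      (((List.finRange d).drop ((i : ℕ) + 1)).map (sgn m n)).prod • (eg d i * DP) :=
    passR (eg d i) (blk m n) (sgn m n) _ (fun j _ => blk_comm_e)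
  rw [mul_assoc _ (kp d ℓ) (eg d i), kp_mul_e, mul_smul_comm, ← mul_assoc,
    mul_assoc (TP * blk m n i) DP (eg d i)]
  rw [hD, mul_smul_comm, smul_mul_assoc, ← mul_assoc (TP * blk m n i) (eg d i) DP,
    mul_assoc TP (blk m n i) (eg d i), blk_mul_e h]
  simp only [smul_mul_assoc, mul_smul_comm, smul_smul]
  congr 1
  ring

lemma mono_mul_e_zero (h : m i = true) : SFmono d m n ℓ * eg d i = 0 := by
  rw [SFmono_eq m n ℓ, split_at (blk m n) i]
  set TP := (((List.finRange d).take (i : ℕ)).map (blk m n)).prod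
  set DP := (((List.finRange d).drop ((i : ℕ) + 1)).map (blk m n)).prod
  have hD : DP * eg d i =
      (((List.finRange d).drop ((i : ℕ) + 1)).map (sgn m n)).prod • (eg d i * DP) :=
    passR (eg d i) (blk m n) (sgn m n) _ (fun j _ => blk_comm_e)
  rw [mul_assoc _ (kp d ℓ) (eg d i), kp_mul_e, mul_smul_comm, ← mul_assoc,
    mul_assoc (TP * blk m n i) DP (eg d i), hD, mul_smul_comm, smul_mul_assoc,
    ← mul_assoc (TP * blk m n i) (eg d i) DP, mul_assoc TP (blk m n i) (eg d i),
    blk_mul_e_zero h]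
  simp

lemma mono_mul_f (h : n i = false) :
    SFmono d m n ℓ * fg d i =
      ((if ℓ then (-1 : ℂ) else 1) *
        (((List.finRange d).drop ((i : ℕ) + 1)).map (sgn m n)).prod) •
        SFmono d m (Function.update n i true) ℓ := by
  have hT : ((List.finRange d).take (i : ℕ)).map (blk m (Function.update n i true)) =
      ((List.finRange d).take (i : ℕ)).map (blk m n) :=
    take_map_congr _ _ _ fun j hj =>
      blk_update_n (fun hij => by rw [hij] at hj; omega) true
  have hDm : ((List.finRange d).drop ((i : ℕ) + 1)).map (blk m (Function.update n i true)) =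
      ((List.finRange d).drop ((i : ℕ) + 1)).map (blk m n) :=
    drop_map_congr _ _ _ fun j hj =>
      blk_update_n (fun hij => by rw [hij] at hj; omega) true
  rw [SFmono_eq m n ℓ, SFmono_eq m (Function.update n i true) ℓ,
    split_at (blk m n) i, split_at (blk m (Function.update n i true)) i, hT, hDm]
  set TP := (((List.finRange d).take (i : ℕ)).map (blk m n)).prod
  set DP := (((List.finRange d).drop ((i : ℕ) + 1)).map (blk m n)).prod
  have hD : DP * fg d i =
      (((List.finRange d).drop ((i : ℕ) + 1)).map (sgn m n)).prod • (fg d i * DP) :=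
    passR (fg d i) (blk m n) (sgn m n) _ (fun j _ => blk_comm_f)
  rw [mul_assoc _ (kp d ℓ) (fg d i), kp_mul_f, mul_smul_comm, ← mul_assoc,
    mul_assoc (TP * blk m n i) DP (fg d i), hD, mul_smul_comm, smul_mul_assoc,
    ← mul_assoc (TP * blk m n i) (fg d i) DP, mul_assoc TP (blk m n i) (fg d i),
    blk_mul_f h]
  simp only [smul_mul_assoc, mul_smul_comm, smul_smul]

lemma mono_mul_f_zero (h : n i = true) : SFmono d m n ℓ * fg d i = 0 := by
  rw [SFmono_eq m n ℓ, split_at (blk m n) i]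
  set TP := (((List.finRange d).take (i : ℕ)).map (blk m n)).prod
  set DP := (((List.finRange d).drop ((i : ℕ) + 1)).map (blk m n)).prod
  have hD : DP * fg d i =
      (((List.finRange d).drop ((i : ℕ) + 1)).map (sgn m n)).prod • (fg d i * DP) :=
    passR (fg d i) (blk m n) (sgn m n) _ (fun j _ => blk_comm_f)
  rw [mul_assoc _ (kp d ℓ) (fg d i), kp_mul_f, mul_smul_comm, ← mul_assoc,
    mul_assoc (TP * blk m n i) DP (fg d i), hD, mul_smul_comm, smul_mul_assoc,
    ← mul_assoc (TP * blk m n i) (fg d i) DP, mul_assoc TP (blk m n i) (fg d i),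
    blk_mul_f_zero h]
  simp

lemma e_mul_mono (h : m i = false) :
    eg d i * SFmono d m n ℓ =
      ((((List.finRange d).take (i : ℕ)).map (sgn m n)).prod) •
        SFmono d (Function.update m i true) n ℓ := by
  have hT : ((List.finRange d).take (i : ℕ)).map (blk (Function.update m i true) n) =
      ((List.finRange d).take (i : ℕ)).map (blk m n) :=
    take_map_congr _ _ _ fun j hj =>
      blk_update_m (fun hij => by rw [hij] at hj; omega) true
  have hDm : ((List.finRange d).drop ((i : ℕ) + 1)).map (blk (Function.update m i true) n) =
      ((List.finRange d).drop ((i : ℕ) + 1)).map (blk m n) :=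
    drop_map_congr _ _ _ fun j hj =>
      blk_update_m (fun hij => by rw [hij] at hj; omega) true
  rw [SFmono_eq m n ℓ, SFmono_eq (Function.update m i true) n ℓ,
    split_at (blk m n) i, split_at (blk (Function.update m i true) n) i, hT, hDm]
  set TP := (((List.finRange d).take (i : ℕ)).map (blk m n)).prod
  set DP := (((List.finRange d).drop ((i : ℕ) + 1)).map (blk m n)).prod
  have hTpass : eg d i * TP =
      (((List.finRange d).take (i : ℕ)).map (sgn m n)).prod • (TP * eg d i) :=
    passL (eg d i) (blk m n) (sgn m n) _ (fun j _ => e_comm_blk)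
  rw [← mul_assoc, ← mul_assoc (eg d i) (TP * blk m n i) DP,
    ← mul_assoc (eg d i) TP (blk m n i), hTpass, smul_mul_assoc, smul_mul_assoc,
    smul_mul_assoc, mul_assoc TP (eg d i) (blk m n i), e_mul_blk h]

lemma e_mul_mono_zero (h : m i = true) : eg d i * SFmono d m n ℓ = 0 := by
  rw [SFmono_eq m n ℓ, split_at (blk m n) i]
  set TP := (((List.finRange d).take (i : ℕ)).map (blk m n)).prod
  set DP := (((List.finRange d).drop ((i : ℕ) + 1)).map (blk m n)).prod
  have hTpass : eg d i * TP =
      (((List.finRange d).take (i : ℕ)).map (sgn m n)).prod • (TP * eg d i) :=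
    passL (eg d i) (blk m n) (sgn m n) _ (fun j _ => e_comm_blk)
  rw [← mul_assoc, ← mul_assoc (eg d i) (TP * blk m n i) DP,
    ← mul_assoc (eg d i) TP (blk m n i), hTpass, smul_mul_assoc, smul_mul_assoc,
    smul_mul_assoc, mul_assoc TP (eg d i) (blk m n i), e_mul_blk_zero h]
  simp

lemma f_mul_mono (h : n i = false) :
    fg d i * SFmono d m n ℓ =
      ((((List.finRange d).take (i : ℕ)).map (sgn m n)).prod *
        (if m i then (-1 : ℂ) else 1)) •
        SFmono d m (Function.update n i true) ℓ := by
  have hT : ((List.finRange d).take (i : ℕ)).map (blk m (Function.update n i true)) =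
      ((List.finRange d).take (i : ℕ)).map (blk m n) :=
    take_map_congr _ _ _ fun j hj =>
      blk_update_n (fun hij => by rw [hij] at hj; omega) true
  have hDm : ((List.finRange d).drop ((i : ℕ) + 1)).map (blk m (Function.update n i true)) =
      ((List.finRange d).drop ((i : ℕ) + 1)).map (blk m n) :=
    drop_map_congr _ _ _ fun j hj =>
      blk_update_n (fun hij => by rw [hij] at hj; omega) true
  rw [SFmono_eq m n ℓ, SFmono_eq m (Function.update n i true) ℓ,
    split_at (blk m n) i, split_at (blk m (Function.update n i true)) i, hT, hDm]
  set TP := (((List.finRange d).take (i : ℕ)).map (blk m n)).prod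
  set DP := (((List.finRange d).drop ((i : ℕ) + 1)).map (blk m n)).prod
  have hTpass : fg d i * TP =
      (((List.finRange d).take (i : ℕ)).map (sgn m n)).prod • (TP * fg d i) :=
    passL (fg d i) (blk m n) (sgn m n) _ (fun j _ => f_comm_blk)
  rw [← mul_assoc, ← mul_assoc (fg d i) (TP * blk m n i) DP,
    ← mul_assoc (fg d i) TP (blk m n i), hTpass, smul_mul_assoc, smul_mul_assoc,
    smul_mul_assoc, mul_assoc TP (fg d i) (blk m n i), f_mul_blk h]
  simp only [smul_mul_assoc, mul_smul_comm, smul_smul]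

lemma f_mul_mono_zero (h : n i = true) : fg d i * SFmono d m n ℓ = 0 := by
  rw [SFmono_eq m n ℓ, split_at (blk m n) i]
  set TP := (((List.finRange d).take (i : ℕ)).map (blk m n)).prod
  set DP := (((List.finRange d).drop ((i : ℕ) + 1)).map (blk m n)).prod
  have hTpass : fg d i * TP =
      (((List.finRange d).take (i : ℕ)).map (sgn m n)).prod • (TP * fg d i) :=
    passL (fg d i) (blk m n) (sgn m n) _ (fun j _ => f_comm_blk)
  rw [← mul_assoc, ← mul_assoc (fg d i) (TP * blk m n i) DP,
    ← mul_assoc (fg d i) TP (blk m n i), hTpass, smul_mul_assoc, smul_mul_assoc,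
    smul_mul_assoc, mul_assoc TP (fg d i) (blk m n i), f_mul_blk_zero h]
  simp

end MulMono

section Span

variable {d : ℕ}

/-- The index type for basis monomials. -/
abbrev St (d : ℕ) := (Fin d → Bool) × (Fin d → Bool) × Bool

noncomputable def monoOf (d : ℕ) (s : St d) : SF d := SFmono d s.1 s.2.1 s.2.2

noncomputable def W (d : ℕ) : Submodule ℂ (SF d) :=
  Submodule.span ℂ (Set.range (monoOf d))

lemma mono_mem_W (s : St d) : monoOf d s ∈ W d :=
  Submodule.subset_span ⟨s, rfl⟩

lemma SFmono_false : SFmono d (fun _ => false) (fun _ => false) false = 1 := by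
  simp [SFmono, List.ofFn_const]

lemma one_mem_W : (1 : SF d) ∈ W d := by
  rw [← SFmono_false]
  exact mono_mem_W ((fun _ => false), (fun _ => false), false)

lemma mono_mul_e_mem (s : St d) (i : Fin d) : monoOf d s * eg d i ∈ W d := by
  rcases hm : s.1 i with _ | _
  · rw [monoOf, mono_mul_e hm]
    exact (W d).smul_mem _ (mono_mem_W (Function.update s.1 i true, s.2.1, s.2.2))
  · rw [monoOf, mono_mul_e_zero hm]; exact (W d).zero_mem

lemma mono_mul_f_mem (s : St d) (i : Fin d) : monoOf d s * fg d i ∈ W d := by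
  rcases hn : s.2.1 i with _ | _
  · rw [monoOf, mono_mul_f hn]
    exact (W d).smul_mem _ (mono_mem_W (s.1, Function.update s.2.1 i true, s.2.2))
  · rw [monoOf, mono_mul_f_zero hn]; exact (W d).zero_mem

lemma mono_mul_K_mem (s : St d) : monoOf d s * Kg d ∈ W d := by
  rw [monoOf, mono_mul_K]
  exact mono_mem_W (s.1, s.2.1, !s.2.2)

lemma W_mul_gen (g : SF d) (hg : ∀ s : St d, monoOf d s * g ∈ W d) :
    ∀ w ∈ W d, w * g ∈ W d := by
  intro w hw
  refine Submodule.span_induction ?_ ?_ ?_ ?_ hw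
  · rintro x ⟨s, rfl⟩; exact hg s
  · simp
  · intro x y _ _ hx hy; rw [add_mul]; exact (W d).add_mem hx hy
  · intro c x _ hx; rw [smul_mul_assoc]; exact (W d).smul_mem c hx

/-- The subalgebra of elements whose right multiplication preserves `W`. -/
noncomputable def Wstab (d : ℕ) : Subalgebra ℂ (SF d) where
  carrier := {a | ∀ w ∈ W d, w * a ∈ W d}
  mul_mem' := fun {a b} ha hb w hw => by
    rw [← mul_assoc]; exact hb _ (ha w hw)
  add_mem' := fun {a b} ha hb w hw => by
    rw [mul_add]; exact (W d).add_mem (ha w hw) (hb w hw)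
  algebraMap_mem' := fun c w hw => by
    rw [← Algebra.commutes c w, ← Algebra.smul_def]
    exact (W d).smul_mem c hw

lemma adjoin_gens_top :
    Algebra.adjoin ℂ
      (Set.range fun g : SFGen d => RingQuot.mkAlgHom ℂ (SFRel d) (FreeAlgebra.ι ℂ g)) = ⊤ := by
  have h2 := AlgHom.map_adjoin (RingQuot.mkAlgHom ℂ (SFRel d)) (Set.range (FreeAlgebra.ι ℂ))
  rw [FreeAlgebra.adjoin_range_ι, Algebra.map_top] at h2
  rw [← Set.range_comp] at h2
  have h3 : (Set.range fun g : SFGen d => RingQuot.mkAlgHom ℂ (SFRel d) (FreeAlgebra.ι ℂ g)) =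
      Set.range (⇑(RingQuot.mkAlgHom ℂ (SFRel d)) ∘ FreeAlgebra.ι ℂ) := rfl
  rw [h3, ← h2, eq_comm]
  exact ((AlgHom.range_eq_top _).mpr (RingQuot.mkAlgHom_surjective ℂ (SFRel d))).symm

lemma Wstab_top : Wstab d = ⊤ := by
  rw [← top_le_iff]
  refine le_of_eq_of_le (b := Algebra.adjoin ℂ (Set.range fun g : SFGen d => (RingQuot.mkAlgHom ℂ (SFRel d) (FreeAlgebra.ι ℂ g) : SF d))) adjoin_gens_top.symm ?_
  apply Algebra.adjoin_le
  rintro x ⟨g, rfl⟩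
  cases g with
  | e i => exact W_mul_gen (eg d i) (fun s => mono_mul_e_mem s i)
  | f i => exact W_mul_gen (fg d i) (fun s => mono_mul_f_mem s i)
  | K => exact W_mul_gen (Kg d) mono_mul_K_mem

lemma W_top : ∀ a : SF d, a ∈ W d := by
  intro a
  have ha : a ∈ Wstab d := by rw [Wstab_top]; trivial
  have := ha 1 one_mem_W
  simpa using this

end Span

section Tokens

variable {d : ℕ}

noncomputable def g2a (d : ℕ) : SFGen d → SF d
  | .e i => eg d i
  | .f i => fg d i
  | .K => Kg d

def apTok : SFGen d → St d → Option (St d)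
  | .e i, s => if s.1 i then none else some (Function.update s.1 i true, s.2.1, s.2.2)
  | .f i, s => if s.2.1 i then none else some (s.1, Function.update s.2.1 i true, s.2.2)
  | .K, s => some (s.1, s.2.1, !s.2.2)

def apL : List (SFGen d) → St d → Option (St d)
  | [], s => some s
  | t :: L, s => (apTok t s).bind (apL L)

lemma ifsign_ne_zero (b : Bool) : (if b then (-1 : ℂ) else 1) ≠ 0 := by
  cases b <;> norm_num

lemma sgnlist_ne_zero (m n : Fin d → Bool) (L : List (Fin d)) :
    ((L.map (sgn m n)).prod) ≠ 0 := by
  apply List.prod_ne_zero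
  intro h0
  obtain ⟨j, _, hj⟩ := List.mem_map.mp h0
  exact sgn_ne_zero m n j hj

lemma mono_mul_tok (t : SFGen d) (s : St d) :
    (apTok t s = none → monoOf d s * g2a d t = 0) ∧
      (∀ s', apTok t s = some s' → ∃ c : ℂ, c ≠ 0 ∧ monoOf d s * g2a d t = c • monoOf d s') := by
  cases t with
  | e i =>
    rcases hm : s.1 i with _ | _
    · constructor
      · intro hnone; simp [apTok, hm] at hnone
      · intro s' hs'
        simp [apTok, hm] at hs'
        refine ⟨(if s.2.2 then (-1 : ℂ) else 1) * (if s.2.1 i then (-1 : ℂ) else 1) *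
          (((List.finRange d).drop ((i : ℕ) + 1)).map (sgn s.1 s.2.1)).prod, ?_, ?_⟩
        · exact mul_ne_zero (mul_ne_zero (ifsign_ne_zero s.2.2) (ifsign_ne_zero (s.2.1 i)))
            (sgnlist_ne_zero s.1 s.2.1 _)
        · rw [← hs', monoOf, monoOf, g2a, mono_mul_e hm]
    · constructor
      · intro _; rw [monoOf, g2a, mono_mul_e_zero hm]
      · intro s' hs'; simp [apTok, hm] at hs'
  | f i =>
    rcases hn : s.2.1 i with _ | _
    · constructor
      · intro hnone; simp [apTok, hn] at hnone
      · intro s' hs'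
        simp [apTok, hn] at hs'
        refine ⟨(if s.2.2 then (-1 : ℂ) else 1) *
          (((List.finRange d).drop ((i : ℕ) + 1)).map (sgn s.1 s.2.1)).prod, ?_, ?_⟩
        · exact mul_ne_zero (ifsign_ne_zero s.2.2) (sgnlist_ne_zero s.1 s.2.1 _)
        · rw [← hs', monoOf, monoOf, g2a, mono_mul_f hn]
    · constructor
      · intro _; rw [monoOf, g2a, mono_mul_f_zero hn]
      · intro s' hs'; simp [apTok, hn] at hs'
  | K =>
    constructor
    · intro hnone; simp [apTok] at hnone
    · intro s' hs'
      simp only [apTok, Option.some_inj] at hs'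
      exact ⟨1, one_ne_zero, by rw [← hs', monoOf, monoOf, g2a, mono_mul_K, one_smul]⟩

lemma mono_mul_toklist (L : List (SFGen d)) :
    ∀ s : St d,
      (apL L s = none → monoOf d s * (L.map (g2a d)).prod = 0) ∧
      (∀ s', apL L s = some s' →
        ∃ c : ℂ, c ≠ 0 ∧ monoOf d s * (L.map (g2a d)).prod = c • monoOf d s') := by
  induction L with
  | nil =>
    intro s
    exact ⟨by simp [apL], fun s' hs' => ⟨1, one_ne_zero, by
      simp only [apL, Option.some_inj] at hs'; simp [← hs']⟩⟩
  | cons t L ih =>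
    intro s
    have hstep := mono_mul_tok t s
    rcases htok : apTok t s with _ | s₁
    · have hz : monoOf d s * g2a d t = 0 := hstep.1 htok
      have hmul : monoOf d s * ((t :: L).map (g2a d)).prod = 0 := by
        simp only [List.map_cons, List.prod_cons, ← mul_assoc, hz, zero_mul]
      constructor
      · intro _; exact hmul
      · intro s' hs'; rw [apL, htok] at hs'; simp at hs'
    · obtain ⟨c₀, hc₀, heq⟩ := hstep.2 s₁ htok
      have hrec := ih s₁
      have hmul : monoOf d s * ((t :: L).map (g2a d)).prod =
          c₀ • (monoOf d s₁ * (L.map (g2a d)).prod) := by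
        simp only [List.map_cons, List.prod_cons, ← mul_assoc, heq, smul_mul_assoc]
      constructor
      · intro hnone
        rw [apL, htok] at hnone
        simp only [Option.bind_some] at hnone
        rw [hmul, hrec.1 hnone, smul_zero]
      · intro s' hs'
        rw [apL, htok] at hs'
        simp only [Option.bind_some] at hs'
        obtain ⟨c, hc, heq'⟩ := hrec.2 s' hs'
        exact ⟨c₀ * c, mul_ne_zero hc₀ hc, by rw [hmul, heq', smul_smul]⟩

end Tokens

section Tok

variable {d : ℕ}

def TokM (mβ nβ : Fin d → Bool) : List (SFGen d) :=
  (List.finRange d).flatMap fun i =>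
    (if mβ i then [] else [SFGen.e i]) ++ (if nβ i then [] else [SFGen.f i])

def Tok (β : St d) : List (SFGen d) :=
  TokM β.1 β.2.1 ++ (if β.2.2 then [] else [SFGen.K])

lemma apL_append (L₁ L₂ : List (SFGen d)) :
    ∀ s : St d, apL (L₁ ++ L₂) s = (apL L₁ s).bind (apL L₂) := by
  induction L₁ with
  | nil => intro s; simp [apL]
  | cons t L ih =>
    intro s
    rw [List.cons_append, apL, apL]
    rcases apTok t s with _ | s₁
    · simp
    · simp only [Option.bind_some]; exact ih s₁

lemma apTok_preserve_m {t : SFGen d} {s s₁ : St d} (h : apTok t s = some s₁) {i : Fin d}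
    (hi : s.1 i = true) : s₁.1 i = true := by
  cases t with
  | e j =>
    simp only [apTok] at h
    rcases hj : s.1 j with _ | _
    · rw [hj] at h; simp at h
      rw [← h]
      rcases eq_or_ne i j with rfl | hne
      · simp
      · simp [Function.update_of_ne hne, hi]
    · rw [hj] at h; simp at h
  | f j =>
    simp only [apTok] at h
    rcases hj : s.2.1 j with _ | _
    · rw [hj] at h; simp at h; rw [← h]; exact hi
    · rw [hj] at h; simp at h
  | K => simp only [apTok, Option.some_inj] at h; rw [← h]; exact hi

lemma apTok_preserve_n {t : SFGen d} {s s₁ : St d} (h : apTok t s = some s₁) {i : Fin d}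
    (hi : s.2.1 i = true) : s₁.2.1 i = true := by
  cases t with
  | e j =>
    simp only [apTok] at h
    rcases hj : s.1 j with _ | _
    · rw [hj] at h; simp at h; rw [← h]; exact hi
    · rw [hj] at h; simp at h
  | f j =>
    simp only [apTok] at h
    rcases hj : s.2.1 j with _ | _
    · rw [hj] at h; simp at h
      rw [← h]
      rcases eq_or_ne i j with rfl | hne
      · simp
      · simp [Function.update_of_ne hne, hi]
    · rw [hj] at h; simp at h
  | K => simp only [apTok, Option.some_inj] at h; rw [← h]; exact hi

lemma apL_preserve_m {L : List (SFGen d)} :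
    ∀ {s s₁ : St d}, apL L s = some s₁ → ∀ {i : Fin d}, s.1 i = true → s₁.1 i = true := by
  induction L with
  | nil => intro s s₁ h i hi; simp only [apL, Option.some_inj] at h; rw [← h]; exact hi
  | cons t L ih =>
    intro s s₁ h i hi
    rw [apL] at h
    rcases htok : apTok t s with _ | s₂
    · rw [htok] at h; simp at h
    · rw [htok] at h; simp only [Option.bind_some] at h
      exact ih h (apTok_preserve_m htok hi)

lemma apL_preserve_n {L : List (SFGen d)} :
    ∀ {s s₁ : St d}, apL L s = some s₁ → ∀ {i : Fin d}, s.2.1 i = true → s₁.2.1 i = true := by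
  induction L with
  | nil => intro s s₁ h i hi; simp only [apL, Option.some_inj] at h; rw [← h]; exact hi
  | cons t L ih =>
    intro s s₁ h i hi
    rw [apL] at h
    rcases htok : apTok t s with _ | s₂
    · rw [htok] at h; simp at h
    · rw [htok] at h; simp only [Option.bind_some] at h
      exact ih h (apTok_preserve_n htok hi)

lemma apL_none_of_e {L : List (SFGen d)} {i : Fin d} (hmem : SFGen.e i ∈ L) :
    ∀ {s : St d}, s.1 i = true → apL L s = none := by
  induction L with
  | nil => simp at hmem
  | cons t L ih =>
    intro s hi
    rw [apL]
    rcases List.mem_cons.mp hmem with heq | hmem'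
    · rw [← heq]
      simp [apTok, hi]
    · rcases htok : apTok t s with _ | s₂
      · simp
      · simp only [Option.bind_some]
        exact ih hmem' (apTok_preserve_m htok hi)

lemma apL_none_of_f {L : List (SFGen d)} {i : Fin d} (hmem : SFGen.f i ∈ L) :
    ∀ {s : St d}, s.2.1 i = true → apL L s = none := by
  induction L with
  | nil => simp at hmem
  | cons t L ih =>
    intro s hi
    rw [apL]
    rcases List.mem_cons.mp hmem with heq | hmem'
    · rw [← heq]
      simp [apTok, hi]
    · rcases htok : apTok t s with _ | s₂
      · simp
      · simp only [Option.bind_some]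
        exact ih hmem' (apTok_preserve_n htok hi)

lemma apL_untouch_m {L : List (SFGen d)} {i : Fin d} (hmem : SFGen.e i ∉ L) :
    ∀ {s s₁ : St d}, apL L s = some s₁ → s₁.1 i = s.1 i := by
  induction L with
  | nil => intro s s₁ h; simp only [apL, Option.some_inj] at h; rw [← h]
  | cons t L ih =>
    intro s s₁ h
    rw [apL] at h
    rcases htok : apTok t s with _ | s₂
    · rw [htok] at h; simp at h
    · rw [htok] at h; simp only [Option.bind_some] at h
      have hmem' : SFGen.e i ∉ L := fun hc => hmem (List.mem_cons_of_mem t hc)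
      have ht : t ≠ SFGen.e i := fun hc => hmem (by rw [hc]; exact List.mem_cons_self)
      have h2 : s₂.1 i = s.1 i := by
        cases t with
        | e j =>
          have hji : j ≠ i := fun hc => ht (by rw [hc])
          simp only [apTok] at htok
          rcases hj : s.1 j with _ | _
          · rw [hj] at htok; simp at htok; rw [← htok]
            simp [Function.update_of_ne hji.symm]
          · rw [hj] at htok; simp at htok
        | f j =>
          simp only [apTok] at htok
          rcases hj : s.2.1 j with _ | _
          · rw [hj] at htok; simp at htok; rw [← htok]
          · rw [hj] at htok; simp at htok
        | K => simp only [apTok, Option.some_inj] at htok; rw [← htok]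
      rw [ih hmem' h, h2]

lemma apL_untouch_n {L : List (SFGen d)} {i : Fin d} (hmem : SFGen.f i ∉ L) :
    ∀ {s s₁ : St d}, apL L s = some s₁ → s₁.2.1 i = s.2.1 i := by
  induction L with
  | nil => intro s s₁ h; simp only [apL, Option.some_inj] at h; rw [← h]
  | cons t L ih =>
    intro s s₁ h
    rw [apL] at h
    rcases htok : apTok t s with _ | s₂
    · rw [htok] at h; simp at h
    · rw [htok] at h; simp only [Option.bind_some] at h
      have hmem' : SFGen.f i ∉ L := fun hc => hmem (List.mem_cons_of_mem t hc)
      have ht : t ≠ SFGen.f i := fun hc => hmem (by rw [hc]; exact List.mem_cons_self)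
      have h2 : s₂.2.1 i = s.2.1 i := by
        cases t with
        | e j =>
          simp only [apTok] at htok
          rcases hj : s.1 j with _ | _
          · rw [hj] at htok; simp at htok; rw [← htok]
          · rw [hj] at htok; simp at htok
        | f j =>
          have hji : j ≠ i := fun hc => ht (by rw [hc])
          simp only [apTok] at htok
          rcases hj : s.2.1 j with _ | _
          · rw [hj] at htok; simp at htok; rw [← htok]
            simp [Function.update_of_ne hji.symm]
          · rw [hj] at htok; simp at htok
        | K => simp only [apTok, Option.some_inj] at htok; rw [← htok]
      rw [ih hmem' h, h2]

lemma apL_untouch_l {L : List (SFGen d)} (hmem : SFGen.K ∉ L) :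
    ∀ {s s₁ : St d}, apL L s = some s₁ → s₁.2.2 = s.2.2 := by
  induction L with
  | nil => intro s s₁ h; simp only [apL, Option.some_inj] at h; rw [← h]
  | cons t L ih =>
    intro s s₁ h
    rw [apL] at h
    rcases htok : apTok t s with _ | s₂
    · rw [htok] at h; simp at h
    · rw [htok] at h; simp only [Option.bind_some] at h
      have hmem' : SFGen.K ∉ L := fun hc => hmem (List.mem_cons_of_mem t hc)
      have h2 : s₂.2.2 = s.2.2 := by
        cases t with
        | e j =>
          simp only [apTok] at htok
          rcases hj : s.1 j with _ | _
          · rw [hj] at htok; simp at htok; rw [← htok]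
          · rw [hj] at htok; simp at htok
        | f j =>
          simp only [apTok] at htok
          rcases hj : s.2.1 j with _ | _
          · rw [hj] at htok; simp at htok; rw [← htok]
          · rw [hj] at htok; simp at htok
        | K => exact absurd (List.mem_cons_self) hmem
      rw [ih hmem' h, h2]

end Tok

section TokMain

variable {d : ℕ}

lemma K_not_mem_TokM (mβ nβ : Fin d → Bool) : SFGen.K ∉ TokM mβ nβ := by
  intro h
  rw [TokM, List.mem_flatMap] at h
  obtain ⟨j, _, hj⟩ := h
  revert hj
  rcases mβ j <;> rcases nβ j <;> simp

lemma e_mem_TokM_iff {mβ nβ : Fin d → Bool} {i : Fin d} :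
    SFGen.e i ∈ TokM mβ nβ ↔ mβ i = false := by
  rw [TokM, List.mem_flatMap]
  constructor
  · rintro ⟨j, _, hj⟩
    revert hj
    rcases hm : mβ j <;> rcases hn : nβ j <;> simp <;> rintro rfl <;> exact hm
  · intro hm
    exact ⟨i, List.mem_finRange i, by simp [hm]⟩

lemma f_mem_TokM_iff {mβ nβ : Fin d → Bool} {i : Fin d} :
    SFGen.f i ∈ TokM mβ nβ ↔ nβ i = false := by
  rw [TokM, List.mem_flatMap]
  constructor
  · rintro ⟨j, _, hj⟩
    revert hj
    rcases hm : mβ j <;> rcases hn : nβ j <;> simp <;> rintro rfl <;> exact hn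
  · intro hn
    exact ⟨i, List.mem_finRange i, by simp [hn]⟩

lemma e_mem_Tok_iff {β : St d} {i : Fin d} :
    SFGen.e i ∈ Tok β ↔ β.1 i = false := by
  rw [Tok, List.mem_append, e_mem_TokM_iff]
  rcases β.2.2 <;> simp

lemma f_mem_Tok_iff {β : St d} {i : Fin d} :
    SFGen.f i ∈ Tok β ↔ β.2.1 i = false := by
  rw [Tok, List.mem_append, f_mem_TokM_iff]
  rcases β.2.2 <;> simp

lemma apTi_step (mβ nβ : Fin d → Bool) (i : Fin d) (s : St d)
    (hm : s.1 i = mβ i) (hn : s.2.1 i = nβ i) :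
    ∃ s₁ : St d,
      apL ((if mβ i then [] else [SFGen.e i]) ++ (if nβ i then [] else [SFGen.f i])) s
        = some s₁ ∧
      s₁.2.2 = s.2.2 ∧ s₁.1 i = true ∧ s₁.2.1 i = true ∧
      ∀ j, j ≠ i → s₁.1 j = s.1 j ∧ s₁.2.1 j = s.2.1 j := by
  rcases hmi : mβ i with _ | _ <;> rcases hni : nβ i with _ | _
  · refine ⟨(Function.update s.1 i true, Function.update s.2.1 i true, s.2.2), ?_, rfl, ?_, ?_, ?_⟩
    · rw [hmi] at hm; rw [hni] at hn
      simp [apL, apTok, hm, hn]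
    · simp
    · simp
    · intro j hj; simp [Function.update_of_ne hj]
  · refine ⟨(Function.update s.1 i true, s.2.1, s.2.2), ?_, rfl, ?_, ?_, ?_⟩
    · rw [hmi] at hm
      simp [apL, apTok, hm]
    · simp
    · rw [hni] at hn; simpa using hn
    · intro j hj; simp [Function.update_of_ne hj]
  · refine ⟨(s.1, Function.update s.2.1 i true, s.2.2), ?_, rfl, ?_, ?_, ?_⟩
    · rw [hni] at hn
      simp [apL, apTok, hn]
    · rw [hmi] at hm; simpa using hm
    · simp
    · intro j hj; simp [Function.update_of_ne hj]
  · refine ⟨s, ?_, rfl, ?_, ?_, ?_⟩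
    · simp [apL]
    · rw [hmi] at hm; simpa using hm
    · rw [hni] at hn; simpa using hn
    · intro j _; exact ⟨rfl, rfl⟩

lemma apL_TokM_self (mβ nβ : Fin d → Bool) :
    ∀ l : List (Fin d), l.Nodup → ∀ s : St d,
      (∀ i ∈ l, s.1 i = mβ i ∧ s.2.1 i = nβ i) →
      ∃ s' : St d,
        apL (l.flatMap fun i =>
          (if mβ i then [] else [SFGen.e i]) ++ (if nβ i then [] else [SFGen.f i])) s
          = some s' ∧
        s'.2.2 = s.2.2 ∧ (∀ j ∈ l, s'.1 j = true ∧ s'.2.1 j = true) ∧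
        (∀ j, j ∉ l → s'.1 j = s.1 j ∧ s'.2.1 j = s.2.1 j) := by
  intro l
  induction l with
  | nil =>
    intro _ s _
    exact ⟨s, by simp [apL], rfl, by simp, fun j _ => ⟨rfl, rfl⟩⟩
  | cons i l ih =>
    intro hnd s hs
    obtain ⟨hil, hnd'⟩ := List.nodup_cons.mp hnd
    obtain ⟨s₁, h1, h1l, h1m, h1n, h1off⟩ :=
      apTi_step mβ nβ i s (hs i (List.mem_cons_self)).1 (hs i (List.mem_cons_self)).2
    obtain ⟨s', h2, h2l, h2mem, h2off⟩ := ih hnd' s₁ (fun i' hi' => by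
      have hne : i' ≠ i := fun hc => hil (hc ▸ hi')
      rw [(h1off i' hne).1, (h1off i' hne).2]
      exact hs i' (List.mem_cons_of_mem _ hi'))
    refine ⟨s', ?_, by rw [h2l, h1l], ?_, ?_⟩
    · rw [List.flatMap_cons, apL_append, h1]
      simpa using h2
    · intro j hj
      rcases List.mem_cons.mp hj with rfl | hj'
      · exact ⟨apL_preserve_m h2 h1m, apL_preserve_n h2 h1n⟩
      · exact h2mem j hj'
    · intro j hj
      have hji : j ≠ i := fun hc => hj (hc ▸ List.mem_cons_self)
      have hjl : j ∉ l := fun hc => hj (List.mem_cons_of_mem _ hc)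
      rw [(h2off j hjl).1, (h2off j hjl).2, (h1off j hji).1, (h1off j hji).2]
      exact ⟨rfl, rfl⟩

/-- The "full" state, corresponding to the monomial `(∏ eᵢfᵢ)K`. -/
def fullSt (d : ℕ) : St d := ((fun _ => true), (fun _ => true), true)

lemma apL_Tok_self (β : St d) : apL (Tok β) β = some (fullSt d) := by
  obtain ⟨s', h1, h1l, h1mem, _⟩ :=
    apL_TokM_self β.1 β.2.1 (List.finRange d) (List.nodup_finRange d) β (fun i _ => ⟨rfl, rfl⟩)
  have hs'm : s'.1 = fun _ => true := funext fun j => (h1mem j (List.mem_finRange j)).1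
  have hs'n : s'.2.1 = fun _ => true := funext fun j => (h1mem j (List.mem_finRange j)).2
  rw [Tok, apL_append]
  rw [show TokM β.1 β.2.1 = (List.finRange d).flatMap fun i =>
    (if β.1 i then [] else [SFGen.e i]) ++ (if β.2.1 i then [] else [SFGen.f i]) from rfl, h1]
  simp only [Option.bind_some]
  rcases hb : β.2.2 with _ | _
  · rw [hb] at h1l
    simp only [Bool.false_eq_true, if_false, apL, apTok]
    rw [Option.bind_some]
    simp only [apL, Option.some_inj]
    rw [fullSt]
    ext1
    · rw [hs'm]
    · ext1
      · rw [hs'n]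
      · simp [h1l]
  · rw [hb] at h1l
    simp only [if_true, apL, Option.some_inj]
    rw [fullSt]
    ext1
    · rw [hs'm]
    · ext1
      · rw [hs'n]
      · rw [h1l]

lemma tok_self (β : St d) :
    ∃ c : ℂ, c ≠ 0 ∧
      monoOf d β * ((Tok β).map (g2a d)).prod = c • monoOf d (fullSt d) :=
  (mono_mul_toklist (Tok β) β).2 _ (apL_Tok_self β)

lemma tok_other {β α : St d} (hne : α ≠ β) {s' : St d}
    (h : apL (Tok β) α = some s') : s' ≠ fullSt d := by
  intro hfull
  apply hne
  have hm : α.1 = β.1 := funext fun i => by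
    rcases hb : β.1 i with _ | _
    · rcases ha : α.1 i with _ | _
      · rfl
      · have hmem : SFGen.e i ∈ Tok β := e_mem_Tok_iff.mpr hb
        rw [apL_none_of_e hmem ha] at h
        simp at h
    · have hmem : SFGen.e i ∉ Tok β := fun hc => by
        rw [e_mem_Tok_iff, hb] at hc; simp at hc
      have := apL_untouch_m hmem h
      rw [hfull] at this
      rw [← this]
      rfl
  have hn : α.2.1 = β.2.1 := funext fun i => by
    rcases hb : β.2.1 i with _ | _
    · rcases ha : α.2.1 i with _ | _
      · rfl
      · have hmem : SFGen.f i ∈ Tok β := f_mem_Tok_iff.mpr hb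
        rw [apL_none_of_f hmem ha] at h
        simp at h
    · have hmem : SFGen.f i ∉ Tok β := fun hc => by
        rw [f_mem_Tok_iff, hb] at hc; simp at hc
      have := apL_untouch_n hmem h
      rw [hfull] at this
      rw [← this]
      rfl
  have hl : α.2.2 = β.2.2 := by
    rw [Tok, apL_append] at h
    rcases hmid : apL (TokM β.1 β.2.1) α with _ | mid
    · rw [hmid] at h; simp at h
    · rw [hmid] at h
      simp only [Option.bind_some] at h
      have hmidl : mid.2.2 = α.2.2 := apL_untouch_l (K_not_mem_TokM _ _) hmid
      rcases hb : β.2.2 with _ | _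
      · rw [hb] at h
        simp only [Bool.false_eq_true, if_false, apL, apTok, Option.bind_some,
          Option.some_inj] at h
        rw [← h] at hfull
        have : (!mid.2.2) = true := congrArg (fun s : St d => s.2.2) hfull
        rw [hmidl] at this
        simp at this
        rw [this]
      · rw [hb] at h
        simp only [if_true, apL, Option.some_inj] at h
        rw [← h] at hfull
        have : mid.2.2 = true := congrArg (fun s : St d => s.2.2) hfull
        rw [hmidl] at this
        rw [this]
  exact Prod.ext hm (Prod.ext hn hl)

end TokMain

section Phi

variable {d : ℕ} (φ : SF d →ₗ[ℂ] ℂ)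
variable (hφval : ∀ (m n : Fin d → Bool) (ℓ : Bool),
  φ (SFmono d m n ℓ) =
    if m = (fun _ => true) ∧ n = (fun _ => true) ∧ ℓ = true then 1 else 0)

lemma sgn_one {m n : Fin d → Bool} {j : Fin d} (hm : m j = true) (hn : n j = true) :
    sgn m n j = 1 := by
  simp [sgn, hm, hn]

lemma sgnprod_take_one {m n : Fin d → Bool} {k : ℕ}
    (h : ∀ j : Fin d, (j : ℕ) < k → sgn m n j = 1) :
    ((((List.finRange d).take k).map (sgn m n)).prod) = 1 :=
  List.prod_eq_one fun x hx => by
    obtain ⟨j, hj, rfl⟩ := List.mem_map.mp hx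
    exact h j (mem_take_finRange hj)

lemma sgnprod_drop_one {m n : Fin d → Bool} {k : ℕ}
    (h : ∀ j : Fin d, k ≤ (j : ℕ) → sgn m n j = 1) :
    ((((List.finRange d).drop k).map (sgn m n)).prod) = 1 :=
  List.prod_eq_one fun x hx => by
    obtain ⟨j, hj, rfl⟩ := List.mem_map.mp hx
    exact h j (mem_drop_finRange hj)

lemma sgnprod_all_one {m n : Fin d → Bool}
    (h : ∀ j : Fin d, sgn m n j = 1) :
    (((List.finRange d).map (sgn m n)).prod) = 1 :=
  List.prod_eq_one fun x hx => by
    obtain ⟨j, _, rfl⟩ := List.mem_map.mp hx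
    exact h j

include hφval

lemma keyK (m n : Fin d → Bool) (ℓ : Bool) :
    φ (Kg d * SFmono d m n ℓ) = φ (SFmono d m n ℓ * Kg d) := by
  rw [K_mul_mono, mono_mul_K, map_smul, hφval]
  by_cases hC : m = (fun _ => true) ∧ n = (fun _ => true) ∧ (!ℓ) = true
  · rw [if_pos hC,
      sgnprod_all_one (fun j => sgn_one (congrFun hC.1 j) (congrFun hC.2.1 j))]
    simp
  · rw [if_neg hC]; simp

lemma keyE (i : Fin d) (m n : Fin d → Bool) (ℓ : Bool) :
    φ (eg d i * SFmono d m n ℓ) = φ (SFmono d m n ℓ * eg d i) := by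
  rcases hm : m i with _ | _
  · rw [e_mul_mono hm, mono_mul_e hm, map_smul, map_smul, hφval]
    by_cases hC : Function.update m i true = (fun _ => true) ∧ n = (fun _ => true) ∧ ℓ = true
    · have hmf := hC.1
      have hnf := hC.2.1
      have hlf := hC.2.2
      have hmj : ∀ j : Fin d, j ≠ i → m j = true := fun j hj => by
        have := congrFun hmf j
        rwa [Function.update_of_ne hj] at this
      have hnj : ∀ j, n j = true := fun j => congrFun hnf j
      have hTS : ((((List.finRange d).take (i : ℕ)).map (sgn m n)).prod) = 1 :=
        sgnprod_take_one fun j hjlt =>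
          sgn_one (hmj j (fun hc => by rw [hc] at hjlt; omega)) (hnj j)
      have hDS : ((((List.finRange d).drop ((i : ℕ) + 1)).map (sgn m n)).prod) = 1 :=
        sgnprod_drop_one fun j hjge =>
          sgn_one (hmj j (fun hc => by rw [hc] at hjge; omega)) (hnj j)
      rw [if_pos hC, hTS, hDS]
      simp [hlf, hnj i]
    · rw [if_neg hC]; simp
  · rw [e_mul_mono_zero hm, mono_mul_e_zero hm]

lemma keyF (i : Fin d) (m n : Fin d → Bool) (ℓ : Bool) :
    φ (fg d i * SFmono d m n ℓ) = φ (SFmono d m n ℓ * fg d i) := by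
  rcases hn : n i with _ | _
  · rw [f_mul_mono hn, mono_mul_f hn, map_smul, map_smul, hφval]
    by_cases hC : m = (fun _ => true) ∧ Function.update n i true = (fun _ => true) ∧ ℓ = true
    · have hmf := hC.1
      have hnf := hC.2.1
      have hlf := hC.2.2
      have hnj : ∀ j : Fin d, j ≠ i → n j = true := fun j hj => by
        have := congrFun hnf j
        rwa [Function.update_of_ne hj] at this
      have hmj : ∀ j, m j = true := fun j => congrFun hmf j
      have hTS : ((((List.finRange d).take (i : ℕ)).map (sgn m n)).prod) = 1 :=
        sgnprod_take_one fun j hjlt =>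
          sgn_one (hmj j) (hnj j (fun hc => by rw [hc] at hjlt; omega))
      have hDS : ((((List.finRange d).drop ((i : ℕ) + 1)).map (sgn m n)).prod) = 1 :=
        sgnprod_drop_one fun j hjge =>
          sgn_one (hmj j) (hnj j (fun hc => by rw [hc] at hjge; omega))
      rw [if_pos hC, hTS, hDS]
      simp [hlf, hmj i]
    · rw [if_neg hC]; simp
  · rw [f_mul_mono_zero hn, mono_mul_f_zero hn]

lemma sym_part : ∀ a b : SF d, φ (a * b) = φ (b * a) := by
  have keygen : ∀ (g : SFGen d) (y : SF d), φ (g2a d g * y) = φ (y * g2a d g) := by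
    intro g y
    have hy := W_top y
    refine Submodule.span_induction ?_ ?_ ?_ ?_ hy
    · rintro x ⟨s, rfl⟩
      cases g with
      | e i => exact keyE φ hφval i s.1 s.2.1 s.2.2
      | f i => exact keyF φ hφval i s.1 s.2.1 s.2.2
      | K => exact keyK φ hφval s.1 s.2.1 s.2.2
    · simp
    · intro x y _ _ hx hy'
      rw [mul_add, add_mul, map_add, map_add, hx, hy']
    · intro c x _ hx
      rw [mul_smul_comm, smul_mul_assoc, map_smul, map_smul, hx]
  intro a b
  let S : Subalgebra ℂ (SF d) :=
    { carrier := {x | ∀ y, φ (x * y) = φ (y * x)}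
      mul_mem' := fun {x y} hx hy z => by
        calc φ (x * y * z) = φ (x * (y * z)) := by rw [mul_assoc]
          _ = φ ((y * z) * x) := hx (y * z)
          _ = φ (y * (z * x)) := by rw [mul_assoc]
          _ = φ ((z * x) * y) := hy (z * x)
          _ = φ (z * (x * y)) := by rw [mul_assoc]
      add_mem' := fun {x y} hx hy z => by
        rw [add_mul, mul_add, map_add, map_add, hx z, hy z]
      algebraMap_mem' := fun c z => by rw [Algebra.commutes] }
  have hle : (⊤ : Subalgebra ℂ (SF d)) ≤ S := by
    refine le_of_eq_of_le (b := Algebra.adjoin ℂ (Set.range fun g : SFGen d => (RingQuot.mkAlgHom ℂ (SFRel d) (FreeAlgebra.ι ℂ g) : SF d))) adjoin_gens_top.symm ?_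
    apply Algebra.adjoin_le
    rintro z ⟨g, rfl⟩
    intro y
    cases g with
    | e i => exact keygen (SFGen.e i) y
    | f i => exact keygen (SFGen.f i) y
    | K => exact keygen SFGen.K y
  exact hle (Algebra.mem_top : a ∈ ⊤) b

lemma nondeg_part : ∀ a : SF d, (∀ b : SF d, φ (a * b) = 0) → a = 0 := by
  intro a h
  have haW : a ∈ Submodule.span ℂ (Set.range (monoOf d)) := W_top a
  obtain ⟨c, hc⟩ := Finsupp.mem_span_range_iff_exists_finsupp.mp haW
  have hphi_full : φ (monoOf d (fullSt d)) = 1 := by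
    rw [monoOf, hφval]
    rw [if_pos ⟨rfl, rfl, rfl⟩]
  have hczero : ∀ β : St d, c β = 0 := by
    intro β
    set b : SF d := ((Tok β).map (g2a d)).prod with hb
    obtain ⟨cβ, hcβ, hcβeq⟩ := tok_self β
    have h0 := h b
    rw [← hc, Finsupp.sum_mul, map_finsuppSum] at h0
    have hsum : (c.sum fun s r => φ ((r • monoOf d s) * b)) = c β * cβ := by
      rw [Finsupp.sum_eq_single β]
      · rw [smul_mul_assoc, map_smul, hcβeq, map_smul, hphi_full, smul_eq_mul,
          smul_eq_mul, mul_one]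
      · intro s _ hs
        rw [smul_mul_assoc, map_smul]
        rcases hap : apL (Tok β) s with _ | s'
        · rw [(mono_mul_toklist (Tok β) s).1 hap, map_zero, smul_zero]
        · obtain ⟨cs, _, hcs⟩ := (mono_mul_toklist (Tok β) s).2 s' hap
          rw [hcs, map_smul]
          have hs' : s' ≠ fullSt d := tok_other hs hap
          have : φ (monoOf d s') = 0 := by
            rw [monoOf, hφval, if_neg]
            rintro ⟨h1, h2, h3⟩
            exact hs' (Prod.ext h1 (Prod.ext h2 h3))
          rw [this]
          simp
      · intro _
        simp
    rw [hsum] at h0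
    rcases mul_eq_zero.mp h0 with h' | h'
    · exact h'
    · exact absurd h' hcβ
  rw [← hc]
  rw [Finsupp.sum]
  apply Finset.sum_eq_zero
  intro β _
  rw [hczero β, zero_smul]

end Phi


/-- The linear function `φ` on `P` which takes the value `1` on the monomial
`(∏ᵢ eᵢfᵢ)K` and `0` on all other basis monomials is symmetric, and the bilinear form
`(a,b) ↦ φ(ab)` is non-degenerate; i.e. `P` is a symmetric algebra with symmetrizing
form `φ`. -/
theorem sf_symmetric_algebra (d : ℕ) (φ : SF d →ₗ[ℂ] ℂ)
    (hφval : ∀ (m n : Fin d → Bool) (ℓ : Bool),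
      φ (SFmono d m n ℓ) =
        if m = (fun _ => true) ∧ n = (fun _ => true) ∧ ℓ = true then 1 else 0) :
    (∀ a b : SF d, φ (a * b) = φ (b * a)) ∧
    (∀ a : SF d, (∀ b : SF d, φ (a * b) = 0) → a = 0) := by
  exact ⟨sym_part φ hφval, nondeg_part φ hφval⟩
end

section
/- Let P be the algebra generated by e_i, f_i (1 ≤ i ≤ d) and K with relations K² = 1, all generators e_i, f_j mutually anticommuting, and K anticommuting with each e_i and f_i. Then the center Z(P) has as basis the set of monomials in the e_i, f_i of even length together with the single element (∏_{i=1}^d e_i f_i) K. In particular dim Z(P) = 2^{2d−1} + 1. -/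
set_option synthInstance.maxHeartbeats 400000

/-- The length of the monomial `∏ᵢ e iᵐⁱ f iⁿⁱ`. -/
def monoLen (d : ℕ) (m n : Fin d → Bool) : ℕ :=
  (Finset.univ.filter (fun i => m i = true)).card +
    (Finset.univ.filter (fun i => n i = true)).card

/-- Index set for the claimed basis of the center: even-length monomials in the `eᵢ, fᵢ`
together with `(∏ᵢ eᵢfᵢ)K`. -/
def CenterIdx (d : ℕ) : Type :=
  {p : (Fin d → Bool) × (Fin d → Bool) × Bool //
    (p.2.2 = false ∧ Even (monoLen d p.1 p.2.1)) ∨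
      p = (fun _ => true, fun _ => true, true)}

namespace SFC

open Finset Function

variable {d : ℕ}

/-! ### Basic relations in `SF d` -/

lemma eg_eg (i j : Fin d) : eg d i * eg d j = -(eg d j * eg d i) := by
  have h := RingQuot.mkAlgHom_rel ℂ (SFRel.ee i j); simp only [map_mul, map_neg] at h; exact h

lemma fg_fg (i j : Fin d) : fg d i * fg d j = -(fg d j * fg d i) := by
  have h := RingQuot.mkAlgHom_rel ℂ (SFRel.ff i j); simp only [map_mul, map_neg] at h; exact h

lemma eg_fg (i j : Fin d) : eg d i * fg d j = -(fg d j * eg d i) := by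
  have h := RingQuot.mkAlgHom_rel ℂ (SFRel.ef i j); simp only [map_mul, map_neg] at h; exact h

lemma fg_eg (i j : Fin d) : fg d i * eg d j = -(eg d j * fg d i) := by
  rw [eg_fg j i, neg_neg]

lemma Kg_eg (i : Fin d) : Kg d * eg d i = -(eg d i * Kg d) := by
  have h := RingQuot.mkAlgHom_rel ℂ (SFRel.Ke i); simp only [map_mul, map_neg] at h; exact h

lemma Kg_fg (i : Fin d) : Kg d * fg d i = -(fg d i * Kg d) := by
  have h := RingQuot.mkAlgHom_rel ℂ (SFRel.Kf i); simp only [map_mul, map_neg] at h; exact h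

lemma eg_Kg (i : Fin d) : eg d i * Kg d = -(Kg d * eg d i) := by rw [Kg_eg, neg_neg]

lemma fg_Kg (i : Fin d) : fg d i * Kg d = -(Kg d * fg d i) := by rw [Kg_fg, neg_neg]

lemma Kg_Kg : Kg d * Kg d = 1 := by
  have h := RingQuot.mkAlgHom_rel ℂ (SFRel.Ksq (d := d)); simp only [map_mul, map_one] at h; exact h

private lemma eq_zero_of_self_eq_neg {x : SF d} (h : x = -x) : x = 0 := by
  have h2 : (2 : ℂ) • x = 0 := by
    rw [two_smul ℂ x, add_eq_zero_iff_eq_neg]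
    exact h
  rcases smul_eq_zero.mp h2 with h | h
  · exact absurd h (by norm_num)
  · exact h

lemma eg_sq (i : Fin d) : eg d i * eg d i = 0 := eq_zero_of_self_eq_neg (eg_eg i i)

lemma fg_sq (i : Fin d) : fg d i * fg d i = 0 := eq_zero_of_self_eq_neg (fg_fg i i)

/-! ### Signs -/

/-- `(-1)^{#(support of c in s)}`. -/
noncomputable def sgn (c : Fin d → Bool) (s : Finset (Fin d)) : ℂ :=
  ∏ j ∈ s, (if c j then (-1 : ℂ) else 1)

lemma sgn_mul_self (c : Fin d → Bool) (s : Finset (Fin d)) : sgn c s * sgn c s = 1 := by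
  rw [sgn, ← Finset.prod_mul_distrib]
  exact Finset.prod_eq_one fun j _ => by rcases c j <;> norm_num

lemma sgn_ne_zero (c : Fin d → Bool) (s : Finset (Fin d)) : sgn c s ≠ 0 := by
  intro h
  have := sgn_mul_self c s
  rw [h, mul_zero] at this
  exact one_ne_zero this.symm

lemma sgn_eq_one (c : Fin d → Bool) (s : Finset (Fin d)) (h : ∀ j ∈ s, c j = false) :
    sgn c s = 1 :=
  Finset.prod_eq_one fun j hj => by rw [h j hj]; norm_num

lemma sgn_update_not_mem {c : Fin d → Bool} {s : Finset (Fin d)} {i : Fin d} (h : i ∉ s)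
    (v : Bool) : sgn (Function.update c i v) s = sgn c s := by
  refine Finset.prod_congr rfl fun j hj => ?_
  rw [Function.update_of_ne (by rintro rfl; exact h hj)]

lemma sgn_update_mem {c : Fin d → Bool} {s : Finset (Fin d)} {i : Fin d} (h : i ∈ s)
    (v : Bool) :
    sgn (Function.update c i v) s
      = ((if v then (-1 : ℂ) else 1) * (if c i then (-1 : ℂ) else 1)) * sgn c s := by
  have h1 : sgn (Function.update c i v) s
      = (if v then (-1 : ℂ) else 1) * ∏ j ∈ s \ {i}, (if c j then (-1 : ℂ) else 1) := by
    rw [sgn]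
    rw [Finset.prod_congr rfl (fun j _ => show (if Function.update c i v j then (-1:ℂ) else 1)
        = Function.update (fun j => if c j then (-1:ℂ) else 1) i (if v then -1 else 1) j from ?_)]
    · exact Finset.prod_update_of_mem h _ _
    · rcases eq_or_ne j i with rfl | hj
      · simp
      · rw [Function.update_of_ne hj, Function.update_of_ne hj]
  have h2 : sgn c s
      = (if c i then (-1 : ℂ) else 1) * ∏ j ∈ s \ {i}, (if c j then (-1 : ℂ) else 1) :=
    Finset.prod_eq_mul_prod_sdiff_singleton_of_mem h _
  rw [h1, h2]
  rcases c i <;> rcases v <;> norm_num <;> ring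

/-! ### Blocks and list machinery -/

/-- The `i`-th block `e iᵐⁱ f iⁿⁱ`. -/
noncomputable def blk (m n : Fin d → Bool) (i : Fin d) : SF d :=
  (if m i then eg d i else 1) * (if n i then fg d i else 1)

/-- Sign picked up when commuting past a block. -/
noncomputable def bsgn (m n : Fin d → Bool) (j : Fin d) : ℂ :=
  (if m j then (-1 : ℂ) else 1) * (if n j then (-1 : ℂ) else 1)

lemma bsgn_mul_self (m n : Fin d → Bool) (j : Fin d) : bsgn m n j * bsgn m n j = 1 := by
  rw [bsgn]; rcases m j <;> rcases n j <;> norm_num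

lemma SFmono_eq (m n : Fin d → Bool) (ℓ : Bool) :
    SFmono d m n ℓ = ((List.finRange d).map (blk m n)).prod * (if ℓ then Kg d else 1) := by
  rw [SFmono, List.ofFn_eq_map]; rfl

lemma comm_of_two_anti {x y z : SF d} (h1 : x * y = -(y * x)) (h2 : x * z = -(z * x)) :
    x * (y * z) = y * z * x := by
  rw [← mul_assoc, h1, neg_mul, mul_assoc, h2, mul_neg, neg_neg, mul_assoc]

lemma eg_comm_blk (i j : Fin d) (m n : Fin d → Bool) :
    eg d i * blk m n j = bsgn m n j • (blk m n j * eg d i) := by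
  rcases hm : m j <;> rcases hn : n j
  · simp [blk, bsgn, hm, hn]
  · simp only [blk, bsgn, hm, hn, Bool.false_eq_true, if_false, if_true, one_mul, mul_one]
    simp [eg_fg i j]
  · simp only [blk, bsgn, hm, hn, Bool.false_eq_true, if_false, if_true, one_mul, mul_one]
    simp [eg_eg i j]
  · simp only [blk, bsgn, hm, hn, if_true, one_mul, mul_one]
    norm_num
    exact comm_of_two_anti (eg_eg i j) (eg_fg i j)

lemma fg_comm_blk (i j : Fin d) (m n : Fin d → Bool) :
    fg d i * blk m n j = bsgn m n j • (blk m n j * fg d i) := by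
  rcases hm : m j <;> rcases hn : n j
  · simp [blk, bsgn, hm, hn]
  · simp only [blk, bsgn, hm, hn, Bool.false_eq_true, if_false, if_true, one_mul, mul_one]
    simp [fg_fg i j]
  · simp only [blk, bsgn, hm, hn, Bool.false_eq_true, if_false, if_true, one_mul, mul_one]
    simp [fg_eg i j]
  · simp only [blk, bsgn, hm, hn, if_true, one_mul, mul_one]
    norm_num
    exact comm_of_two_anti (fg_eg i j) (fg_fg i j)

lemma Kg_comm_blk (j : Fin d) (m n : Fin d → Bool) :
    Kg d * blk m n j = bsgn m n j • (blk m n j * Kg d) := by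
  rcases hm : m j <;> rcases hn : n j
  · simp [blk, bsgn, hm, hn]
  · simp only [blk, bsgn, hm, hn, Bool.false_eq_true, if_false, if_true, one_mul, mul_one]
    simp [Kg_fg j]
  · simp only [blk, bsgn, hm, hn, Bool.false_eq_true, if_false, if_true, one_mul, mul_one]
    simp [Kg_eg j]
  · simp only [blk, bsgn, hm, hn, if_true, one_mul, mul_one]
    norm_num
    exact comm_of_two_anti (Kg_eg j) (Kg_fg j)

/-- commuting an element from the left through a list product. -/
lemma mul_list_prod (g : SF d) (b : Fin d → SF d) (σ : Fin d → ℂ) :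
    ∀ L : List (Fin d), (∀ j ∈ L, g * b j = σ j • (b j * g)) →
      g * (L.map b).prod = (L.map σ).prod • ((L.map b).prod * g)
  | [], _ => by simp
  | j :: T, h => by
    have ih := mul_list_prod g b σ T (fun k hk => h k (List.mem_cons_of_mem _ hk))
    simp only [List.map_cons, List.prod_cons]
    rw [← mul_assoc, h j (List.mem_cons_self), smul_mul_assoc, mul_assoc, ih,
      mul_smul_comm, smul_smul, mul_assoc]

lemma prod_map_sq (σ : Fin d → ℂ) (hσ : ∀ j, σ j * σ j = 1) :
    ∀ L : List (Fin d), (L.map σ).prod * (L.map σ).prod = 1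
  | [] => by simp
  | j :: T => by
    simp only [List.map_cons, List.prod_cons]
    have : σ j * (T.map σ).prod * (σ j * (T.map σ).prod)
        = (σ j * σ j) * ((T.map σ).prod * (T.map σ).prod) := by ring
    rw [this, hσ j, prod_map_sq σ hσ T, one_mul]

/-- commuting an element from the right through a list product. -/
lemma list_prod_mul (g : SF d) (b : Fin d → SF d) (σ : Fin d → ℂ)
    (hσ : ∀ j, σ j * σ j = 1)
    (L : List (Fin d)) (h : ∀ j ∈ L, g * b j = σ j • (b j * g)) :
    (L.map b).prod * g = (L.map σ).prod • (g * (L.map b).prod) := by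
  rw [mul_list_prod g b σ L h, smul_smul, prod_map_sq σ hσ L, one_smul]

/-- Splitting `finRange d` at an index. -/
lemma split_at (i : Fin d) :
    ∃ L₁ L₂ : List (Fin d), List.finRange d = L₁ ++ i :: L₂ ∧
      (∀ j ∈ L₁, j < i) ∧ (∀ j ∈ L₂, i < j) ∧
      L₁.Nodup ∧ L₂.Nodup ∧ L₁.toFinset = Iio i ∧ L₂.toFinset = Ioi i := by
  obtain ⟨L₁, L₂, hsplit⟩ := List.append_of_mem (List.mem_finRange i)
  have hp := List.pairwise_lt_finRange d
  rw [hsplit, List.pairwise_append] at hp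
  obtain ⟨hp1, hp2, hcross⟩ := hp
  rw [List.pairwise_cons] at hp2
  obtain ⟨hiL₂, hp2⟩ := hp2
  have h1 : ∀ j ∈ L₁, j < i := fun j hj => hcross j hj i (List.mem_cons_self)
  have hnd1 : L₁.Nodup := hp1.imp ne_of_lt
  have hnd2 : L₂.Nodup := hp2.imp ne_of_lt
  refine ⟨L₁, L₂, hsplit, h1, hiL₂, hnd1, hnd2, ?_, ?_⟩
  · ext j
    simp only [List.mem_toFinset, Finset.mem_Iio]
    constructor
    · exact h1 j
    · intro hj
      have : j ∈ List.finRange d := List.mem_finRange j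
      rw [hsplit] at this
      rcases List.mem_append.mp this with h | h
      · exact h
      · rcases List.mem_cons.mp h with rfl | h
        · exact absurd hj (lt_irrefl _)
        · exact absurd (hiL₂ j h) (lt_asymm hj)
  · ext j
    simp only [List.mem_toFinset, Finset.mem_Ioi]
    constructor
    · exact hiL₂ j
    · intro hj
      have : j ∈ List.finRange d := List.mem_finRange j
      rw [hsplit] at this
      rcases List.mem_append.mp this with h | h
      · exact absurd (h1 j h) (lt_asymm hj)
      · rcases List.mem_cons.mp h with rfl | h
        · exact absurd hj (lt_irrefl _)
        · exact h

lemma prod_map_bsgn {L : List (Fin d)} (hnd : L.Nodup) {s : Finset (Fin d)}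
    (hs : L.toFinset = s) (m n : Fin d → Bool) :
    (L.map (bsgn m n)).prod = sgn m s * sgn n s := by
  rw [← List.prod_toFinset _ hnd, hs, sgn, sgn, ← Finset.prod_mul_distrib]
  rfl

/-! ### The `K`-term -/

/-- `K^ℓ`. -/
noncomputable def kt (d : ℕ) (ℓ : Bool) : SF d := if ℓ then Kg d else 1

lemma kt_mul_kg (ℓ : Bool) : kt d ℓ * Kg d = kt d (!ℓ) := by
  rcases ℓ <;> simp [kt, Kg_Kg]

lemma kg_mul_kt (ℓ : Bool) : Kg d * kt d ℓ = kt d (!ℓ) := by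
  rcases ℓ <;> simp [kt, Kg_Kg]

lemma kt_mul_eg (ℓ : Bool) (i : Fin d) :
    kt d ℓ * eg d i = (if ℓ then (-1 : ℂ) else 1) • (eg d i * kt d ℓ) := by
  rcases ℓ <;> simp [kt, Kg_eg i]

lemma kt_mul_fg (ℓ : Bool) (i : Fin d) :
    kt d ℓ * fg d i = (if ℓ then (-1 : ℂ) else 1) • (fg d i * kt d ℓ) := by
  rcases ℓ <;> simp [kt, Kg_fg i]

/-! ### Block self-multiplication -/

lemma blk_update_ne {i j : Fin d} (hij : j ≠ i) (m n : Fin d → Bool) (v : Bool) :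
    blk (Function.update m i v) n j = blk m n j := by
  rw [blk, blk, Function.update_of_ne hij]

lemma blk_update_ne' {i j : Fin d} (hij : j ≠ i) (m n : Fin d → Bool) (v : Bool) :
    blk m (Function.update n i v) j = blk m n j := by
  rw [blk, blk, Function.update_of_ne hij]

lemma eg_mul_blk_self (m n : Fin d → Bool) (i : Fin d) :
    eg d i * blk m n i = if m i then 0 else blk (Function.update m i true) n i := by
  rcases hm : m i
  · simp [blk, hm, Function.update_self]
  · simp only [blk, hm, if_true, ite_true]
    rw [← mul_assoc, eg_sq, zero_mul]

lemma fg_mul_blk_self (m n : Fin d → Bool) (i : Fin d) :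
    fg d i * blk m n i
      = if n i then 0
        else (if m i then (-1 : ℂ) else 1) • blk m (Function.update n i true) i := by
  rcases hn : n i
  · rcases hm : m i
    · simp [blk, hm, hn, Function.update_self]
    · simp only [blk, hm, hn, Bool.false_eq_true, if_false, if_true, mul_one,
        Function.update_self, ite_true, ite_false]
      rw [fg_eg i i]
      simp
  · rcases hm : m i
    · simp only [blk, hm, hn, Bool.false_eq_true, if_false, if_true, one_mul, ite_true,
        ite_false]
      rw [fg_sq]
    · simp only [blk, hm, hn, if_true, ite_true]
      rw [← mul_assoc, fg_eg i i, neg_mul, mul_assoc, fg_sq, mul_zero, neg_zero]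

lemma blk_mul_eg_self (m n : Fin d → Bool) (i : Fin d) :
    blk m n i * eg d i
      = if m i then 0
        else (if n i then (-1 : ℂ) else 1) • blk (Function.update m i true) n i := by
  rcases hm : m i <;> rcases hn : n i
  · simp [blk, hm, hn, Function.update_self]
  · simp only [blk, hm, hn, Bool.false_eq_true, if_false, if_true, one_mul,
      Function.update_self, ite_true, ite_false]
    rw [fg_eg i i]
    simp
  · simp only [blk, hm, hn, Bool.false_eq_true, if_false, if_true, mul_one, ite_true, ite_false]
    rw [eg_sq]
  · simp only [blk, hm, hn, if_true, ite_true]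
    rw [mul_assoc, fg_eg i i, mul_neg, ← mul_assoc, eg_sq, zero_mul, neg_zero]

lemma blk_mul_fg_self (m n : Fin d → Bool) (i : Fin d) :
    blk m n i * fg d i = if n i then 0 else blk m (Function.update n i true) i := by
  rcases hn : n i
  · simp [blk, hn, Function.update_self, mul_assoc]
  · simp only [blk, hn, if_true, ite_true]
    rw [mul_assoc, fg_sq, mul_zero]

/-! ### Assembled form of `SFmono` -/

/-- left-associated split form of a monomial. -/
lemma SFmono_split (m n : Fin d → Bool) (ℓ : Bool) {i : Fin d} {L₁ L₂ : List (Fin d)}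
    (hsplit : List.finRange d = L₁ ++ i :: L₂) :
    SFmono d m n ℓ
      = (((L₁.map (blk m n)).prod * blk m n i) * (L₂.map (blk m n)).prod) * kt d ℓ := by
  rw [SFmono_eq, hsplit]
  simp [List.prod_append, mul_assoc, kt]

/-! ### Left multiplication by generators -/

lemma left_mul_eg (i : Fin d) (m n : Fin d → Bool) (ℓ : Bool) :
    eg d i * SFmono d m n ℓ
      = (if m i then 0 else sgn m (Iio i) * sgn n (Iio i)) •
          SFmono d (Function.update m i true) n ℓ := by
  obtain ⟨L₁, L₂, hsplit, h1, h2, hnd1, hnd2, hfs1, hfs2⟩ := split_at i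
  have hM1 : L₁.map (blk (Function.update m i true) n) = L₁.map (blk m n) :=
    List.map_congr_left fun j hj => blk_update_ne (ne_of_lt (h1 j hj)) m n true
  have hM2 : L₂.map (blk (Function.update m i true) n) = L₂.map (blk m n) :=
    List.map_congr_left fun j hj => blk_update_ne (ne_of_gt (h2 j hj)) m n true
  have hcomm : eg d i * (L₁.map (blk m n)).prod
      = (sgn m (Iio i) * sgn n (Iio i)) • ((L₁.map (blk m n)).prod * eg d i) := by
    rw [mul_list_prod (eg d i) (blk m n) (bsgn m n) L₁ (fun j _ => eg_comm_blk i j m n),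
      prod_map_bsgn hnd1 hfs1]
  rw [SFmono_split m n ℓ hsplit, SFmono_split (Function.update m i true) n ℓ hsplit, hM1, hM2,
    ← mul_assoc, ← mul_assoc, ← mul_assoc, hcomm]
  simp only [smul_mul_assoc]
  rw [mul_assoc ((L₁.map (blk m n)).prod) (eg d i) (blk m n i), eg_mul_blk_self m n i]
  rcases hm : m i <;> simp [hm, mul_assoc]

lemma left_mul_fg (i : Fin d) (m n : Fin d → Bool) (ℓ : Bool) :
    fg d i * SFmono d m n ℓ
      = (if n i then 0 else (if m i then (-1 : ℂ) else 1) * (sgn m (Iio i) * sgn n (Iio i))) •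
          SFmono d m (Function.update n i true) ℓ := by
  obtain ⟨L₁, L₂, hsplit, h1, h2, hnd1, hnd2, hfs1, hfs2⟩ := split_at i
  have hM1 : L₁.map (blk m (Function.update n i true)) = L₁.map (blk m n) :=
    List.map_congr_left fun j hj => blk_update_ne' (ne_of_lt (h1 j hj)) m n true
  have hM2 : L₂.map (blk m (Function.update n i true)) = L₂.map (blk m n) :=
    List.map_congr_left fun j hj => blk_update_ne' (ne_of_gt (h2 j hj)) m n true
  have hcomm : fg d i * (L₁.map (blk m n)).prod
      = (sgn m (Iio i) * sgn n (Iio i)) • ((L₁.map (blk m n)).prod * fg d i) := by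
    rw [mul_list_prod (fg d i) (blk m n) (bsgn m n) L₁ (fun j _ => fg_comm_blk i j m n),
      prod_map_bsgn hnd1 hfs1]
  rw [SFmono_split m n ℓ hsplit, SFmono_split m (Function.update n i true) ℓ hsplit, hM1, hM2,
    ← mul_assoc, ← mul_assoc, ← mul_assoc, hcomm]
  simp only [smul_mul_assoc]
  rw [mul_assoc ((L₁.map (blk m n)).prod) (fg d i) (blk m n i), fg_mul_blk_self m n i]
  rcases hn : n i <;> rcases hm : m i <;> simp [hm, hn, mul_assoc, smul_smul] <;>
    first
      | rfl
      | (rw [← smul_assoc]; congr 1; ring)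

lemma left_mul_Kg (m n : Fin d → Bool) (ℓ : Bool) :
    Kg d * SFmono d m n ℓ = (sgn m univ * sgn n univ) • SFmono d m n (!ℓ) := by
  have hcomm : Kg d * ((List.finRange d).map (blk m n)).prod
      = (sgn m univ * sgn n univ) • (((List.finRange d).map (blk m n)).prod * Kg d) := by
    rw [mul_list_prod (Kg d) (blk m n) (bsgn m n) _ (fun j _ => Kg_comm_blk j m n),
      prod_map_bsgn (List.nodup_finRange d) (List.toFinset_finRange d)]
  have h1 : SFmono d m n ℓ = ((List.finRange d).map (blk m n)).prod * kt d ℓ := SFmono_eq m n ℓ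
  have h2 : SFmono d m n (!ℓ) = ((List.finRange d).map (blk m n)).prod * kt d (!ℓ) :=
    SFmono_eq m n (!ℓ)
  rw [h1, h2, ← mul_assoc, hcomm]
  simp only [smul_mul_assoc]
  rw [mul_assoc, kg_mul_kt]

/-! ### Right multiplication by generators -/

lemma right_mul_Kg (m n : Fin d → Bool) (ℓ : Bool) :
    SFmono d m n ℓ * Kg d = SFmono d m n (!ℓ) := by
  rw [SFmono_eq m n ℓ, SFmono_eq m n (!ℓ), mul_assoc]
  congr 1
  exact kt_mul_kg ℓ

lemma right_mul_eg (i : Fin d) (m n : Fin d → Bool) (ℓ : Bool) :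
    SFmono d m n ℓ * eg d i
      = (if m i then 0
          else (if ℓ then (-1 : ℂ) else 1) * (if n i then (-1 : ℂ) else 1) *
            (sgn m (Ioi i) * sgn n (Ioi i))) •
          SFmono d (Function.update m i true) n ℓ := by
  obtain ⟨L₁, L₂, hsplit, h1, h2, hnd1, hnd2, hfs1, hfs2⟩ := split_at i
  have hM1 : L₁.map (blk (Function.update m i true) n) = L₁.map (blk m n) :=
    List.map_congr_left fun j hj => blk_update_ne (ne_of_lt (h1 j hj)) m n true
  have hM2 : L₂.map (blk (Function.update m i true) n) = L₂.map (blk m n) :=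
    List.map_congr_left fun j hj => blk_update_ne (ne_of_gt (h2 j hj)) m n true
  have hcomm : (L₂.map (blk m n)).prod * eg d i
      = (sgn m (Ioi i) * sgn n (Ioi i)) • (eg d i * (L₂.map (blk m n)).prod) := by
    rw [list_prod_mul (eg d i) (blk m n) (bsgn m n) (bsgn_mul_self m n) L₂
      (fun j _ => eg_comm_blk i j m n), prod_map_bsgn hnd2 hfs2]
  rw [SFmono_split m n ℓ hsplit, SFmono_split (Function.update m i true) n ℓ hsplit, hM1, hM2,
    mul_assoc _ (kt d ℓ) (eg d i), kt_mul_eg, mul_smul_comm, ← mul_assoc,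
    mul_assoc ((L₁.map (blk m n)).prod * blk m n i) _ (eg d i), hcomm, mul_smul_comm,
    ← mul_assoc, mul_assoc ((L₁.map (blk m n)).prod) (blk m n i) (eg d i), blk_mul_eg_self m n i]
  rcases hm : m i <;> rcases hn : n i <;> rcases ℓ <;>
    simp [hm, hn, mul_assoc, smul_smul] <;>
    first
      | rfl
      | (rw [← smul_assoc]; congr 1; ring)
      | (congr 1; ring)

lemma right_mul_fg (i : Fin d) (m n : Fin d → Bool) (ℓ : Bool) :
    SFmono d m n ℓ * fg d i
      = (if n i then 0
          else (if ℓ then (-1 : ℂ) else 1) * (sgn m (Ioi i) * sgn n (Ioi i))) •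
          SFmono d m (Function.update n i true) ℓ := by
  obtain ⟨L₁, L₂, hsplit, h1, h2, hnd1, hnd2, hfs1, hfs2⟩ := split_at i
  have hM1 : L₁.map (blk m (Function.update n i true)) = L₁.map (blk m n) :=
    List.map_congr_left fun j hj => blk_update_ne' (ne_of_lt (h1 j hj)) m n true
  have hM2 : L₂.map (blk m (Function.update n i true)) = L₂.map (blk m n) :=
    List.map_congr_left fun j hj => blk_update_ne' (ne_of_gt (h2 j hj)) m n true
  have hcomm : (L₂.map (blk m n)).prod * fg d i
      = (sgn m (Ioi i) * sgn n (Ioi i)) • (fg d i * (L₂.map (blk m n)).prod) := by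
    rw [list_prod_mul (fg d i) (blk m n) (bsgn m n) (bsgn_mul_self m n) L₂
      (fun j _ => fg_comm_blk i j m n), prod_map_bsgn hnd2 hfs2]
  rw [SFmono_split m n ℓ hsplit, SFmono_split m (Function.update n i true) ℓ hsplit, hM1, hM2,
    mul_assoc _ (kt d ℓ) (fg d i), kt_mul_fg, mul_smul_comm, ← mul_assoc,
    mul_assoc ((L₁.map (blk m n)).prod * blk m n i) _ (fg d i), hcomm, mul_smul_comm,
    ← mul_assoc, mul_assoc ((L₁.map (blk m n)).prod) (blk m n i) (fg d i), blk_mul_fg_self m n i]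
  rcases hn : n i <;> rcases ℓ <;>
    simp [hn, mul_assoc, smul_smul] <;>
    first
      | rfl
      | (rw [← smul_assoc]; congr 1; ring)
      | (congr 1; ring)

/-! ### The left regular representation -/

/-- Index/configuration type. -/
abbrev Idx (d : ℕ) := (Fin d → Bool) × (Fin d → Bool) × Bool

/-- Representation space. -/
abbrev V (d : ℕ) := Idx d → ℂ

/-- Creation operator for `e i`. -/
noncomputable def Eop (i : Fin d) : V d →ₗ[ℂ] V d where
  toFun x := fun b =>
    if b.1 i then sgn b.1 (Iio i) * sgn b.2.1 (Iio i) *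
      x (Function.update b.1 i false, b.2.1, b.2.2) else 0
  map_add' x y := by funext b; by_cases hb : b.1 i <;> simp [hb] <;> ring
  map_smul' a x := by funext b; by_cases hb : b.1 i <;> simp [hb] <;> ring

/-- Creation operator for `f i`. -/
noncomputable def Fop (i : Fin d) : V d →ₗ[ℂ] V d where
  toFun x := fun b =>
    if b.2.1 i then (if b.1 i then (-1 : ℂ) else 1) * (sgn b.1 (Iio i) * sgn b.2.1 (Iio i)) *
      x (b.1, Function.update b.2.1 i false, b.2.2) else 0
  map_add' x y := by
    funext b; by_cases hb : b.2.1 i <;> by_cases hm : b.1 i <;> simp [hb, hm] <;> ring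
  map_smul' a x := by
    funext b; by_cases hb : b.2.1 i <;> by_cases hm : b.1 i <;> simp [hb, hm] <;> ring

/-- Operator for `K`. -/
noncomputable def Kop : V d →ₗ[ℂ] V d where
  toFun x := fun b => sgn b.1 univ * sgn b.2.1 univ * x (b.1, b.2.1, !b.2.2)
  map_add' x y := by funext b; simp; ring
  map_smul' a x := by funext b; simp; ring

lemma Eop_apply (i : Fin d) (x : V d) (b : Idx d) :
    Eop i x b = if b.1 i then sgn b.1 (Iio i) * sgn b.2.1 (Iio i) *
      x (Function.update b.1 i false, b.2.1, b.2.2) else 0 := rfl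

lemma Fop_apply (i : Fin d) (x : V d) (b : Idx d) :
    Fop i x b = if b.2.1 i then (if b.1 i then (-1 : ℂ) else 1) *
      (sgn b.1 (Iio i) * sgn b.2.1 (Iio i)) *
      x (b.1, Function.update b.2.1 i false, b.2.2) else 0 := rfl

lemma Kop_apply (x : V d) (b : Idx d) :
    Kop x b = sgn b.1 univ * sgn b.2.1 univ * x (b.1, b.2.1, !b.2.2) := rfl

/-! Operator relations. -/

lemma Eop_Eop (i j : Fin d) (x : V d) (b : Idx d) :
    Eop i (Eop j x) b = -(Eop j (Eop i x) b) := by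
  obtain ⟨m, n, ℓ⟩ := b
  rcases eq_or_ne i j with rfl | hij
  · simp only [Eop_apply, Function.update_self]
    rcases hi : m i <;> simp
  · simp only [Eop_apply, Function.update_of_ne hij.symm, Function.update_of_ne hij]
    rcases hi : m i <;> rcases hj : m j <;> simp only [Bool.false_eq_true, if_false, if_true,
      mul_zero, neg_zero, ite_true, ite_false]
    · rw [Function.update_comm hij]
      rcases lt_or_gt_of_ne hij with hlt | hlt
      · rw [sgn_update_mem (mem_Iio.mpr hlt) false, hi,
          sgn_update_not_mem (fun hmem => absurd (mem_Iio.mp hmem) (not_lt.mpr hlt.le)) false]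
        simp only [if_true, Bool.false_eq_true, if_false]
        ring
      · rw [sgn_update_mem (mem_Iio.mpr hlt) false, hj,
          sgn_update_not_mem (fun hmem => absurd (mem_Iio.mp hmem) (not_lt.mpr hlt.le)) false]
        simp only [if_true, Bool.false_eq_true, if_false]
        ring

lemma Fop_Fop (i j : Fin d) (x : V d) (b : Idx d) :
    Fop i (Fop j x) b = -(Fop j (Fop i x) b) := by
  obtain ⟨m, n, ℓ⟩ := b
  rcases eq_or_ne i j with rfl | hij
  · simp only [Fop_apply, Function.update_self]
    rcases hi : n i <;> simp
  · simp only [Fop_apply, Function.update_of_ne hij.symm, Function.update_of_ne hij]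
    rcases hi : n i <;> rcases hj : n j <;> simp only [Bool.false_eq_true, if_false, if_true,
      mul_zero, neg_zero, ite_true, ite_false]
    · rw [Function.update_comm hij]
      rcases lt_or_gt_of_ne hij with hlt | hlt
      · rw [sgn_update_mem (mem_Iio.mpr hlt) false, hi,
          sgn_update_not_mem (fun hmem => absurd (mem_Iio.mp hmem) (not_lt.mpr hlt.le)) false]
        simp only [if_true, Bool.false_eq_true, if_false]
        ring
      · rw [sgn_update_mem (mem_Iio.mpr hlt) false, hj,
          sgn_update_not_mem (fun hmem => absurd (mem_Iio.mp hmem) (not_lt.mpr hlt.le)) false]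
        simp only [if_true, Bool.false_eq_true, if_false]
        ring

lemma Eop_Fop (i j : Fin d) (x : V d) (b : Idx d) :
    Eop i (Fop j x) b = -(Fop j (Eop i x) b) := by
  obtain ⟨m, n, ℓ⟩ := b
  rcases eq_or_ne i j with rfl | hij
  · simp only [Eop_apply, Fop_apply, Function.update_self]
    by_cases hn : n i = true
    · by_cases hi : m i = true
      · rw [sgn_update_not_mem (by simp) false, sgn_update_not_mem (by simp) false]
        simp only [hi, hn, reduceIte, Bool.false_eq_true]
        ring
      · simp [hi]
    · simp [hn]
  · simp only [Eop_apply, Fop_apply, Function.update_of_ne hij.symm, Function.update_of_ne hij]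
    rcases hi : m i <;> rcases hj : n j <;> simp only [Bool.false_eq_true, if_false, if_true,
      mul_zero, neg_zero, zero_mul, ite_true, ite_false]
    rcases lt_or_gt_of_ne hij with hlt | hlt
    · rw [sgn_update_mem (mem_Iio.mpr hlt) false, hi,
        sgn_update_not_mem (fun hmem => absurd (mem_Iio.mp hmem) (not_lt.mpr hlt.le)) false]
      simp only [if_true, Bool.false_eq_true, if_false]
      ring
    · rw [sgn_update_mem (mem_Iio.mpr hlt) false, hj,
        sgn_update_not_mem (fun hmem => absurd (mem_Iio.mp hmem) (not_lt.mpr hlt.le)) false]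
      simp only [if_true, Bool.false_eq_true, if_false]
      ring

lemma Kop_Eop (i : Fin d) (x : V d) (b : Idx d) :
    Kop (Eop i x) b = -(Eop i (Kop x) b) := by
  obtain ⟨m, n, ℓ⟩ := b
  simp only [Kop_apply, Eop_apply]
  by_cases hi : m i = true <;> simp only [hi, Bool.false_eq_true, if_false, if_true, mul_zero, neg_zero,
    ite_true, ite_false]
  rw [sgn_update_mem (mem_univ i) false, hi]
  simp only [reduceIte, Bool.false_eq_true]
  ring

lemma Kop_Fop (i : Fin d) (x : V d) (b : Idx d) :
    Kop (Fop i x) b = -(Fop i (Kop x) b) := by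
  obtain ⟨m, n, ℓ⟩ := b
  simp only [Kop_apply, Fop_apply]
  by_cases hi : n i = true <;> simp only [hi, Bool.false_eq_true, if_false, if_true, mul_zero, neg_zero,
    ite_true, ite_false]
  rw [sgn_update_mem (mem_univ i) false, hi]
  simp only [reduceIte, Bool.false_eq_true]
  ring

lemma Kop_Kop (x : V d) (b : Idx d) : Kop (Kop x) b = x b := by
  obtain ⟨m, n, ℓ⟩ := b
  simp only [Kop_apply, Bool.not_not]
  rw [show sgn m univ * sgn n univ * (sgn m univ * sgn n univ * x (m, n, ℓ))
      = (sgn m univ * sgn m univ) * ((sgn n univ * sgn n univ) * x (m, n, ℓ)) from by ring,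
    sgn_mul_self, sgn_mul_self, one_mul, one_mul]

/-- Generator assignments. -/
noncomputable def genOp : SFGen d → Module.End ℂ (V d)
  | .e i => Eop i
  | .f i => Fop i
  | .K => Kop

/-- The representation of `SF d` on `V d`. -/
noncomputable def rep : SF d →ₐ[ℂ] Module.End ℂ (V d) :=
  RingQuot.liftAlgHom ℂ ⟨FreeAlgebra.lift ℂ genOp, by
    intro x y h
    induction h with
    | Ksq => refine LinearMap.ext fun x => funext fun b => ?_
             simpa [FreeAlgebra.lift_ι_apply, genOp, Module.End.mul_apply,
               Module.End.one_apply] using Kop_Kop x b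
    | ee i j => refine LinearMap.ext fun x => funext fun b => ?_
                simpa [FreeAlgebra.lift_ι_apply, genOp, Module.End.mul_apply]
                  using Eop_Eop i j x b
    | ff i j => refine LinearMap.ext fun x => funext fun b => ?_
                simpa [FreeAlgebra.lift_ι_apply, genOp, Module.End.mul_apply]
                  using Fop_Fop i j x b
    | ef i j => refine LinearMap.ext fun x => funext fun b => ?_
                simpa [FreeAlgebra.lift_ι_apply, genOp, Module.End.mul_apply]
                  using Eop_Fop i j x b
    | Ke i => refine LinearMap.ext fun x => funext fun b => ?_
              simpa [FreeAlgebra.lift_ι_apply, genOp, Module.End.mul_apply]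
                using Kop_Eop i x b
    | Kf i => refine LinearMap.ext fun x => funext fun b => ?_
              simpa [FreeAlgebra.lift_ι_apply, genOp, Module.End.mul_apply]
                using Kop_Fop i x b⟩

lemma rep_eg (i : Fin d) : rep (eg d i) = Eop i := by
  exact (RingQuot.liftAlgHom_mkAlgHom_apply ℂ (FreeAlgebra.lift ℂ genOp) _
    (FreeAlgebra.ι ℂ (SFGen.e i))).trans (FreeAlgebra.lift_ι_apply _ _)

lemma rep_fg (i : Fin d) : rep (fg d i) = Fop i := by
  exact (RingQuot.liftAlgHom_mkAlgHom_apply ℂ (FreeAlgebra.lift ℂ genOp) _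
    (FreeAlgebra.ι ℂ (SFGen.f i))).trans (FreeAlgebra.lift_ι_apply _ _)

lemma rep_Kg : rep (Kg d) = (Kop : V d →ₗ[ℂ] V d) := by
  exact (RingQuot.liftAlgHom_mkAlgHom_apply ℂ (FreeAlgebra.lift ℂ genOp) _
    (FreeAlgebra.ι ℂ SFGen.K)).trans (FreeAlgebra.lift_ι_apply _ _)

/-! ### Action on basis vectors -/

lemma update_false_eq {c : Fin d → Bool} {i : Fin d} (h : c i = false) :
    Function.update c i false = c := by
  funext j
  rcases eq_or_ne j i with rfl | hj
  · rw [Function.update_self, h]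
  · rw [Function.update_of_ne hj]

lemma Eop_single (i : Fin d) (b : Idx d) (hb : b.1 i = false) :
    Eop i (Pi.single b 1) = (sgn b.1 (Iio i) * sgn b.2.1 (Iio i)) •
      (Pi.single (Function.update b.1 i true, b.2.1, b.2.2) 1 : V d) := by
  obtain ⟨m, n, ℓ⟩ := b
  funext c
  obtain ⟨mc, nc, ℓc⟩ := c
  rw [Eop_apply]
  by_cases hc : ((mc, nc, ℓc) : Idx d) = (Function.update m i true, n, ℓ)
  · have h1 : mc = Function.update m i true := congrArg Prod.fst hc
    have h2 : nc = n := congrArg (fun p => p.2.1) hc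
    have h3 : ℓc = ℓ := congrArg (fun p => p.2.2) hc
    subst h1; subst h2; subst h3
    have harg : Function.update (Function.update m i true) i false = m := by
      rw [Function.update_idem, update_false_eq hb]
    simp only [Function.update_self, if_true, harg, Pi.smul_apply, Pi.single_eq_same,
      smul_eq_mul, mul_one]
    rw [sgn_update_not_mem (by simp) true]
  · have hrhs : (Pi.single (Function.update m i true, n, ℓ) 1 : V d) (mc, nc, ℓc) = 0 :=
      Pi.single_eq_of_ne hc _
    rw [Pi.smul_apply, hrhs, smul_zero]
    by_cases hmc : mc i = true
    · have hne : ((Function.update mc i false, nc, ℓc) : Idx d) ≠ (m, n, ℓ) := by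
        intro he
        apply hc
        have e1 : Function.update mc i false = m := congrArg Prod.fst he
        have e2 : nc = n := congrArg (fun p => p.2.1) he
        have e3 : ℓc = ℓ := congrArg (fun p => p.2.2) he
        have : mc = Function.update m i true := by
          rw [← e1, Function.update_idem, ← hmc, Function.update_eq_self]
        rw [this, e2, e3]
      rw [if_pos hmc, Pi.single_eq_of_ne hne, mul_zero]
    · rw [if_neg hmc]

lemma Fop_single (i : Fin d) (b : Idx d) (hb : b.2.1 i = false) :
    Fop i (Pi.single b 1) = ((if b.1 i then (-1 : ℂ) else 1) *
        (sgn b.1 (Iio i) * sgn b.2.1 (Iio i))) •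
      (Pi.single (b.1, Function.update b.2.1 i true, b.2.2) 1 : V d) := by
  obtain ⟨m, n, ℓ⟩ := b
  funext c
  obtain ⟨mc, nc, ℓc⟩ := c
  rw [Fop_apply]
  by_cases hc : ((mc, nc, ℓc) : Idx d) = (m, Function.update n i true, ℓ)
  · have h1 : mc = m := congrArg Prod.fst hc
    have h2 : nc = Function.update n i true := congrArg (fun p => p.2.1) hc
    have h3 : ℓc = ℓ := congrArg (fun p => p.2.2) hc
    subst h1; subst h2; subst h3
    have harg : Function.update (Function.update n i true) i false = n := by
      rw [Function.update_idem, update_false_eq hb]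
    simp only [Function.update_self, if_true, harg, Pi.smul_apply, Pi.single_eq_same,
      smul_eq_mul, mul_one]
    rw [sgn_update_not_mem (by simp) true]
  · have hrhs : (Pi.single (m, Function.update n i true, ℓ) 1 : V d) (mc, nc, ℓc) = 0 :=
      Pi.single_eq_of_ne hc _
    rw [Pi.smul_apply, hrhs, smul_zero]
    by_cases hnc : nc i = true
    · have hne : ((mc, Function.update nc i false, ℓc) : Idx d) ≠ (m, n, ℓ) := by
        intro he
        apply hc
        have e1 : mc = m := congrArg Prod.fst he
        have e2 : Function.update nc i false = n := congrArg (fun p => p.2.1) he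
        have e3 : ℓc = ℓ := congrArg (fun p => p.2.2) he
        have : nc = Function.update n i true := by
          rw [← e2, Function.update_idem, ← hnc, Function.update_eq_self]
        rw [this, e1, e3]
      rw [if_pos hnc, Pi.single_eq_of_ne hne, mul_zero]
    · rw [if_neg hnc]

lemma Kop_single (b : Idx d) :
    Kop (Pi.single b 1) = (sgn b.1 univ * sgn b.2.1 univ) •
      (Pi.single (b.1, b.2.1, !b.2.2) 1 : V d) := by
  obtain ⟨m, n, ℓ⟩ := b
  funext c
  obtain ⟨mc, nc, ℓc⟩ := c
  rw [Kop_apply]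
  by_cases hc : ((mc, nc, ℓc) : Idx d) = (m, n, !ℓ)
  · have h1 : mc = m := congrArg Prod.fst hc
    have h2 : nc = n := congrArg (fun p => p.2.1) hc
    have h3 : ℓc = !ℓ := congrArg (fun p => p.2.2) hc
    subst h1; subst h2; subst h3
    simp only [Pi.smul_apply, Pi.single_eq_same, smul_eq_mul, mul_one]
    rw [show ((mc, nc, !!ℓ) : Idx d) = (mc, nc, ℓ) from by rw [Bool.not_not],
      Pi.single_eq_same, mul_one]
  · have hrhs : (Pi.single (m, n, !ℓ) 1 : V d) (mc, nc, ℓc) = 0 :=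
      Pi.single_eq_of_ne hc _
    have hne : ((mc, nc, !ℓc) : Idx d) ≠ (m, n, ℓ) := by
      intro he
      apply hc
      have e1 : mc = m := congrArg Prod.fst he
      have e2 : nc = n := congrArg (fun p => p.2.1) he
      have e3 : (!ℓc) = ℓ := congrArg (fun p => p.2.2) he
      rw [e1, e2, ← e3, Bool.not_not]
    rw [Pi.smul_apply, hrhs, smul_zero, Pi.single_eq_of_ne hne, mul_zero]

/-! ### The vacuum computation -/

/-- The vacuum vector. -/
noncomputable def vac : V d := Pi.single ((fun _ => false), (fun _ => false), false) 1

lemma SFmono_bot (ℓ : Bool) : SFmono d (fun _ => false) (fun _ => false) ℓ = kt d ℓ := by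
  rw [SFmono_eq]
  have : ((List.finRange d).map (blk (fun _ => false) (fun _ => false))).prod = 1 := by
    apply List.prod_eq_one
    intro x hx
    obtain ⟨j, _, rfl⟩ := List.mem_map.mp hx
    simp [blk]
  rw [this, one_mul]
  rfl

lemma rep_kt_vac (ℓ : Bool) :
    rep (kt d ℓ) vac
      = Pi.single (((fun _ => false) : Fin d → Bool), ((fun _ => false) : Fin d → Bool), ℓ) 1 := by
  rcases ℓ
  · simp only [kt, Bool.false_eq_true, if_false, map_one, Module.End.one_apply]
    rfl
  · simp only [kt, if_true]
    rw [rep_Kg, vac, Kop_single]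
    have h1 : sgn (fun _ => false : Fin d → Bool) univ = 1 := sgn_eq_one _ _ (fun _ _ => rfl)
    rw [h1, one_mul, one_smul]
    rfl

/-- truncation of a configuration below `k`. -/
def trunc (k : ℕ) (c : Fin d → Bool) : Fin d → Bool := fun j => if k ≤ (j : ℕ) then c j else false

lemma trunc_zero (c : Fin d → Bool) : trunc 0 c = c := by
  funext j; simp [trunc]

lemma trunc_top (c : Fin d → Bool) : trunc d c = fun _ => false := by
  funext j; simp [trunc, Nat.not_le.mpr j.isLt]

lemma trunc_lt (k : ℕ) (c : Fin d → Bool) {j : Fin d} (hj : (j : ℕ) < k) :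
    trunc k c j = false := by simp [trunc, Nat.not_le.mpr hj]

lemma trunc_succ (k : ℕ) (hk : k < d) (c : Fin d → Bool) :
    trunc k c = Function.update (trunc (k + 1) c) ⟨k, hk⟩ (c ⟨k, hk⟩) := by
  funext j
  rcases eq_or_ne j ⟨k, hk⟩ with rfl | hj
  · simp [trunc, Function.update_self]
  · rw [Function.update_of_ne hj]
    have hne : (j : ℕ) ≠ k := fun h => hj (Fin.ext h)
    by_cases h : k + 1 ≤ (j : ℕ)
    · simp [trunc, h, show k ≤ (j : ℕ) by omega]
    · simp [trunc, h, show ¬ k ≤ (j : ℕ) by omega]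

lemma rep_mono_trunc (m n : Fin d → Bool) (ℓ : Bool) :
    ∀ (t k : ℕ), k + t = d →
      rep (SFmono d (trunc k m) (trunc k n) ℓ) vac = Pi.single (trunc k m, trunc k n, ℓ) 1
  | 0, k, hk => by
    have hkd : k = d := by omega
    subst hkd
    rw [trunc_top, trunc_top, SFmono_bot, rep_kt_vac]
  | t + 1, k, hk => by
    have hkd : k < d := by omega
    have ih := rep_mono_trunc m n ℓ t (k + 1) (by omega)
    set i : Fin d := ⟨k, hkd⟩ with hi
    have hik : (i : ℕ) = k := by rw [hi]
    have hm' : trunc (k + 1) m i = false := trunc_lt (k + 1) m (by simp [hi])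
    have hn' : trunc (k + 1) n i = false := trunc_lt (k + 1) n (by simp [hi])
    have hlowm : sgn (trunc (k + 1) m) (Iio i) = 1 :=
      sgn_eq_one _ _ (fun j hj => trunc_lt (k + 1) m (by
        have h1 := mem_Iio.mp hj
        rw [Fin.lt_def, hik] at h1
        omega))
    have hlown : sgn (trunc (k + 1) n) (Iio i) = 1 :=
      sgn_eq_one _ _ (fun j hj => trunc_lt (k + 1) n (by
        have h1 := mem_Iio.mp hj
        rw [Fin.lt_def, hik] at h1
        omega))
    have hlown' : sgn (Function.update (trunc (k + 1) n) i true) (Iio i) = 1 := by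
      rw [sgn_update_not_mem (by simp) true]; exact hlown
    rw [trunc_succ k hkd m, trunc_succ k hkd n, ← hi]
    rcases hm : m i <;> rcases hn : n i
    · rw [update_false_eq hm', update_false_eq hn']
      exact ih
    · -- m i = false, n i = true
      rw [update_false_eq hm']
      have hmul : SFmono d (trunc (k + 1) m) (Function.update (trunc (k + 1) n) i true) ℓ
          = fg d i * SFmono d (trunc (k + 1) m) (trunc (k + 1) n) ℓ := by
        rw [left_mul_fg, hn', hm', hlowm, hlown]
        norm_num
      rw [hmul, map_mul, Module.End.mul_apply, ih, rep_fg, Fop_single i _ hn']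
      dsimp only
      simp only [hm', hlowm, hlown]
      norm_num
    · -- m i = true, n i = false
      rw [update_false_eq hn']
      have hmul : SFmono d (Function.update (trunc (k + 1) m) i true) (trunc (k + 1) n) ℓ
          = eg d i * SFmono d (trunc (k + 1) m) (trunc (k + 1) n) ℓ := by
        rw [left_mul_eg, hm', hlowm, hlown]
        norm_num
      rw [hmul, map_mul, Module.End.mul_apply, ih, rep_eg, Eop_single i _ hm']
      dsimp only
      rw [hlowm, hlown]
      norm_num
    · -- both true
      have h1 : SFmono d (trunc (k + 1) m) (Function.update (trunc (k + 1) n) i true) ℓ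
          = fg d i * SFmono d (trunc (k + 1) m) (trunc (k + 1) n) ℓ := by
        rw [left_mul_fg, hn', hm', hlowm, hlown]
        norm_num
      have h2 : SFmono d (Function.update (trunc (k + 1) m) i true)
            (Function.update (trunc (k + 1) n) i true) ℓ
          = eg d i * SFmono d (trunc (k + 1) m) (Function.update (trunc (k + 1) n) i true) ℓ := by
        rw [left_mul_eg, hm', hlowm, hlown']
        norm_num
      rw [h2, h1, map_mul, map_mul, Module.End.mul_apply, Module.End.mul_apply, ih, rep_eg, rep_fg,
        Fop_single i _ hn']
      dsimp only
      simp only [hm', hlowm, hlown]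
      norm_num
      rw [Eop_single i _ hm']
      dsimp only
      rw [hlowm, hlown']
      norm_num

lemma rep_mono_vac (b : Idx d) : rep (SFmono d b.1 b.2.1 b.2.2) vac = Pi.single b 1 := by
  obtain ⟨m, n, ℓ⟩ := b
  have := rep_mono_trunc m n ℓ d 0 (by omega)
  rwa [trunc_zero, trunc_zero] at this

/-! ### Module.Basis of `SF d` -/

/-- Evaluation of the representation at the vacuum. -/
noncomputable def evalVac : SF d →ₗ[ℂ] V d where
  toFun x := rep x vac
  map_add' x y := by rw [map_add]; rfl
  map_smul' a x := by rw [map_smul]; rfl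

lemma li_mono : LinearIndependent ℂ (fun b : Idx d => SFmono d b.1 b.2.1 b.2.2) := by
  apply LinearIndependent.of_comp (evalVac (d := d))
  have hcomp : (⇑(evalVac (d := d)) ∘ fun b : Idx d => SFmono d b.1 b.2.1 b.2.2)
      = fun b : Idx d => (Pi.single b 1 : V d) := by
    funext b
    exact rep_mono_vac b
  rw [hcomp]
  have h2 : (fun b : Idx d => (Pi.single b 1 : V d)) = ⇑(Pi.basisFun ℂ (Idx d)) := by
    funext b
    rw [Pi.basisFun_apply]
  rw [h2]
  exact (Pi.basisFun ℂ (Idx d)).linearIndependent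

/-- The quotient map, with values in `SF d`. -/
noncomputable def mkSF : FreeAlgebra ℂ (SFGen d) →ₐ[ℂ] SF d := RingQuot.mkAlgHom ℂ (SFRel d)

lemma mkSF_surjective : Function.Surjective (mkSF (d := d)) :=
  RingQuot.mkAlgHom_surjective ℂ (SFRel d)

lemma mkSF_e (i : Fin d) : mkSF (FreeAlgebra.ι ℂ (SFGen.e i)) = eg d i := rfl
lemma mkSF_f (i : Fin d) : mkSF (FreeAlgebra.ι ℂ (SFGen.f i)) = fg d i := rfl
lemma mkSF_K : mkSF (FreeAlgebra.ι ℂ (SFGen.K (d := d))) = Kg d := rfl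

lemma span_mono :
    ⊤ ≤ Submodule.span ℂ (Set.range (fun b : Idx d => SFmono d b.1 b.2.1 b.2.2)) := by
  set P := Submodule.span ℂ (Set.range (fun b : Idx d => SFmono d b.1 b.2.1 b.2.2)) with hP
  have hmem : ∀ b : Idx d, SFmono d b.1 b.2.1 b.2.2 ∈ P :=
    fun b => Submodule.subset_span ⟨b, rfl⟩
  have hgen : ∀ (g : SFGen d) (b : Idx d),
      mkSF (FreeAlgebra.ι ℂ g) * SFmono d b.1 b.2.1 b.2.2 ∈ P := by
    rintro g ⟨m, n, ℓ⟩
    cases g with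
    | e i =>
      rw [mkSF_e, left_mul_eg]
      exact Submodule.smul_mem _ _ (hmem (Function.update m i true, n, ℓ))
    | f i =>
      rw [mkSF_f, left_mul_fg]
      exact Submodule.smul_mem _ _ (hmem (m, Function.update n i true, ℓ))
    | K =>
      rw [mkSF_K, left_mul_Kg]
      exact Submodule.smul_mem _ _ (hmem (m, n, !ℓ))
  have hmul : ∀ a : FreeAlgebra ℂ (SFGen d), ∀ p ∈ P, mkSF a * p ∈ P := by
    intro a
    induction a using FreeAlgebra.induction with
    | grade0 r =>
      intro p hp
      rw [AlgHom.commutes, ← Algebra.smul_def]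
      exact Submodule.smul_mem _ _ hp
    | grade1 g =>
      intro p hp
      have hle : P.map (LinearMap.mulLeft ℂ (mkSF (FreeAlgebra.ι ℂ g))) ≤ P := by
        rw [hP, Submodule.map_span, Submodule.span_le]
        rintro _ ⟨_, ⟨b, rfl⟩, rfl⟩
        exact hgen g b
      exact hle ⟨p, hp, rfl⟩
    | mul a b iha ihb =>
      intro p hp
      rw [map_mul, mul_assoc]
      exact iha _ (ihb p hp)
    | add a b iha ihb =>
      intro p hp
      rw [map_add, add_mul]
      exact Submodule.add_mem _ (iha p hp) (ihb p hp)
  intro x _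
  obtain ⟨a, rfl⟩ := mkSF_surjective x
  have h1 : (1 : SF d) ∈ P := by
    have := hmem ((fun _ => false), (fun _ => false), false)
    rwa [show SFmono d (fun _ => false) (fun _ => false) false = 1 from SFmono_bot false] at this
  simpa using hmul a 1 h1

/-- The monomial basis of `SF d`. -/
noncomputable def bas : Module.Basis (Idx d) ℂ (SF d) := Module.Basis.mk li_mono span_mono

lemma bas_apply (b : Idx d) : bas b = SFmono d b.1 b.2.1 b.2.2 := Module.Basis.mk_apply _ _ b


/-! ### Uniform multiplication formulas -/

/-- toggle `m i`. -/
def ψe (i : Fin d) (b : Idx d) : Idx d := (Function.update b.1 i (!b.1 i), b.2.1, b.2.2)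

/-- toggle `n i`. -/
def ψf (i : Fin d) (b : Idx d) : Idx d := (b.1, Function.update b.2.1 i (!b.2.1 i), b.2.2)

/-- toggle `ℓ`. -/
def ψK (b : Idx d) : Idx d := (b.1, b.2.1, !b.2.2)

lemma update_not_invol (c : Fin d → Bool) (i : Fin d) :
    Function.update (Function.update c i (!c i)) i (!(Function.update c i (!c i)) i) = c := by
  rw [Function.update_self, Bool.not_not, Function.update_idem, Function.update_eq_self]

lemma ψe_invol (i : Fin d) : Function.Involutive (ψe (d := d) i) := by
  intro b
  show (Function.update (Function.update b.1 i (!b.1 i)) i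
      (!(Function.update b.1 i (!b.1 i)) i), b.2.1, b.2.2) = b
  rw [update_not_invol]

lemma ψf_invol (i : Fin d) : Function.Involutive (ψf (d := d) i) := by
  intro b
  show (b.1, Function.update (Function.update b.2.1 i (!b.2.1 i)) i
      (!(Function.update b.2.1 i (!b.2.1 i)) i), b.2.2) = b
  rw [update_not_invol]

lemma ψK_invol : Function.Involutive (ψK (d := d)) := by
  intro b
  show (b.1, b.2.1, !!b.2.2) = b
  rw [Bool.not_not]

noncomputable def τLe (i : Fin d) (b : Idx d) : ℂ :=
  if b.1 i then 0 else sgn b.1 (Iio i) * sgn b.2.1 (Iio i)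

noncomputable def τRe (i : Fin d) (b : Idx d) : ℂ :=
  if b.1 i then 0 else (if b.2.2 then (-1 : ℂ) else 1) * (if b.2.1 i then (-1 : ℂ) else 1) *
    (sgn b.1 (Ioi i) * sgn b.2.1 (Ioi i))

noncomputable def τLf (i : Fin d) (b : Idx d) : ℂ :=
  if b.2.1 i then 0 else (if b.1 i then (-1 : ℂ) else 1) * (sgn b.1 (Iio i) * sgn b.2.1 (Iio i))

noncomputable def τRf (i : Fin d) (b : Idx d) : ℂ :=
  if b.2.1 i then 0 else (if b.2.2 then (-1 : ℂ) else 1) * (sgn b.1 (Ioi i) * sgn b.2.1 (Ioi i))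

noncomputable def τLK (b : Idx d) : ℂ := sgn b.1 univ * sgn b.2.1 univ

lemma hLe (i : Fin d) (b : Idx d) :
    eg d i * SFmono d b.1 b.2.1 b.2.2
      = τLe i b • SFmono d (ψe i b).1 (ψe i b).2.1 (ψe i b).2.2 := by
  obtain ⟨m, n, ℓ⟩ := b
  by_cases h : m i = true
  · rw [left_mul_eg i m n ℓ]
    simp [τLe, ψe, h]
  · have h' : m i = false := by simpa using h
    rw [left_mul_eg i m n ℓ]
    simp [τLe, ψe, h']

lemma hRe (i : Fin d) (b : Idx d) :
    SFmono d b.1 b.2.1 b.2.2 * eg d i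
      = τRe i b • SFmono d (ψe i b).1 (ψe i b).2.1 (ψe i b).2.2 := by
  obtain ⟨m, n, ℓ⟩ := b
  by_cases h : m i = true
  · rw [right_mul_eg i m n ℓ]
    simp [τRe, ψe, h]
  · have h' : m i = false := by simpa using h
    rw [right_mul_eg i m n ℓ]
    simp [τRe, ψe, h']

lemma hLf (i : Fin d) (b : Idx d) :
    fg d i * SFmono d b.1 b.2.1 b.2.2
      = τLf i b • SFmono d (ψf i b).1 (ψf i b).2.1 (ψf i b).2.2 := by
  obtain ⟨m, n, ℓ⟩ := b
  by_cases h : n i = true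
  · rw [left_mul_fg i m n ℓ]
    simp [τLf, ψf, h]
  · have h' : n i = false := by simpa using h
    rw [left_mul_fg i m n ℓ]
    simp [τLf, ψf, h']

lemma hRf (i : Fin d) (b : Idx d) :
    SFmono d b.1 b.2.1 b.2.2 * fg d i
      = τRf i b • SFmono d (ψf i b).1 (ψf i b).2.1 (ψf i b).2.2 := by
  obtain ⟨m, n, ℓ⟩ := b
  by_cases h : n i = true
  · rw [right_mul_fg i m n ℓ]
    simp [τRf, ψf, h]
  · have h' : n i = false := by simpa using h
    rw [right_mul_fg i m n ℓ]
    simp [τRf, ψf, h']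

lemma hLK (b : Idx d) :
    Kg d * SFmono d b.1 b.2.1 b.2.2
      = τLK b • SFmono d (ψK b).1 (ψK b).2.1 (ψK b).2.2 := by
  obtain ⟨m, n, ℓ⟩ := b
  rw [left_mul_Kg m n ℓ]
  rfl

lemma hRK (b : Idx d) :
    SFmono d b.1 b.2.1 b.2.2 * Kg d
      = (1 : ℂ) • SFmono d (ψK b).1 (ψK b).2.1 (ψK b).2.2 := by
  obtain ⟨m, n, ℓ⟩ := b
  rw [right_mul_Kg m n ℓ, one_smul]
  rfl

/-! ### Coefficient conditions from centrality -/

lemma coeff_eq (x g : SF d) (hx : g * x = x * g) (ψ : Idx d → Idx d)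
    (hψ : Function.Involutive ψ) (τL τR : Idx d → ℂ)
    (hL : ∀ b, g * SFmono d b.1 b.2.1 b.2.2 = τL b • SFmono d (ψ b).1 (ψ b).2.1 (ψ b).2.2)
    (hR : ∀ b, SFmono d b.1 b.2.1 b.2.2 * g = τR b • SFmono d (ψ b).1 (ψ b).2.1 (ψ b).2.2)
    (b : Idx d) : bas.repr x b * τL b = bas.repr x b * τR b := by
  have hgx : g * x = ∑ c : Idx d, (bas.repr x (ψ c) * τL (ψ c)) • bas c := by
    conv_lhs => rw [← Module.Basis.sum_repr bas x, Finset.mul_sum]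
    refine Fintype.sum_bijective ψ hψ.bijective _ _ fun c => ?_
    rw [hψ c, mul_smul_comm, bas_apply, hL c, smul_smul, ← bas_apply]
  have hxg : x * g = ∑ c : Idx d, (bas.repr x (ψ c) * τR (ψ c)) • bas c := by
    conv_lhs => rw [← Module.Basis.sum_repr bas x, Finset.sum_mul]
    refine Fintype.sum_bijective ψ hψ.bijective _ _ fun c => ?_
    rw [hψ c, smul_mul_assoc, bas_apply, hR c, smul_smul, ← bas_apply]
  have h1 : ⇑(bas.repr (g * x)) = fun c => bas.repr x (ψ c) * τL (ψ c) := by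
    rw [hgx]; exact Module.Basis.repr_sum_self _ _
  have h2 : ⇑(bas.repr (x * g)) = fun c => bas.repr x (ψ c) * τR (ψ c) := by
    rw [hxg]; exact Module.Basis.repr_sum_self _ _
  have hh : (fun c => bas.repr x (ψ c) * τL (ψ c)) = fun c => bas.repr x (ψ c) * τR (ψ c) := by
    rw [← h1, ← h2, hx]
  have := congrFun hh (ψ b)
  rwa [hψ b] at this

/-! ### Sign identities -/

lemma sgn_Iio_mul_Ioi (c : Fin d → Bool) (i : Fin d) :
    sgn c (Iio i) * sgn c (Ioi i) = (if c i then (-1 : ℂ) else 1) * sgn c univ := by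
  have hdisj : Disjoint (Iio i) (Ioi i) := by
    rw [Finset.disjoint_left]
    intro j h1 h2
    exact lt_asymm (mem_Iio.mp h1) (mem_Ioi.mp h2)
  have hun : Iio i ∪ Ioi i = univ \ {i} := by
    ext j
    simp only [Finset.mem_union, mem_Iio, mem_Ioi, Finset.mem_sdiff, mem_univ, true_and,
      Finset.mem_singleton]
    constructor
    · rintro (h | h)
      · exact ne_of_lt h
      · exact ne_of_gt h
    · intro h
      exact lt_or_gt_of_ne h
  have h2 : sgn c (Iio i) * sgn c (Ioi i) = sgn c (univ \ {i}) := by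
    rw [sgn, sgn, sgn, ← Finset.prod_union hdisj, hun]
  have h3 : sgn c univ
      = (if c i then (-1 : ℂ) else 1) * ∏ j ∈ univ \ {i}, (if c j then (-1 : ℂ) else 1) :=
    Finset.prod_eq_mul_prod_sdiff_singleton_of_mem (mem_univ i) _
  rw [h2, sgn, h3]
  rcases hci : c i <;> simp <;> ring

lemma sgn_univ_pow (c : Fin d → Bool) :
    sgn c univ = (-1 : ℂ) ^ (univ.filter (fun j => c j = true)).card := by
  rw [sgn, Finset.prod_ite, Finset.prod_const, Finset.prod_const, one_pow, mul_one]

lemma sgn_mul_sgn_univ (m n : Fin d → Bool) :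
    sgn m univ * sgn n univ = (-1 : ℂ) ^ monoLen d m n := by
  rw [sgn_univ_pow, sgn_univ_pow, monoLen, pow_add]

private lemma solve_sq {a b c : ℂ} (ha : a * a = 1) (h : a * b = c) : b = a * c := by
  rw [← h, ← mul_assoc, ha, one_mul]

lemma sgn_Ioi_eq (c : Fin d → Bool) (i : Fin d) :
    sgn c (Ioi i) = sgn c (Iio i) * ((if c i then (-1 : ℂ) else 1) * sgn c univ) :=
  solve_sq (sgn_mul_self c (Iio i)) (sgn_Iio_mul_Ioi c i)

/-! ### Centrality of the claimed basis vectors -/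

lemma adjoin_gen_top :
    Algebra.adjoin ℂ (Set.range fun g : SFGen d => mkSF (FreeAlgebra.ι ℂ g)) = ⊤ := by
  have h0 : (Set.range fun g : SFGen d => mkSF (FreeAlgebra.ι ℂ g))
      = mkSF '' (Set.range (FreeAlgebra.ι ℂ)) := by
    rw [← Set.range_comp]
    rfl
  rw [h0, ← AlgHom.map_adjoin, FreeAlgebra.adjoin_range_ι, Algebra.map_top,
    AlgHom.range_eq_top]
  exact mkSF_surjective

lemma center_of_comm {z : SF d}
    (h : ∀ g : SFGen d, mkSF (FreeAlgebra.ι ℂ g) * z = z * mkSF (FreeAlgebra.ι ℂ g)) :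
    z ∈ Subalgebra.center ℂ (SF d) := by
  rw [Subalgebra.mem_center_iff]
  intro y
  have hy : y ∈ Algebra.adjoin ℂ (Set.range fun g : SFGen d => mkSF (FreeAlgebra.ι ℂ g)) := by
    rw [adjoin_gen_top]; trivial
  induction hy using Algebra.adjoin_induction with
  | mem w hw =>
    obtain ⟨g, rfl⟩ := hw
    exact h g
  | algebraMap r => exact Algebra.commutes r z
  | add u v hu hv ihu ihv => rw [add_mul, mul_add, ihu, ihv]
  | mul u v hu hv ihu ihv => rw [mul_assoc, ihv, ← mul_assoc, ihu, mul_assoc]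

lemma mono_mem_center (b : Idx d)
    (hb : (b.2.2 = false ∧ Even (monoLen d b.1 b.2.1)) ∨
      b = (fun _ => true, fun _ => true, true)) :
    SFmono d b.1 b.2.1 b.2.2 ∈ Subalgebra.center ℂ (SF d) := by
  apply center_of_comm
  intro g
  obtain ⟨m, n, ℓ⟩ := b
  rcases hb with ⟨hl, heven⟩ | hsp
  · -- even-length, ℓ = false
    have hl' : ℓ = false := hl
    subst hl'
    have key : sgn m univ * sgn n univ = 1 := by
      rw [sgn_mul_sgn_univ]
      exact Even.neg_one_pow heven
    cases g with
    | e i =>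
      rw [mkSF_e, hLe i (m, n, false), hRe i (m, n, false)]
      congr 1
      by_cases hm : m i = true
      · simp [τLe, τRe, hm]
      · have hm' : m i = false := by simpa using hm
        rw [τLe, τRe]
        dsimp only
        rw [sgn_Ioi_eq m i, sgn_Ioi_eq n i]; simp only [hm']
        by_cases hn : n i = true <;> simp [hn] <;> linear_combination (-(sgn m (Iio i) * sgn n (Iio i))) * key
    | f i =>
      rw [mkSF_f, hLf i (m, n, false), hRf i (m, n, false)]
      congr 1
      by_cases hn : n i = true
      · simp [τLf, τRf, hn]
      · have hn' : n i = false := by simpa using hn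
        rw [τLf, τRf]
        dsimp only
        rw [sgn_Ioi_eq m i, sgn_Ioi_eq n i]; simp only [hn']
        by_cases hm : m i = true <;> simp [hm] <;> linear_combination (-(sgn m (Iio i) * sgn n (Iio i))) * key
    | K =>
      rw [mkSF_K, hLK (m, n, false), hRK (m, n, false)]
      have hτ : τLK ((m, n, false) : Idx d) = 1 := by simpa only [τLK] using key
      rw [hτ]
  · -- the special monomial
    have hm : m = fun _ => true := congrArg Prod.fst hsp
    have hn : n = fun _ => true := congrArg (fun p => p.2.1) hsp
    have hl : ℓ = true := congrArg (fun p => p.2.2) hsp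
    subst hm; subst hn; subst hl
    have heven : Even (monoLen d (fun _ => true) (fun _ => true)) := by
      rw [monoLen]
      exact ⟨(univ.filter (fun i : Fin d => true = true)).card, rfl⟩
    have key : sgn (fun _ => true : Fin d → Bool) univ * sgn (fun _ => true : Fin d → Bool) univ
        = 1 := by
      rw [sgn_mul_sgn_univ]
      exact Even.neg_one_pow heven
    cases g with
    | e i =>
      rw [mkSF_e, hLe i _, hRe i _]
      simp [τLe, τRe]
    | f i =>
      rw [mkSF_f, hLf i _, hRf i _]
      simp [τLf, τRf]
    | K =>
      rw [mkSF_K, hLK _, hRK _]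
      have hτ : τLK ((fun _ => true, fun _ => true, true) : Idx d) = 1 := by
        simpa only [τLK] using key
      rw [hτ]

/-! ### Support of central elements -/

/-- the condition defining `CenterIdx`. -/
def allowedP (b : Idx d) : Prop :=
  (b.2.2 = false ∧ Even (monoLen d b.1 b.2.1)) ∨ b = (fun _ => true, fun _ => true, true)

lemma center_support {x : SF d} (hx : x ∈ Subalgebra.center ℂ (SF d)) (b : Idx d)
    (hb : bas.repr x b ≠ 0) : allowedP b := by
  have hxc : ∀ g : SF d, g * x = x * g := fun g => Subalgebra.mem_center_iff.mp hx g
  obtain ⟨m, n, ℓ⟩ := b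
  have hK := coeff_eq x (Kg d) (hxc _) ψK ψK_invol τLK (fun _ => 1) hLK hRK (m, n, ℓ)
  have heven : Even (monoLen d m n) := by
    by_contra hodd
    have hτ : τLK ((m, n, ℓ) : Idx d) = -1 := by
      simp only [τLK]
      try dsimp only
      rw [sgn_mul_sgn_univ]
      exact Odd.neg_one_pow (Nat.not_even_iff_odd.mp hodd)
    rw [hτ, mul_one] at hK
    apply hb
    have h2 : bas.repr x (m, n, ℓ) + bas.repr x (m, n, ℓ) = 0 := by linear_combination -hK
    exact add_self_eq_zero.mp h2
  cases ℓ with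
  | false => exact Or.inl ⟨rfl, heven⟩
  | true =>
    right
    have key : sgn m univ * sgn n univ = 1 := by
      rw [sgn_mul_sgn_univ]
      exact Even.neg_one_pow heven
    have hm1 : ∀ i, m i = true := by
      intro i
      by_contra hmi
      have hm' : m i = false := by simpa using hmi
      have hE := coeff_eq x (eg d i) (hxc _) (ψe i) (ψe_invol i) (τLe i) (τRe i)
        (hLe i) (hRe i) (m, n, true)
      have hceq : τLe i (m, n, true) = τRe i (m, n, true) := mul_left_cancel₀ hb hE
      have hsq : τLe i ((m, n, true) : Idx d) * τLe i ((m, n, true) : Idx d) = 1 := by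
        simp only [τLe]
        try dsimp only
        rw [hm']
        simp only [Bool.false_eq_true, if_false]
        linear_combination (sgn n (Iio i) * sgn n (Iio i)) * sgn_mul_self m (Iio i)
          + sgn_mul_self n (Iio i)
      have hprod : τLe i ((m, n, true) : Idx d) * τRe i ((m, n, true) : Idx d) = -1 := by
        simp only [τLe, τRe]
        try dsimp only
        rw [sgn_Ioi_eq m i, sgn_Ioi_eq n i]; simp only [hm']
        by_cases hn : n i = true <;> simp [hn] <;>
          linear_combination (sgn n (Iio i) * sgn n (Iio i) * sgn m univ * sgn n univ) *
              sgn_mul_self m (Iio i)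
            + (sgn m univ * sgn n univ) * sgn_mul_self n (Iio i) + key
      rw [← hceq, hsq] at hprod
      norm_num at hprod
    have hn1 : ∀ i, n i = true := by
      intro i
      by_contra hni
      have hn' : n i = false := by simpa using hni
      have hF := coeff_eq x (fg d i) (hxc _) (ψf i) (ψf_invol i) (τLf i) (τRf i)
        (hLf i) (hRf i) (m, n, true)
      have hceq : τLf i (m, n, true) = τRf i (m, n, true) := mul_left_cancel₀ hb hF
      have hsq : τLf i ((m, n, true) : Idx d) * τLf i ((m, n, true) : Idx d) = 1 := by
        simp only [τLf]
        try dsimp only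
        rw [hn']
        simp only [Bool.false_eq_true, if_false]
        by_cases hm : m i = true <;> simp [hm] <;>
          linear_combination (sgn n (Iio i) * sgn n (Iio i)) * sgn_mul_self m (Iio i)
            + sgn_mul_self n (Iio i)
      have hprod : τLf i ((m, n, true) : Idx d) * τRf i ((m, n, true) : Idx d) = -1 := by
        simp only [τLf, τRf]
        try dsimp only
        rw [sgn_Ioi_eq m i, sgn_Ioi_eq n i]; simp only [hn']
        by_cases hm : m i = true <;> simp [hm] <;>
          linear_combination (sgn n (Iio i) * sgn n (Iio i) * sgn m univ * sgn n univ) *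
              sgn_mul_self m (Iio i)
            + (sgn m univ * sgn n univ) * sgn_mul_self n (Iio i) + key
      rw [← hceq, hsq] at hprod
      norm_num at hprod
    have hmeq : m = fun _ => true := funext hm1
    have hneq : n = fun _ => true := funext hn1
    subst hmeq; subst hneq
    rfl

/-! ### Module.Basis of the center -/

/-- the claimed basis of the center. -/
noncomputable def cmono (p : CenterIdx d) : ↥(Subalgebra.center ℂ (SF d)) :=
  ⟨SFmono d p.1.1 p.1.2.1 p.1.2.2, mono_mem_center p.1 p.2⟩

set_option maxHeartbeats 1000000 in
lemma li_cmono : LinearIndependent ℂ (cmono (d := d)) := by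
  have h1 : LinearIndependent ℂ (fun p : CenterIdx d => SFmono d p.1.1 p.1.2.1 p.1.2.2) := by
    have h0 : LinearIndependent ℂ (fun b : Idx d => SFmono d b.1 b.2.1 b.2.2) := by
      have := (bas (d := d)).linearIndependent
      rwa [show ⇑(bas (d := d)) = fun b : Idx d => SFmono d b.1 b.2.1 b.2.2 from
        funext bas_apply] at this
    exact h0.comp (fun p : CenterIdx d => p.1) Subtype.val_injective
  exact LinearIndependent.of_comp ((Subalgebra.center ℂ (SF d)).val.toLinearMap) h1

set_option maxHeartbeats 1000000 in
lemma span_cmono : ⊤ ≤ Submodule.span ℂ (Set.range (cmono (d := d))) := by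
  rintro ⟨x, hx⟩ -
  classical
  have hw : ∀ b : Idx d, ∃ z : ↥(Subalgebra.center ℂ (SF d)),
      z ∈ Submodule.span ℂ (Set.range (cmono (d := d))) ∧
        (z : SF d) = bas.repr x b • SFmono d b.1 b.2.1 b.2.2 := by
    intro b
    by_cases h : allowedP b
    · exact ⟨bas.repr x b • cmono ⟨b, h⟩,
        Submodule.smul_mem _ _ (Submodule.subset_span ⟨⟨b, h⟩, rfl⟩), rfl⟩
    · refine ⟨0, Submodule.zero_mem _, ?_⟩
      have hc : bas.repr x b = 0 := by
        by_contra hc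
        exact h (center_support hx b hc)
      rw [hc, zero_smul]
      rfl
  choose z hz1 hz2 using hw
  have hsum : (⟨x, hx⟩ : ↥(Subalgebra.center ℂ (SF d))) = ∑ b : Idx d, z b := by
    apply Subtype.ext
    rw [AddSubmonoidClass.coe_finset_sum]
    show x = _
    conv_lhs => rw [← Module.Basis.sum_repr bas x]
    exact Finset.sum_congr rfl fun b _ => by rw [hz2 b, bas_apply]
  rw [hsum]
  exact Submodule.sum_mem _ fun b _ => hz1 b

instance : Finite (CenterIdx d) := by
  unfold CenterIdx
  infer_instance

noncomputable instance : Fintype (CenterIdx d) :=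
  Fintype.ofFinite _

/-- The basis of the center. -/
noncomputable def centerBasis : Module.Basis (CenterIdx d) ℂ ↥(Subalgebra.center ℂ (SF d)) :=
  Module.Basis.mk li_cmono span_cmono


lemma centerBasis_apply (p : CenterIdx d) :
    (centerBasis p : SF d) = SFmono d p.1.1 p.1.2.1 p.1.2.2 := by
  rw [centerBasis, Module.Basis.mk_apply]
  rfl

/-! ### Counting -/

lemma monoLen_flip (m n : Fin d → Bool) (i : Fin d) :
    Even (monoLen d (Function.update m i (!m i)) n) ↔ ¬ Even (monoLen d m n) := by
  classical
  rcases hm : m i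
  · simp only [hm, Bool.not_false]
    have h1 : univ.filter (fun j => Function.update m i true j = true)
        = insert i (univ.filter (fun j => m j = true)) := by
      ext j
      simp only [Finset.mem_filter, mem_univ, true_and, Finset.mem_insert]
      rcases eq_or_ne j i with rfl | hj
      · simp [Function.update_self, hm]
      · simp [Function.update_of_ne hj, hj]
    have h2 : i ∉ univ.filter (fun j => m j = true) := by simp [hm]
    rw [monoLen, monoLen, h1, Finset.card_insert_of_notMem h2]
    rw [Nat.even_iff, Nat.even_iff]
    omega
  · simp only [hm, Bool.not_true]
    have h1 : univ.filter (fun j => Function.update m i false j = true)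
        = (univ.filter (fun j => m j = true)).erase i := by
      ext j
      simp only [Finset.mem_filter, mem_univ, true_and, Finset.mem_erase]
      rcases eq_or_ne j i with rfl | hj
      · simp [Function.update_self, hm]
      · simp [Function.update_of_ne hj, hj]
    have h2 : i ∈ univ.filter (fun j => m j = true) := by simp [hm]
    have h3 : 1 ≤ (univ.filter (fun j => m j = true)).card := Finset.card_pos.mpr ⟨i, h2⟩
    rw [monoLen, monoLen, h1, Finset.card_erase_of_mem h2]
    rw [Nat.even_iff, Nat.even_iff]
    omega

lemma card_even_mn :
    Fintype.card {q : (Fin d → Bool) × (Fin d → Bool) // Even (monoLen d q.1 q.2)}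
      = 2 ^ (2 * d - 1) := by
  classical
  rcases Nat.eq_zero_or_pos d with rfl | hd
  · have hall : ∀ q : (Fin 0 → Bool) × (Fin 0 → Bool), Even (monoLen 0 q.1 q.2) := by
      intro q
      have h0 : monoLen 0 q.1 q.2 = 0 := by
        rw [monoLen]
        simp
      rw [h0]
      exact Even.zero
    rw [Fintype.card_congr (Equiv.subtypeUnivEquiv hall)]
    rw [Fintype.card_prod, Fintype.card_fun, Fintype.card_bool, Fintype.card_fin]
    norm_num
  · set i0 : Fin d := ⟨0, hd⟩
    have hEq : {q : (Fin d → Bool) × (Fin d → Bool) // Even (monoLen d q.1 q.2)}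
        ≃ {q : (Fin d → Bool) × (Fin d → Bool) // ¬ Even (monoLen d q.1 q.2)} :=
      { toFun := fun q => ⟨(Function.update q.1.1 i0 (!q.1.1 i0), q.1.2),
          fun h => (monoLen_flip q.1.1 q.1.2 i0).mp h q.2⟩
        invFun := fun q => ⟨(Function.update q.1.1 i0 (!q.1.1 i0), q.1.2),
          (monoLen_flip q.1.1 q.1.2 i0).mpr q.2⟩
        left_inv := fun q => Subtype.ext (by
          show (Function.update (Function.update q.1.1 i0 (!q.1.1 i0)) i0
            (!(Function.update q.1.1 i0 (!q.1.1 i0)) i0), q.1.2) = q.1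
          rw [update_not_invol])
        right_inv := fun q => Subtype.ext (by
          show (Function.update (Function.update q.1.1 i0 (!q.1.1 i0)) i0
            (!(Function.update q.1.1 i0 (!q.1.1 i0)) i0), q.1.2) = q.1
          rw [update_not_invol]) }
    have hcard := Fintype.card_congr hEq
    have htot := Fintype.card_subtype_compl
      (fun q : (Fin d → Bool) × (Fin d → Bool) => Even (monoLen d q.1 q.2))
    have hprod : Fintype.card ((Fin d → Bool) × (Fin d → Bool)) = 2 ^ (2 * d) := by
      rw [Fintype.card_prod, Fintype.card_fun, Fintype.card_bool, Fintype.card_fin, ← pow_add]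
      congr 1
      omega
    have h2 : 2 ^ (2 * d) = 2 * 2 ^ (2 * d - 1) := by
      rw [← pow_succ']
      congr 1
      omega
    have hX : 0 < 2 ^ (2 * d - 1) := Nat.pow_pos (by norm_num)
    omega

/-- splitting `CenterIdx`. -/
noncomputable def centerIdxEquiv :
    CenterIdx d ≃ {q : (Fin d → Bool) × (Fin d → Bool) // Even (monoLen d q.1 q.2)} ⊕ Unit where
  toFun p :=
    if h : p.1.2.2 = true then Sum.inr ()
    else Sum.inl ⟨(p.1.1, p.1.2.1), by
      rcases p.2 with ⟨_, he⟩ | hsp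
      · exact he
      · exact absurd (congrArg (fun q => q.2.2) hsp) h⟩
  invFun q :=
    match q with
    | Sum.inl q => ⟨(q.1.1, q.1.2, false), Or.inl ⟨rfl, q.2⟩⟩
    | Sum.inr _ => ⟨(fun _ => true, fun _ => true, true), Or.inr rfl⟩
  left_inv p := by
    by_cases h : p.1.2.2 = true
    · simp only [h, dif_pos]
      have hsp : p.1 = (fun _ => true, fun _ => true, true) := by
        rcases p.2 with ⟨hf, _⟩ | hsp
        · rw [hf] at h; exact absurd h (by simp)
        · exact hsp
      exact Subtype.ext hsp.symm
    · simp only [h, dif_neg, not_false_iff]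
      apply Subtype.ext
      have hf : p.1.2.2 = false := by
        rcases hb : p.1.2.2
        · rfl
        · exact absurd hb h
      exact Prod.ext rfl (Prod.ext rfl hf.symm)
  right_inv q := by
    rcases q with q | u
    · rfl
    · rfl
end SFC

set_option maxHeartbeats 2000000 in
/-- The center `Z(P)` has as basis the even-length monomials in the `eᵢ, fᵢ`
together with `(∏ᵢ eᵢfᵢ)K`; in particular `dim Z(P) = 2^(2d−1) + 1`. -/
theorem sf_center_basis (d : ℕ) :
    ∃ b : Module.Basis (CenterIdx d) ℂ ↥(Subalgebra.center ℂ (SF d)),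
      (∀ p : CenterIdx d, (b p : SF d) = SFmono d p.1.1 p.1.2.1 p.1.2.2) ∧
      Module.finrank ℂ ↥(Subalgebra.center ℂ (SF d)) = 2 ^ (2 * d - 1) + 1 := by
  refine ⟨SFC.centerBasis, fun p => SFC.centerBasis_apply p, ?_⟩
  rw [Module.finrank_eq_card_basis SFC.centerBasis, Fintype.card_congr SFC.centerIdxEquiv,
    Fintype.card_sum, SFC.card_even_mn]
  norm_num
end
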